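/- arXiv:2405.05670 — 10 statements merged into one kernel-verified Lean document; each statement's English description precedes it below -/
import Mathlib

section
/- Strong normalisation for typed intuitionistic propositional proof terms: every reduction sequence M₁ → M₂ → ⋯ of well-typed terms of Λ^p (under β- and permutation reduction) is finite. -/
set_option autoImplicit true

namespace IPCStmt2

inductive Formula : Type
  | var : ℕ → Formula
  | bot : Formula
  | imp : Formula → Formula → Formula
  | conj : Formula → Formula → Formula
  | disj : Formula → Formula → Formula
  deriving DecidableEq

/-- Proof terms of IPC (Church style, de Bruijn indices).
`abort M φ` is the ⊥-eliminator `M[φ]`, `case M φ N₁ ψ N₂ ρ` is the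
∨-eliminator `M[x:φ.N₁; y:ψ.N₂]` annotated with its result type ρ. -/
inductive Tm : Type
  | var : ℕ → Tm
  | abort : Tm → Formula → Tm
  | lam : Formula → Tm → Tm
  | app : Tm → Tm → Tm
  | pair : Tm → Tm → Tm
  | fst : Tm → Tm
  | snd : Tm → Tm
  | inl : Tm → Tm
  | inr : Tm → Tm
  | case : Tm → Formula → Tm → Formula → Tm → Formula → Tm
  deriving DecidableEq

/-- Shift the de Bruijn indices `≥ d` up by one. -/
def lift (d : ℕ) : Tm → Tm
  | .var n => if n < d then .var n else .var (n + 1)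
  | .abort M φ => .abort (lift d M) φ
  | .lam φ M => .lam φ (lift (d + 1) M)
  | .app M N => .app (lift d M) (lift d N)
  | .pair M N => .pair (lift d M) (lift d N)
  | .fst M => .fst (lift d M)
  | .snd M => .snd (lift d M)
  | .inl M => .inl (lift d M)
  | .inr M => .inr (lift d M)
  | .case M φ N₁ ψ N₂ ρ => .case (lift d M) φ (lift (d + 1) N₁) ψ (lift (d + 1) N₂) ρ

/-- Capture-free substitution `M[k := N]`. -/
def subst (k : ℕ) (N : Tm) : Tm → Tm
  | .var n => if n < k then .var n else if n = k then N else .var (n - 1)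
  | .abort M φ => .abort (subst k N M) φ
  | .lam φ M => .lam φ (subst (k + 1) (lift 0 N) M)
  | .app M P => .app (subst k N M) (subst k N P)
  | .pair M P => .pair (subst k N M) (subst k N P)
  | .fst M => .fst (subst k N M)
  | .snd M => .snd (subst k N M)
  | .inl M => .inl (subst k N M)
  | .inr M => .inr (subst k N M)
  | .case M φ P ψ Q ρ =>
      .case (subst k N M) φ (subst (k + 1) (lift 0 N) P) ψ (subst (k + 1) (lift 0 N) Q) ρ

/-- Natural deduction for IPC as a type assignment system. -/
inductive Typing : List Formula → Tm → Formula → Prop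
  | var {Γ n φ} : Γ[n]? = some φ → Typing Γ (.var n) φ
  | abort {Γ M φ} : Typing Γ M .bot → Typing Γ (.abort M φ) φ
  | lam {Γ φ ψ M} : Typing (φ :: Γ) M ψ → Typing Γ (.lam φ M) (.imp φ ψ)
  | app {Γ M N φ ψ} : Typing Γ M (.imp φ ψ) → Typing Γ N φ → Typing Γ (.app M N) ψ
  | pair {Γ M N φ ψ} : Typing Γ M φ → Typing Γ N ψ → Typing Γ (.pair M N) (.conj φ ψ)
  | fst {Γ M φ ψ} : Typing Γ M (.conj φ ψ) → Typing Γ (.fst M) φ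
  | snd {Γ M φ ψ} : Typing Γ M (.conj φ ψ) → Typing Γ (.snd M) ψ
  | inl {Γ M φ ψ} : Typing Γ M φ → Typing Γ (.inl M) (.disj φ ψ)
  | inr {Γ M φ ψ} : Typing Γ M ψ → Typing Γ (.inr M) (.disj φ ψ)
  | case {Γ M N₁ N₂ φ ψ ρ} : Typing Γ M (.disj φ ψ) → Typing (φ :: Γ) N₁ ρ →
      Typing (ψ :: Γ) N₂ ρ → Typing Γ (.case M φ N₁ ψ N₂ ρ) ρ

/-- One-step reduction: contextual closure of the β-rules and the permutation
(commuting conversion) rules. -/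
inductive Step : Tm → Tm → Prop
  -- β-rules
  | beta_imp {φ M N} : Step (.app (.lam φ M) N) (subst 0 N M)
  | beta_fst {M N} : Step (.fst (.pair M N)) M
  | beta_snd {M N} : Step (.snd (.pair M N)) N
  | beta_inl {M φ N₁ ψ N₂ ρ} : Step (.case (.inl M) φ N₁ ψ N₂ ρ) (subst 0 M N₁)
  | beta_inr {M φ N₁ ψ N₂ ρ} : Step (.case (.inr M) φ N₁ ψ N₂ ρ) (subst 0 M N₂)
  -- permutations of a ∨-elimination past an eliminator
  | perm_case_app {M φ N₁ ψ N₂ α β P} :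
      Step (.app (.case M φ N₁ ψ N₂ (.imp α β)) P)
        (.case M φ (.app N₁ (lift 0 P)) ψ (.app N₂ (lift 0 P)) β)
  | perm_case_fst {M φ N₁ ψ N₂ α β} :
      Step (.fst (.case M φ N₁ ψ N₂ (.conj α β))) (.case M φ (.fst N₁) ψ (.fst N₂) α)
  | perm_case_snd {M φ N₁ ψ N₂ α β} :
      Step (.snd (.case M φ N₁ ψ N₂ (.conj α β))) (.case M φ (.snd N₁) ψ (.snd N₂) β)
  | perm_case_abort {M φ N₁ ψ N₂ θ} :
      Step (.abort (.case M φ N₁ ψ N₂ .bot) θ) (.case M φ (.abort N₁ θ) ψ (.abort N₂ θ) θ)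
  | perm_case_case {M φ N₁ ψ N₂ α β P Q σ} :
      Step (.case (.case M φ N₁ ψ N₂ (.disj α β)) α P β Q σ)
        (.case M φ (.case N₁ α (lift 1 P) β (lift 1 Q) σ) ψ
          (.case N₂ α (lift 1 P) β (lift 1 Q) σ) σ)
  -- permutations of a ⊥-elimination past an eliminator
  | perm_abort_app {M α β N} : Step (.app (.abort M (.imp α β)) N) (.abort M β)
  | perm_abort_fst {M α β} : Step (.fst (.abort M (.conj α β))) (.abort M α)
  | perm_abort_snd {M α β} : Step (.snd (.abort M (.conj α β))) (.abort M β)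
  | perm_abort_abort {M θ} : Step (.abort (.abort M .bot) θ) (.abort M θ)
  | perm_abort_case {M α β P Q σ} :
      Step (.case (.abort M (.disj α β)) α P β Q σ) (.abort M σ)
  -- contextual closure
  | congr_abort {M M' φ} : Step M M' → Step (.abort M φ) (.abort M' φ)
  | congr_lam {φ M M'} : Step M M' → Step (.lam φ M) (.lam φ M')
  | congr_app_l {M M' N} : Step M M' → Step (.app M N) (.app M' N)
  | congr_app_r {M N N'} : Step N N' → Step (.app M N) (.app M N')
  | congr_pair_l {M M' N} : Step M M' → Step (.pair M N) (.pair M' N)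
  | congr_pair_r {M N N'} : Step N N' → Step (.pair M N) (.pair M N')
  | congr_fst {M M'} : Step M M' → Step (.fst M) (.fst M')
  | congr_snd {M M'} : Step M M' → Step (.snd M) (.snd M')
  | congr_inl {M M'} : Step M M' → Step (.inl M) (.inl M')
  | congr_inr {M M'} : Step M M' → Step (.inr M) (.inr M')
  | congr_case_scrut {M M' φ N₁ ψ N₂ ρ} :
      Step M M' → Step (.case M φ N₁ ψ N₂ ρ) (.case M' φ N₁ ψ N₂ ρ)
  | congr_case_l {M φ N₁ N₁' ψ N₂ ρ} :
      Step N₁ N₁' → Step (.case M φ N₁ ψ N₂ ρ) (.case M φ N₁' ψ N₂ ρ)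
  | congr_case_r {M φ N₁ ψ N₂ N₂' ρ} :
      Step N₂ N₂' → Step (.case M φ N₁ ψ N₂ ρ) (.case M φ N₁ ψ N₂' ρ)

/-- Multi-step reduction `M ↠ N`. -/
def MultiStep : Tm → Tm → Prop := Relation.ReflTransGen Step

/-! # Part 0: strong normalisation basics -/

def SN (M : Tm) : Prop := Acc (fun a b => Step b a) M

theorem sn_step {M M' : Tm} (h : SN M) (s : Step M M') : SN M' := h.inv s

theorem sn_of_sim (g : Tm → Tm) (hg : ∀ x y, Step x y → Step (g x) (g y)) :
    ∀ {b : Tm}, SN b → ∀ {a : Tm}, g a = b → SN a := by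
  intro b hb
  induction hb with
  | intro x _ ih =>
    intro a hab
    constructor
    intro y hy
    exact ih (g y) (hab ▸ hg _ _ hy) rfl

theorem sn_no_chain {x : Tm} (h : SN x) :
    ∀ g : ℕ → Tm, g 0 = x → (∀ n, Step (g n) (g (n + 1))) → False := by
  induction h with
  | intro x _ ih =>
    intro g h0 hs
    exact ih (g 1) (h0 ▸ hs 0) (fun n => g (n + 1)) rfl (fun n => hs (n + 1))

/-! # Part 1a: parallel renaming and substitution -/

def upr (ρ : ℕ → ℕ) : ℕ → ℕ
  | 0 => 0
  | n + 1 => ρ n + 1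

def rename (ρ : ℕ → ℕ) : Tm → Tm
  | .var n => .var (ρ n)
  | .abort M φ => .abort (rename ρ M) φ
  | .lam φ M => .lam φ (rename (upr ρ) M)
  | .app M N => .app (rename ρ M) (rename ρ N)
  | .pair M N => .pair (rename ρ M) (rename ρ N)
  | .fst M => .fst (rename ρ M)
  | .snd M => .snd (rename ρ M)
  | .inl M => .inl (rename ρ M)
  | .inr M => .inr (rename ρ M)
  | .case M φ N₁ ψ N₂ ρ' => .case (rename ρ M) φ (rename (upr ρ) N₁) ψ (rename (upr ρ) N₂) ρ'

def ups (σ : ℕ → Tm) : ℕ → Tm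
  | 0 => .var 0
  | n + 1 => rename Nat.succ (σ n)

def psubst (σ : ℕ → Tm) : Tm → Tm
  | .var n => σ n
  | .abort M φ => .abort (psubst σ M) φ
  | .lam φ M => .lam φ (psubst (ups σ) M)
  | .app M N => .app (psubst σ M) (psubst σ N)
  | .pair M N => .pair (psubst σ M) (psubst σ N)
  | .fst M => .fst (psubst σ M)
  | .snd M => .snd (psubst σ M)
  | .inl M => .inl (psubst σ M)
  | .inr M => .inr (psubst σ M)
  | .case M φ N₁ ψ N₂ ρ => .case (psubst σ M) φ (psubst (ups σ) N₁) ψ (psubst (ups σ) N₂) ρ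

theorem upr_ext {ρ₁ ρ₂ : ℕ → ℕ} (h : ∀ n, ρ₁ n = ρ₂ n) : ∀ n, upr ρ₁ n = upr ρ₂ n := by
  intro n; cases n <;> simp [upr, h]

theorem rename_ext {ρ₁ ρ₂ : ℕ → ℕ} (h : ∀ n, ρ₁ n = ρ₂ n) (M : Tm) :
    rename ρ₁ M = rename ρ₂ M := by
  induction M generalizing ρ₁ ρ₂ with
  | var n => simp [rename, h]
  | abort M φ ih => simp [rename, ih h]
  | lam φ M ih => simp [rename, ih (upr_ext h)]
  | app M N ihM ihN => simp [rename, ihM h, ihN h]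
  | pair M N ihM ihN => simp [rename, ihM h, ihN h]
  | fst M ih => simp [rename, ih h]
  | snd M ih => simp [rename, ih h]
  | inl M ih => simp [rename, ih h]
  | inr M ih => simp [rename, ih h]
  | case M φ N₁ ψ N₂ ρ ihM ih1 ih2 =>
      simp [rename, ihM h, ih1 (upr_ext h), ih2 (upr_ext h)]

theorem ups_ext {σ₁ σ₂ : ℕ → Tm} (h : ∀ n, σ₁ n = σ₂ n) : ∀ n, ups σ₁ n = ups σ₂ n := by
  intro n; cases n <;> simp [ups, h]

theorem psubst_ext {σ₁ σ₂ : ℕ → Tm} (h : ∀ n, σ₁ n = σ₂ n) (M : Tm) :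
    psubst σ₁ M = psubst σ₂ M := by
  induction M generalizing σ₁ σ₂ with
  | var n => simp [psubst, h]
  | abort M φ ih => simp [psubst, ih h]
  | lam φ M ih => simp [psubst, ih (ups_ext h)]
  | app M N ihM ihN => simp [psubst, ihM h, ihN h]
  | pair M N ihM ihN => simp [psubst, ihM h, ihN h]
  | fst M ih => simp [psubst, ih h]
  | snd M ih => simp [psubst, ih h]
  | inl M ih => simp [psubst, ih h]
  | inr M ih => simp [psubst, ih h]
  | case M φ N₁ ψ N₂ ρ ihM ih1 ih2 =>
      simp [psubst, ihM h, ih1 (ups_ext h), ih2 (ups_ext h)]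

theorem upr_comp (ρ₁ ρ₂ : ℕ → ℕ) : ∀ n, upr ρ₂ (upr ρ₁ n) = upr (fun n => ρ₂ (ρ₁ n)) n := by
  intro n; cases n <;> simp [upr]

theorem rename_rename (ρ₁ ρ₂ : ℕ → ℕ) (M : Tm) :
    rename ρ₂ (rename ρ₁ M) = rename (fun n => ρ₂ (ρ₁ n)) M := by
  induction M generalizing ρ₁ ρ₂ with
  | var n => simp [rename]
  | abort M φ ih => simp [rename, ih]
  | lam φ M ih => simp [rename, ih]; exact rename_ext (upr_comp ρ₁ ρ₂) M
  | app M N ihM ihN => simp [rename, ihM, ihN]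
  | pair M N ihM ihN => simp [rename, ihM, ihN]
  | fst M ih => simp [rename, ih]
  | snd M ih => simp [rename, ih]
  | inl M ih => simp [rename, ih]
  | inr M ih => simp [rename, ih]
  | case M φ N₁ ψ N₂ ρ ihM ih1 ih2 =>
      simp [rename, ihM, ih1, ih2]
      exact ⟨rename_ext (upr_comp ρ₁ ρ₂) N₁, rename_ext (upr_comp ρ₁ ρ₂) N₂⟩

theorem ups_upr (σ : ℕ → Tm) (ρ : ℕ → ℕ) :
    ∀ n, ups σ (upr ρ n) = ups (fun n => σ (ρ n)) n := by
  intro n; cases n <;> simp [ups, upr]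

theorem psubst_rename (σ : ℕ → Tm) (ρ : ℕ → ℕ) (M : Tm) :
    psubst σ (rename ρ M) = psubst (fun n => σ (ρ n)) M := by
  induction M generalizing σ ρ with
  | var n => simp [rename, psubst]
  | abort M φ ih => simp [rename, psubst, ih]
  | lam φ M ih => simp [rename, psubst, ih]; exact psubst_ext (ups_upr σ ρ) M
  | app M N ihM ihN => simp [rename, psubst, ihM, ihN]
  | pair M N ihM ihN => simp [rename, psubst, ihM, ihN]
  | fst M ih => simp [rename, psubst, ih]
  | snd M ih => simp [rename, psubst, ih]
  | inl M ih => simp [rename, psubst, ih]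
  | inr M ih => simp [rename, psubst, ih]
  | case M φ N₁ ψ N₂ ρ' ihM ih1 ih2 =>
      simp [rename, psubst, ihM, ih1, ih2]
      exact ⟨psubst_ext (ups_upr σ ρ) N₁, psubst_ext (ups_upr σ ρ) N₂⟩

theorem upr_ups (ρ : ℕ → ℕ) (σ : ℕ → Tm) :
    ∀ n, rename (upr ρ) (ups σ n) = ups (fun n => rename ρ (σ n)) n := by
  intro n
  cases n with
  | zero => simp [ups, rename, upr]
  | succ n =>
    simp [ups, rename_rename]
    exact rename_ext (fun m => by simp [upr]) _

theorem rename_psubst (ρ : ℕ → ℕ) (σ : ℕ → Tm) (M : Tm) :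
    rename ρ (psubst σ M) = psubst (fun n => rename ρ (σ n)) M := by
  induction M generalizing σ ρ with
  | var n => simp [rename, psubst]
  | abort M φ ih => simp [rename, psubst, ih]
  | lam φ M ih => simp [rename, psubst, ih]; exact psubst_ext (upr_ups ρ σ) M
  | app M N ihM ihN => simp [rename, psubst, ihM, ihN]
  | pair M N ihM ihN => simp [rename, psubst, ihM, ihN]
  | fst M ih => simp [rename, psubst, ih]
  | snd M ih => simp [rename, psubst, ih]
  | inl M ih => simp [rename, psubst, ih]
  | inr M ih => simp [rename, psubst, ih]
  | case M φ N₁ ψ N₂ ρ' ihM ih1 ih2 =>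
      simp [rename, psubst, ihM, ih1, ih2]
      exact ⟨psubst_ext (upr_ups ρ σ) N₁, psubst_ext (upr_ups ρ σ) N₂⟩

theorem ups_comp (σ₁ σ₂ : ℕ → Tm) :
    ∀ n, psubst (ups σ₂) (ups σ₁ n) = ups (fun n => psubst σ₂ (σ₁ n)) n := by
  intro n
  cases n with
  | zero => simp [ups, psubst]
  | succ n =>
    simp [ups, psubst_rename, rename_psubst]

theorem psubst_psubst (σ₁ σ₂ : ℕ → Tm) (M : Tm) :
    psubst σ₂ (psubst σ₁ M) = psubst (fun n => psubst σ₂ (σ₁ n)) M := by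
  induction M generalizing σ₁ σ₂ with
  | var n => simp [psubst]
  | abort M φ ih => simp [psubst, ih]
  | lam φ M ih => simp [psubst, ih]; exact psubst_ext (ups_comp σ₁ σ₂) M
  | app M N ihM ihN => simp [psubst, ihM, ihN]
  | pair M N ihM ihN => simp [psubst, ihM, ihN]
  | fst M ih => simp [psubst, ih]
  | snd M ih => simp [psubst, ih]
  | inl M ih => simp [psubst, ih]
  | inr M ih => simp [psubst, ih]
  | case M φ N₁ ψ N₂ ρ ihM ih1 ih2 =>
      simp [psubst, ihM, ih1, ih2]
      exact ⟨psubst_ext (ups_comp σ₁ σ₂) N₁, psubst_ext (ups_comp σ₁ σ₂) N₂⟩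

def liftF (d : ℕ) : ℕ → ℕ := fun n => if n < d then n else n + 1

def sub1 (k : ℕ) (N : Tm) : ℕ → Tm :=
  fun n => if n < k then .var n else if n = k then N else .var (n - 1)

theorem upr_liftF (d : ℕ) : ∀ n, upr (liftF d) n = liftF (d + 1) n := by
  intro n; cases n <;> simp [upr, liftF] <;> split <;> omega

theorem lift_eq (d : ℕ) (M : Tm) : lift d M = rename (liftF d) M := by
  induction M generalizing d with
  | var n => simp [lift, rename, liftF]; split <;> simp
  | abort M φ ih => simp [lift, rename, ih]
  | lam φ M ih => simp [lift, rename, ih]; exact rename_ext (fun n => (upr_liftF d n).symm) M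
  | app M N ihM ihN => simp [lift, rename, ihM, ihN]
  | pair M N ihM ihN => simp [lift, rename, ihM, ihN]
  | fst M ih => simp [lift, rename, ih]
  | snd M ih => simp [lift, rename, ih]
  | inl M ih => simp [lift, rename, ih]
  | inr M ih => simp [lift, rename, ih]
  | case M φ N₁ ψ N₂ ρ ihM ih1 ih2 =>
      simp [lift, rename, ihM, ih1, ih2]
      exact ⟨rename_ext (fun n => (upr_liftF d n).symm) N₁,
        rename_ext (fun n => (upr_liftF d n).symm) N₂⟩

theorem lift0_eq (N : Tm) : lift 0 N = rename Nat.succ N := by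
  rw [lift_eq]; exact rename_ext (fun n => by simp [liftF]) N

theorem ups_sub1 (k : ℕ) (N : Tm) :
    ∀ n, ups (sub1 k N) n = sub1 (k + 1) (lift 0 N) n := by
  intro n
  cases n with
  | zero => simp [ups, sub1]
  | succ n =>
    simp only [ups, sub1, lift0_eq]
    rcases Nat.lt_trichotomy n k with h | h | h
    · simp [if_pos h, if_pos (by omega : n + 1 < k + 1), rename]
    · subst h
      simp [if_neg (by omega : ¬ n < n), if_neg (by omega : ¬ n + 1 < n + 1)]
    · simp [if_neg (by omega : ¬ n < k), if_neg (by omega : n ≠ k),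
        if_neg (by omega : ¬ n + 1 < k + 1), if_neg (by omega : n + 1 ≠ k + 1), rename]
      omega

theorem subst_eq (k : ℕ) (N : Tm) (M : Tm) : subst k N M = psubst (sub1 k N) M := by
  induction M generalizing k N with
  | var n => simp [subst, psubst, sub1]
  | abort M φ ih => simp [subst, psubst, ih]
  | lam φ M ih => simp [subst, psubst, ih]; exact psubst_ext (fun n => (ups_sub1 k N n).symm) M
  | app M N' ihM ihN => simp [subst, psubst, ihM, ihN]
  | pair M N' ihM ihN => simp [subst, psubst, ihM, ihN]
  | fst M ih => simp [subst, psubst, ih]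
  | snd M ih => simp [subst, psubst, ih]
  | inl M ih => simp [subst, psubst, ih]
  | inr M ih => simp [subst, psubst, ih]
  | case M φ N₁ ψ N₂ ρ ihM ih1 ih2 =>
      simp [subst, psubst, ihM, ih1, ih2]
      exact ⟨psubst_ext (fun n => (ups_sub1 k N n).symm) N₁,
        psubst_ext (fun n => (ups_sub1 k N n).symm) N₂⟩

/-! # Part 1b: corollaries of the substitution calculus -/

theorem psubst_id (M : Tm) : psubst (fun n => .var n) M = M := by
  induction M with
  | var n => simp [psubst]
  | abort M φ ih => simp [psubst, ih]
  | lam φ M ih =>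
      simp [psubst]
      rw [psubst_ext (fun n => by cases n <;> simp [ups, rename] : ∀ n, ups (fun n => Tm.var n) n = (fun n => Tm.var n) n) M]
      exact ih
  | app M N ihM ihN => simp [psubst, ihM, ihN]
  | pair M N ihM ihN => simp [psubst, ihM, ihN]
  | fst M ih => simp [psubst, ih]
  | snd M ih => simp [psubst, ih]
  | inl M ih => simp [psubst, ih]
  | inr M ih => simp [psubst, ih]
  | case M φ N₁ ψ N₂ ρ ihM ih1 ih2 =>
      simp [psubst, ihM]
      constructor
      · rw [psubst_ext (fun n => by cases n <;> simp [ups, rename] : ∀ n, ups (fun n => Tm.var n) n = (fun n => Tm.var n) n) N₁]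
        exact ih1
      · rw [psubst_ext (fun n => by cases n <;> simp [ups, rename] : ∀ n, ups (fun n => Tm.var n) n = (fun n => Tm.var n) n) N₂]
        exact ih2

theorem rename_eq_psubst (ρ : ℕ → ℕ) (M : Tm) : rename ρ M = psubst (fun n => .var (ρ n)) M := by
  induction M generalizing ρ with
  | var n => simp [rename, psubst]
  | abort M φ ih => simp [rename, psubst, ih]
  | lam φ M ih =>
      simp [rename, psubst, ih]
      exact psubst_ext (fun n => by cases n <;> simp [ups, upr, rename]) M
  | app M N ihM ihN => simp [rename, psubst, ihM, ihN]
  | pair M N ihM ihN => simp [rename, psubst, ihM, ihN]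
  | fst M ih => simp [rename, psubst, ih]
  | snd M ih => simp [rename, psubst, ih]
  | inl M ih => simp [rename, psubst, ih]
  | inr M ih => simp [rename, psubst, ih]
  | case M φ N₁ ψ N₂ ρ' ihM ih1 ih2 =>
      simp [rename, psubst, ihM, ih1, ih2]
      exact ⟨psubst_ext (fun n => by cases n <;> simp [ups, upr, rename]) N₁,
        psubst_ext (fun n => by cases n <;> simp [ups, upr, rename]) N₂⟩

/-- `subst k P (lift k Q) = Q`. -/
theorem subst_lift_cancel (k : ℕ) (P Q : Tm) : subst k P (lift k Q) = Q := by
  rw [subst_eq, lift_eq, psubst_rename]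
  rw [psubst_ext (fun n => ?_ : ∀ n, sub1 k P (liftF k n) = (fun m => Tm.var m) n) Q]
  · exact psubst_id Q
  · simp only [liftF, sub1]
    split
    · next h => simp [if_pos h]
    · next h => simp [if_neg (by omega : ¬ n + 1 < k), if_neg (by omega : n + 1 ≠ k)]

def scons (P : Tm) (σ : ℕ → Tm) : ℕ → Tm
  | 0 => P
  | n + 1 => σ n

/-- `(psubst (ups σ) M)[0 := P] = psubst (P ⋅ σ) M`. -/
theorem subst0_psubst (P : Tm) (σ : ℕ → Tm) (M : Tm) :
    subst 0 P (psubst (ups σ) M) = psubst (scons P σ) M := by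
  rw [subst_eq, psubst_psubst]
  refine psubst_ext (fun n => ?_) M
  cases n with
  | zero => simp [ups, psubst, sub1, scons]
  | succ n =>
    simp [ups, scons, psubst_rename]
    rw [psubst_ext (fun m => by simp [sub1] : ∀ m, sub1 0 P (Nat.succ m) = (fun m => Tm.var m) m) (σ n)]
    exact psubst_id (σ n)

theorem psubst_subst0 (σ : ℕ → Tm) (N M : Tm) :
    psubst σ (subst 0 N M) = subst 0 (psubst σ N) (psubst (ups σ) M) := by
  rw [subst0_psubst, subst_eq, psubst_psubst]
  refine psubst_ext (fun n => ?_) M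
  cases n with
  | zero => simp [sub1, psubst, scons]
  | succ n => simp [sub1, psubst, scons]

theorem psubst_lift0 (σ : ℕ → Tm) (N : Tm) :
    psubst (ups σ) (lift 0 N) = lift 0 (psubst σ N) := by
  rw [lift0_eq, lift0_eq, psubst_rename, rename_psubst]
  exact psubst_ext (fun n => by simp [ups]) N

theorem psubst_lift1 (σ : ℕ → Tm) (N : Tm) :
    psubst (ups (ups σ)) (lift 1 N) = lift 1 (psubst (ups σ) N) := by
  rw [lift_eq, lift_eq, psubst_rename, rename_psubst]
  refine psubst_ext (fun n => ?_) N
  cases n with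
  | zero => simp [ups, liftF, rename]
  | succ n =>
    simp [ups, liftF, if_neg (by omega : ¬ n + 1 < 1), rename_rename]
    try exact rename_ext (fun m => by simp [liftF]) (σ n)

/-! step preservation under parallel substitution -/

theorem step_psubst {M M' : Tm} (h : Step M M') (σ : ℕ → Tm) :
    Step (psubst σ M) (psubst σ M') := by
  induction h generalizing σ with
  | @beta_imp φ M N =>
      simp only [psubst]
      rw [psubst_subst0]
      exact Step.beta_imp
  | beta_fst => simp only [psubst]; exact Step.beta_fst
  | beta_snd => simp only [psubst]; exact Step.beta_snd
  | @beta_inl M φ N₁ ψ N₂ ρ =>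
      simp only [psubst]
      rw [psubst_subst0]
      exact Step.beta_inl
  | @beta_inr M φ N₁ ψ N₂ ρ =>
      simp only [psubst]
      rw [psubst_subst0]
      exact Step.beta_inr
  | perm_case_app =>
      simp only [psubst]
      rw [psubst_lift0]
      exact Step.perm_case_app
  | perm_case_fst => simp only [psubst]; exact Step.perm_case_fst
  | perm_case_snd => simp only [psubst]; exact Step.perm_case_snd
  | perm_case_abort => simp only [psubst]; exact Step.perm_case_abort
  | perm_case_case =>
      simp only [psubst]
      rw [psubst_lift1, psubst_lift1]
      exact Step.perm_case_case
  | perm_abort_app => simp only [psubst]; exact Step.perm_abort_app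
  | perm_abort_fst => simp only [psubst]; exact Step.perm_abort_fst
  | perm_abort_snd => simp only [psubst]; exact Step.perm_abort_snd
  | perm_abort_abort => simp only [psubst]; exact Step.perm_abort_abort
  | perm_abort_case => simp only [psubst]; exact Step.perm_abort_case
  | congr_abort h ih => exact Step.congr_abort (ih σ)
  | congr_lam h ih => exact Step.congr_lam (ih (ups σ))
  | congr_app_l h ih => exact Step.congr_app_l (ih σ)
  | congr_app_r h ih => exact Step.congr_app_r (ih σ)
  | congr_pair_l h ih => exact Step.congr_pair_l (ih σ)
  | congr_pair_r h ih => exact Step.congr_pair_r (ih σ)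
  | congr_fst h ih => exact Step.congr_fst (ih σ)
  | congr_snd h ih => exact Step.congr_snd (ih σ)
  | congr_inl h ih => exact Step.congr_inl (ih σ)
  | congr_inr h ih => exact Step.congr_inr (ih σ)
  | congr_case_scrut h ih => exact Step.congr_case_scrut (ih σ)
  | congr_case_l h ih => exact Step.congr_case_l (ih (ups σ))
  | congr_case_r h ih => exact Step.congr_case_r (ih (ups σ))

theorem step_subst {M M' : Tm} (h : Step M M') (k : ℕ) (N : Tm) :
    Step (subst k N M) (subst k N M') := by
  rw [subst_eq, subst_eq]; exact step_psubst h _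

theorem step_rename {M M' : Tm} (h : Step M M') (ρ : ℕ → ℕ) :
    Step (rename ρ M) (rename ρ M') := by
  rw [rename_eq_psubst, rename_eq_psubst]; exact step_psubst h _

theorem step_lift {M M' : Tm} (h : Step M M') (d : ℕ) :
    Step (lift d M) (lift d M') := by
  rw [lift_eq, lift_eq]; exact step_rename h _

/-! # Part 1c: evaluation stacks -/

inductive Frame : Type
  | app (N : Tm)
  | fst
  | snd
  | cas (φ : Formula) (N₁ : Tm) (ψ : Formula) (N₂ : Tm) (ρ : Formula)

abbrev Stack := List Frame

def fill : Frame → Tm → Tm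
  | .app N, M => .app M N
  | .fst, M => .fst M
  | .snd, M => .snd M
  | .cas φ N₁ ψ N₂ ρ, M => .case M φ N₁ ψ N₂ ρ

def plug : Stack → Tm → Tm
  | [], M => M
  | f :: E, M => plug E (fill f M)

theorem fill_congr {M M' : Tm} (f : Frame) (h : Step M M') : Step (fill f M) (fill f M') := by
  cases f
  · exact Step.congr_app_l h
  · exact Step.congr_fst h
  · exact Step.congr_snd h
  · exact Step.congr_case_scrut h

theorem plug_congr {M M' : Tm} (E : Stack) (h : Step M M') : Step (plug E M) (plug E M') := by
  induction E generalizing M M' with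
  | nil => exact h
  | cons f E ih => exact ih (fill_congr f h)

theorem sn_plug_inner {E : Stack} {M : Tm} (h : SN (plug E M)) : SN M :=
  sn_of_sim (plug E) (fun _ _ s => plug_congr E s) h rfl

/-- one-step reduction of a component of a frame -/
inductive FStep : Frame → Frame → Prop
  | app {N N'} : Step N N' → FStep (.app N) (.app N')
  | casL {φ N₁ N₁' ψ N₂ ρ} : Step N₁ N₁' → FStep (.cas φ N₁ ψ N₂ ρ) (.cas φ N₁' ψ N₂ ρ)
  | casR {φ N₁ ψ N₂ N₂' ρ} : Step N₂ N₂' → FStep (.cas φ N₁ ψ N₂ ρ) (.cas φ N₁ ψ N₂' ρ)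

theorem fstep_fill {f f' : Frame} (h : FStep f f') (M : Tm) : Step (fill f M) (fill f' M) := by
  cases h with
  | app s => exact Step.congr_app_r s
  | casL s => exact Step.congr_case_l s
  | casR s => exact Step.congr_case_r s

/-- permutation interaction: a `case` frame absorbs the next frame -/
def interact : Frame → Frame → Option Frame
  | .cas φ N₁ ψ N₂ (.imp _ β), .app Q =>
      some (.cas φ (.app N₁ (lift 0 Q)) ψ (.app N₂ (lift 0 Q)) β)
  | .cas φ N₁ ψ N₂ (.conj α _), .fst => some (.cas φ (.fst N₁) ψ (.fst N₂) α)
  | .cas φ N₁ ψ N₂ (.conj _ β), .snd => some (.cas φ (.snd N₁) ψ (.snd N₂) β)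
  | .cas φ N₁ ψ N₂ (.disj α β), .cas α' P β' Q s =>
      if α' = α ∧ β' = β then
        some (.cas φ (.case N₁ α (lift 1 P) β (lift 1 Q) s) ψ
          (.case N₂ α (lift 1 P) β (lift 1 Q) s) s)
      else none
  | _, _ => none

theorem interact_step {c f c' : Frame} (h : interact c f = some c') (M : Tm) :
    Step (fill f (fill c M)) (fill c' M) := by
  match c, f with
  | .cas φ N₁ ψ N₂ ρ, .app Q =>
      cases ρ <;> simp [interact] at h
      subst h; exact Step.perm_case_app
  | .cas φ N₁ ψ N₂ ρ, .fst =>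
      cases ρ <;> simp [interact] at h
      subst h; exact Step.perm_case_fst
  | .cas φ N₁ ψ N₂ ρ, .snd =>
      cases ρ <;> simp [interact] at h
      subst h; exact Step.perm_case_snd
  | .cas φ N₁ ψ N₂ ρ, .cas α' P β' Q s =>
      cases ρ with
      | disj α β =>
          simp [interact] at h
          rcases h with ⟨⟨h1, h2⟩, h3⟩
          subst h1; subst h2; subst h3
          exact Step.perm_case_case
      | _ => simp [interact] at h
  | .app _, _ => simp [interact] at h
  | .fst, _ => simp [interact] at h
  | .snd, _ => simp [interact] at h

/-- one-step reduction inside a stack: a component steps -/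
inductive SStep : Stack → Stack → Prop
  | head {f f' E} : FStep f f' → SStep (f :: E) (f' :: E)
  | tail {f E E'} : SStep E E' → SStep (f :: E) (f :: E')

/-- one-step permutation inside a stack: adjacent frames merge -/
inductive PStep : Stack → Stack → Prop
  | head {c f c' E} : interact c f = some c' → PStep (c :: f :: E) (c' :: E)
  | tail {f E E'} : PStep E E' → PStep (f :: E) (f :: E')

def SRed (E E' : Stack) : Prop := SStep E E' ∨ PStep E E'

theorem sred_cons {E E' : Stack} (f : Frame) (h : SRed E E') : SRed (f :: E) (f :: E') := by
  cases h with
  | inl h => exact Or.inl (SStep.tail h)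
  | inr h => exact Or.inr (PStep.tail h)

theorem sstep_plug {E E' : Stack} (h : SStep E E') (M : Tm) : Step (plug E M) (plug E' M) := by
  induction h generalizing M with
  | head hf => exact plug_congr _ (fstep_fill hf M)
  | tail _ ih => exact ih (fill _ M)

theorem pstep_plug {E E' : Stack} (h : PStep E E') (M : Tm) : Step (plug E M) (plug E' M) := by
  induction h generalizing M with
  | head hi => exact plug_congr _ (interact_step hi M)
  | tail _ ih => exact ih (fill _ M)

theorem sred_plug {E E' : Stack} (h : SRed E E') (M : Tm) : Step (plug E M) (plug E' M) := by
  cases h with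
  | inl h => exact sstep_plug h M
  | inr h => exact pstep_plug h M

theorem pstep_len {E E' : Stack} (h : PStep E E') : E'.length < E.length := by
  induction h with
  | head => simp
  | tail _ ih => simpa using Nat.succ_lt_succ ih

theorem sstep_len {E E' : Stack} (h : SStep E E') : E'.length = E.length := by
  induction h with
  | head => simp
  | tail _ ih => simpa using ih

/-- root interaction between a frame and the term filling it -/
inductive Root : Frame → Tm → Tm → Prop
  | beta_app {N φ M} : Root (.app N) (.lam φ M) (subst 0 N M)
  | beta_fst {M N} : Root .fst (.pair M N) M
  | beta_snd {M N} : Root .snd (.pair M N) N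
  | beta_inl {φ N₁ ψ N₂ ρ M} : Root (.cas φ N₁ ψ N₂ ρ) (.inl M) (subst 0 M N₁)
  | beta_inr {φ N₁ ψ N₂ ρ M} : Root (.cas φ N₁ ψ N₂ ρ) (.inr M) (subst 0 M N₂)
  | perm_case {φ N₁ ψ N₂ ρ f c' M} :
      interact (.cas φ N₁ ψ N₂ ρ) f = some c' → Root f (.case M φ N₁ ψ N₂ ρ) (fill c' M)
  | abort_app {N M α β} : Root (.app N) (.abort M (.imp α β)) (.abort M β)
  | abort_fst {M α β} : Root .fst (.abort M (.conj α β)) (.abort M α)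
  | abort_snd {M α β} : Root .snd (.abort M (.conj α β)) (.abort M β)
  | abort_cas {α P β Q s M} : Root (.cas α P β Q s) (.abort M (.disj α β)) (.abort M s)

theorem fill_step_inv {f : Frame} {M Y : Tm} (h : Step (fill f M) Y) :
    (∃ M', Step M M' ∧ Y = fill f M') ∨ (∃ f', FStep f f' ∧ Y = fill f' M) ∨ Root f M Y := by
  cases f with
  | app N =>
      simp only [fill] at h
      cases h with
      | beta_imp => exact Or.inr (Or.inr Root.beta_app)
      | perm_case_app =>
          refine Or.inr (Or.inr ?_)
          exact Root.perm_case (c' := Frame.cas _ (.app _ _) _ (.app _ _) _) (by simp [interact])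
      | perm_abort_app => exact Or.inr (Or.inr Root.abort_app)
      | congr_app_l s => exact Or.inl ⟨_, s, rfl⟩
      | congr_app_r s => exact Or.inr (Or.inl ⟨_, FStep.app s, rfl⟩)
  | fst =>
      simp only [fill] at h
      cases h with
      | beta_fst => exact Or.inr (Or.inr Root.beta_fst)
      | perm_case_fst =>
          exact Or.inr (Or.inr (Root.perm_case
            (c' := Frame.cas _ (.fst _) _ (.fst _) _) (by simp [interact])))
      | perm_abort_fst => exact Or.inr (Or.inr Root.abort_fst)
      | congr_fst s => exact Or.inl ⟨_, s, rfl⟩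
  | snd =>
      simp only [fill] at h
      cases h with
      | beta_snd => exact Or.inr (Or.inr Root.beta_snd)
      | perm_case_snd =>
          exact Or.inr (Or.inr (Root.perm_case
            (c' := Frame.cas _ (.snd _) _ (.snd _) _) (by simp [interact])))
      | perm_abort_snd => exact Or.inr (Or.inr Root.abort_snd)
      | congr_snd s => exact Or.inl ⟨_, s, rfl⟩
  | cas φ N₁ ψ N₂ ρ =>
      simp only [fill] at h
      cases h with
      | beta_inl => exact Or.inr (Or.inr Root.beta_inl)
      | beta_inr => exact Or.inr (Or.inr Root.beta_inr)
      | perm_case_case =>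
          exact Or.inr (Or.inr (Root.perm_case
            (c' := Frame.cas _ (.case _ _ _ _ _ _) _ (.case _ _ _ _ _ _) _)
            (by simp [interact])))
      | perm_abort_case => exact Or.inr (Or.inr Root.abort_cas)
      | congr_case_scrut s => exact Or.inl ⟨_, s, rfl⟩
      | congr_case_l s => exact Or.inr (Or.inl ⟨_, FStep.casL s, rfl⟩)
      | congr_case_r s => exact Or.inr (Or.inl ⟨_, FStep.casR s, rfl⟩)

theorem step_plug_inv {E : Stack} {M Y : Tm} (h : Step (plug E M) Y) :
    (∃ M', Step M M' ∧ Y = plug E M') ∨ (∃ E', SRed E E' ∧ Y = plug E' M) ∨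
      (∃ f E' Z, E = f :: E' ∧ Root f M Z ∧ Y = plug E' Z) := by
  induction E generalizing M with
  | nil => exact Or.inl ⟨Y, h, rfl⟩
  | cons f E ih =>
      simp only [plug] at h
      rcases ih h with ⟨W, hW, hY⟩ | ⟨E₂, hE₂, hY⟩ | ⟨g, E₂, Z, hEq, hroot, hY⟩
      · rcases fill_step_inv hW with ⟨M', hM', rfl⟩ | ⟨f', hf', rfl⟩ | hroot
        · exact Or.inl ⟨M', hM', hY⟩
        · exact Or.inr (Or.inl ⟨f' :: E, Or.inl (SStep.head hf'), hY⟩)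
        · exact Or.inr (Or.inr ⟨f, E, W, rfl, hroot, hY⟩)
      · exact Or.inr (Or.inl ⟨f :: E₂, sred_cons f hE₂, hY⟩)
      · subst hEq
        cases f with
        | app N => cases hroot
        | fst => cases hroot
        | snd => cases hroot
        | cas φ N₁ ψ N₂ ρ =>
            cases hroot with
            | perm_case hi =>
                exact Or.inr (Or.inl ⟨_ :: E₂, Or.inr (PStep.head hi), hY⟩)

/-! # Part 1d: the reducibility predicate -/

def Orth : Formula → Stack → Prop
  | _, [] => True
  | .imp A B, .app N :: E => (∀ F, Orth A F → SN (plug F N)) ∧ Orth B E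
  | .conj A _, .fst :: E => Orth A E
  | .conj _ B, .snd :: E => Orth B E
  | .disj A B, .cas φ N₁ ψ N₂ _ :: E =>
      φ = A ∧ ψ = B ∧
      (∀ P, (∀ F, Orth A F → SN (plug F P)) → SN (plug E (subst 0 P N₁))) ∧
      (∀ P, (∀ F, Orth B F → SN (plug F P)) → SN (plug E (subst 0 P N₂)))
  | _, _ => False

def Red (A : Formula) (M : Tm) : Prop := ∀ E, Orth A E → SN (plug E M)

theorem orth_nil (A : Formula) : Orth A [] := by cases A <;> simp [Orth]

theorem red_sn {A M} (h : Red A M) : SN M := by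
  have := h [] (orth_nil A)
  simpa [plug] using this

theorem red_step {A M M'} (h : Red A M) (s : Step M M') : Red A M' :=
  fun E hE => sn_step (h E hE) (plug_congr E s)

theorem orth_sred {A : Formula} : ∀ {E E' : Stack}, Orth A E → SRed E E' → Orth A E' := by
  induction A with
  | var n =>
      intro E E' h hs
      cases E with
      | nil => rcases hs with h' | h' <;> cases h'
      | cons f E => cases f <;> simp [Orth] at h
  | bot =>
      intro E E' h hs
      cases E with
      | nil => rcases hs with h' | h' <;> cases h'
      | cons f E => cases f <;> simp [Orth] at h
  | imp A B ihA ihB =>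
      intro E E' h hs
      cases E with
      | nil => rcases hs with h' | h' <;> cases h'
      | cons f E =>
          cases f with
          | app N =>
              obtain ⟨hN, hE⟩ := h
              rcases hs with h' | h'
              · cases h' with
                | head hf =>
                    cases hf with
                    | app s => exact ⟨fun F hF => sn_step (hN F hF) (plug_congr F s), hE⟩
                | tail ht => exact ⟨hN, ihB hE (Or.inl ht)⟩
              · cases h' with
                | head hi => simp [interact] at hi
                | tail ht => exact ⟨hN, ihB hE (Or.inr ht)⟩
          | fst => simp [Orth] at h
          | snd => simp [Orth] at h
          | cas φ N₁ ψ N₂ ρ => simp [Orth] at h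
  | conj A B ihA ihB =>
      intro E E' h hs
      cases E with
      | nil => rcases hs with h' | h' <;> cases h'
      | cons f E =>
          cases f with
          | app N => simp [Orth] at h
          | fst =>
              rcases hs with h' | h'
              · cases h' with
                | head hf => cases hf
                | tail ht => exact ihA h (Or.inl ht)
              · cases h' with
                | head hi => simp [interact] at hi
                | tail ht => exact ihA h (Or.inr ht)
          | snd =>
              rcases hs with h' | h'
              · cases h' with
                | head hf => cases hf
                | tail ht => exact ihB h (Or.inl ht)
              · cases h' with
                | head hi => simp [interact] at hi
                | tail ht => exact ihB h (Or.inr ht)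
          | cas φ N₁ ψ N₂ ρ => simp [Orth] at h
  | disj A B ihA ihB =>
      intro E E' h hs
      cases E with
      | nil => rcases hs with h' | h' <;> cases h'
      | cons f E =>
          cases f with
          | app N => simp [Orth] at h
          | fst => simp [Orth] at h
          | snd => simp [Orth] at h
          | cas φ N₁ ψ N₂ ρ =>
              obtain ⟨hφ, hψ, h1, h2⟩ := h
              subst hφ; subst hψ
              rcases hs with h' | h'
              · cases h' with
                | head hf =>
                    cases hf with
                    | casL s =>
                        exact ⟨rfl, rfl,
                          fun P hP => sn_step (h1 P hP) (plug_congr E (step_subst s 0 P)),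
                          h2⟩
                    | casR s =>
                        exact ⟨rfl, rfl, h1,
                          fun P hP => sn_step (h2 P hP) (plug_congr E (step_subst s 0 P))⟩
                | tail ht =>
                    exact ⟨rfl, rfl,
                      fun P hP => sn_step (h1 P hP) (sstep_plug ht _),
                      fun P hP => sn_step (h2 P hP) (sstep_plug ht _)⟩
              · cases h' with
                | tail ht =>
                    exact ⟨rfl, rfl,
                      fun P hP => sn_step (h1 P hP) (pstep_plug ht _),
                      fun P hP => sn_step (h2 P hP) (pstep_plug ht _)⟩
                | @head _ f c' E₂ hi =>
                    cases f with
                    | app Q =>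
                        cases ρ <;> simp [interact] at hi
                        subst hi
                        refine ⟨rfl, rfl, fun P hP => ?_, fun P hP => ?_⟩
                        · have := h1 P hP
                          simpa [subst, subst_lift_cancel, plug, fill] using this
                        · have := h2 P hP
                          simpa [subst, subst_lift_cancel, plug, fill] using this
                    | fst =>
                        cases ρ <;> simp [interact] at hi
                        subst hi
                        refine ⟨rfl, rfl, fun P hP => ?_, fun P hP => ?_⟩
                        · have := h1 P hP
                          simpa [subst, plug, fill] using this
                        · have := h2 P hP
                          simpa [subst, plug, fill] using this
                    | snd =>
                        cases ρ <;> simp [interact] at hi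
                        subst hi
                        refine ⟨rfl, rfl, fun P hP => ?_, fun P hP => ?_⟩
                        · have := h1 P hP
                          simpa [subst, plug, fill] using this
                        · have := h2 P hP
                          simpa [subst, plug, fill] using this
                    | cas α' P' β' Q' s =>
                        cases ρ <;> simp [interact] at hi
                        obtain ⟨⟨rfl, rfl⟩, rfl⟩ := hi
                        refine ⟨rfl, rfl, fun P hP => ?_, fun P hP => ?_⟩
                        · have := h1 P hP
                          simpa [subst, subst_lift_cancel, plug, fill] using this
                        · have := h2 P hP
                          simpa [subst, subst_lift_cancel, plug, fill] using this

/-! # Part 1e: accessibility of stacks -/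

def SNs (E : Stack) : Prop := Acc (fun a b => SRed b a) E

theorem sns_sred {E E'} (h : SNs E) (s : SRed E E') : SNs E' := h.inv s

theorem acc_nil : SNs [] := by
  constructor
  rintro y (h | h) <;> cases h

theorem acc_app : ∀ {N}, SN N → ∀ {E}, SNs E → SNs (Frame.app N :: E) := by
  intro N hN
  induction hN with
  | intro N hN' ihN =>
    intro E hE
    induction hE with
    | intro E hE' ihE =>
      constructor
      rintro E' (h | h)
      · cases h with
        | head hf =>
            cases hf with
            | app s => exact ihN _ s (Acc.intro E hE')
        | tail ht => exact ihE _ (Or.inl ht)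
      · cases h with
        | head hi => simp [interact] at hi
        | tail ht => exact ihE _ (Or.inr ht)

theorem acc_fst : ∀ {E}, SNs E → SNs (Frame.fst :: E) := by
  intro E hE
  induction hE with
  | intro E hE' ihE =>
    constructor
    rintro E' (h | h)
    · cases h with
      | head hf => cases hf
      | tail ht => exact ihE _ (Or.inl ht)
    · cases h with
      | head hi => simp [interact] at hi
      | tail ht => exact ihE _ (Or.inr ht)

theorem acc_snd : ∀ {E}, SNs E → SNs (Frame.snd :: E) := by
  intro E hE
  induction hE with
  | intro E hE' ihE =>
    constructor
    rintro E' (h | h)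
    · cases h with
      | head hf => cases hf
      | tail ht => exact ihE _ (Or.inl ht)
    · cases h with
      | head hi => simp [interact] at hi
      | tail ht => exact ihE _ (Or.inr ht)

theorem acc_cas : ∀ (n : ℕ) (E : Stack), E.length = n → ∀ (φ : Formula) (N₁ : Tm)
    (ψ : Formula) (N₂ : Tm) (ρ : Formula),
    SN (plug E (subst 0 (.var 0) N₁)) → SN (plug E (subst 0 (.var 0) N₂)) →
    SNs (Frame.cas φ N₁ ψ N₂ ρ :: E) := by
  intro n
  induction n using Nat.strong_induction_on with
  | _ n ihn =>
    intro E₀ hlen₀ φ₀ N₁₀ ψ₀ N₂₀ ρ₀ hW1₀ hW2₀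
    have main : ∀ W1, SN W1 → ∀ W2, SN W2 → ∀ (E : Stack) (φ : Formula) (N₁ : Tm)
        (ψ : Formula) (N₂ : Tm) (ρ : Formula), E.length = n →
        W1 = plug E (subst 0 (.var 0) N₁) → W2 = plug E (subst 0 (.var 0) N₂) →
        SNs (Frame.cas φ N₁ ψ N₂ ρ :: E) := by
      intro W1 hW1
      induction hW1 with
      | intro W1 hW1' ih1 =>
        intro W2 hW2
        induction hW2 with
        | intro W2 hW2' ih2 =>
          intro E φ N₁ ψ N₂ ρ hlen e1 e2
          constructor
          rintro E' (h | h)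
          · cases h with
            | head hf =>
                cases hf with
                | casL s =>
                    refine ih1 _ ?_ W2 (Acc.intro W2 hW2') E φ _ ψ N₂ ρ hlen rfl e2
                    rw [e1]; exact plug_congr E (step_subst s 0 _)
                | casR s =>
                    refine ih2 _ ?_ E φ N₁ ψ _ ρ hlen e1 rfl
                    rw [e2]; exact plug_congr E (step_subst s 0 _)
            | tail ht =>
                refine ih1 _ ?_ _ ?_ _ φ N₁ ψ N₂ ρ (by rw [sstep_len ht, hlen]) rfl rfl
                · rw [e1]; exact sstep_plug ht _
                · refine sn_step (Acc.intro W2 hW2') ?_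
                  rw [e2]; exact sstep_plug ht _
          · cases h with
            | tail ht =>
                refine ihn _ ?_ _ rfl φ N₁ ψ N₂ ρ ?_ ?_
                · rw [← hlen]; exact pstep_len ht
                · refine sn_step (Acc.intro W1 hW1') ?_
                  rw [e1]; exact pstep_plug ht _
                · refine sn_step (Acc.intro W2 hW2') ?_
                  rw [e2]; exact pstep_plug ht _
            | @head _ f c' E₂ hi =>
                have hlen₂ : E₂.length < n := by rw [← hlen]; simp
                cases f with
                | app Q =>
                    cases ρ <;> simp [interact] at hi
                    subst hi
                    refine ihn E₂.length hlen₂ E₂ rfl _ _ _ _ _ ?_ ?_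
                    · have hw : plug E₂ (subst 0 (.var 0) (Tm.app N₁ (lift 0 Q))) = W1 := by
                        rw [e1]; simp [subst, subst_lift_cancel, plug, fill]
                      exact hw ▸ Acc.intro W1 hW1'
                    · have hw : plug E₂ (subst 0 (.var 0) (Tm.app N₂ (lift 0 Q))) = W2 := by
                        rw [e2]; simp [subst, subst_lift_cancel, plug, fill]
                      exact hw ▸ Acc.intro W2 hW2'
                | fst =>
                    cases ρ <;> simp [interact] at hi
                    subst hi
                    refine ihn E₂.length hlen₂ E₂ rfl _ _ _ _ _ ?_ ?_
                    · have hw : plug E₂ (subst 0 (.var 0) (Tm.fst N₁)) = W1 := by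
                        rw [e1]; simp [subst, plug, fill]
                      exact hw ▸ Acc.intro W1 hW1'
                    · have hw : plug E₂ (subst 0 (.var 0) (Tm.fst N₂)) = W2 := by
                        rw [e2]; simp [subst, plug, fill]
                      exact hw ▸ Acc.intro W2 hW2'
                | snd =>
                    cases ρ <;> simp [interact] at hi
                    subst hi
                    refine ihn E₂.length hlen₂ E₂ rfl _ _ _ _ _ ?_ ?_
                    · have hw : plug E₂ (subst 0 (.var 0) (Tm.snd N₁)) = W1 := by
                        rw [e1]; simp [subst, plug, fill]
                      exact hw ▸ Acc.intro W1 hW1'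
                    · have hw : plug E₂ (subst 0 (.var 0) (Tm.snd N₂)) = W2 := by
                        rw [e2]; simp [subst, plug, fill]
                      exact hw ▸ Acc.intro W2 hW2'
                | cas α' P' β' Q' s =>
                    cases ρ <;> simp [interact] at hi
                    obtain ⟨⟨rfl, rfl⟩, rfl⟩ := hi
                    refine ihn E₂.length hlen₂ E₂ rfl _ _ _ _ _ ?_ ?_
                    · have hw : plug E₂ (subst 0 (.var 0)
                          (Tm.case N₁ α' (lift 1 P') β' (lift 1 Q') s)) = W1 := by
                        rw [e1]; simp [subst, subst_lift_cancel, plug, fill]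
                      exact hw ▸ Acc.intro W1 hW1'
                    · have hw : plug E₂ (subst 0 (.var 0)
                          (Tm.case N₂ α' (lift 1 P') β' (lift 1 Q') s)) = W2 := by
                        rw [e2]; simp [subst, subst_lift_cancel, plug, fill]
                      exact hw ▸ Acc.intro W2 hW2'
    exact main _ hW1₀ _ hW2₀ E₀ φ₀ N₁₀ ψ₀ N₂₀ ρ₀ hlen₀ rfl rfl

theorem acc_var : ∀ {E}, SNs E → ∀ n, SN (plug E (.var n)) := by
  intro E h
  induction h with
  | intro E hE ih =>
    intro n
    constructor
    intro Y hY
    rcases step_plug_inv hY with ⟨M', hM', rfl⟩ | ⟨E', hE', rfl⟩ | ⟨f, E', Z, rfl, hroot, rfl⟩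
    · cases hM'
    · exact ih E' hE' n
    · cases hroot

theorem orth_acc : ∀ (A : Formula) {E : Stack}, Orth A E → SNs E := by
  intro A
  induction A with
  | var m =>
      intro E h
      cases E with
      | nil => exact acc_nil
      | cons f E => cases f <;> simp [Orth] at h
  | bot =>
      intro E h
      cases E with
      | nil => exact acc_nil
      | cons f E => cases f <;> simp [Orth] at h
  | imp A B ihA ihB =>
      intro E h
      cases E with
      | nil => exact acc_nil
      | cons f E =>
          cases f with
          | app N =>
              obtain ⟨hN, hE⟩ := h
              have hSN : SN N := by
                have := hN [] (orth_nil A); simpa [plug] using this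
              exact acc_app hSN (ihB hE)
          | fst => simp [Orth] at h
          | snd => simp [Orth] at h
          | cas φ N₁ ψ N₂ ρ => simp [Orth] at h
  | conj A B ihA ihB =>
      intro E h
      cases E with
      | nil => exact acc_nil
      | cons f E =>
          cases f with
          | app N => simp [Orth] at h
          | fst => exact acc_fst (ihA h)
          | snd => exact acc_snd (ihB h)
          | cas φ N₁ ψ N₂ ρ => simp [Orth] at h
  | disj A B ihA ihB =>
      intro E h
      cases E with
      | nil => exact acc_nil
      | cons f E =>
          cases f with
          | app N => simp [Orth] at h
          | fst => simp [Orth] at h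
          | snd => simp [Orth] at h
          | cas φ N₁ ψ N₂ ρ =>
              obtain ⟨rfl, rfl, h1, h2⟩ := h
              exact acc_cas E.length E rfl _ _ _ _ _
                (h1 (.var 0) (fun F hF => acc_var (ihA hF) 0))
                (h2 (.var 0) (fun F hF => acc_var (ihB hF) 0))

theorem var_red (A : Formula) (n : ℕ) : Red A (.var n) :=
  fun _ hE => acc_var (orth_acc A hE) n

/-! # Part 1f: reducibility of introductions -/

theorem sn_lam {φ : Formula} {M : Tm} (h : SN M) : SN (.lam φ M) := by
  induction h with
  | intro M hM ih =>
    constructor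
    intro Y hY
    cases hY with
    | congr_lam s => exact ih _ s

theorem sn_pair {M : Tm} (hM : SN M) : ∀ {N : Tm}, SN N → SN (.pair M N) := by
  induction hM with
  | intro M hM' ihM =>
    intro N hN
    induction hN with
    | intro N hN' ihN =>
      constructor
      intro Y hY
      cases hY with
      | congr_pair_l s => exact ihM _ s (Acc.intro N hN')
      | congr_pair_r s => exact ihN _ s

theorem sn_inl {M : Tm} (h : SN M) : SN (.inl M) := by
  induction h with
  | intro M hM ih =>
    constructor
    intro Y hY
    cases hY with
    | congr_inl s => exact ih _ s

theorem sn_inr {M : Tm} (h : SN M) : SN (.inr M) := by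
  induction h with
  | intro M hM ih =>
    constructor
    intro Y hY
    cases hY with
    | congr_inr s => exact ih _ s

theorem red_lam_aux {A B φ : Formula} : ∀ (n : ℕ) (E : Stack), E.length = n → SNs E →
    ∀ L, SN L → ∀ N, SN N →
    (∀ P, Red A P → Red B (subst 0 P L)) → Red A N → Orth B E →
    SN (plug E (.app (.lam φ L) N)) := by
  intro n
  induction n using Nat.strong_induction_on with
  | _ n ihn =>
    intro E hlen hEs
    revert hlen
    induction hEs with
    | intro E hE' ihE =>
      intro hlen L hL
      induction hL with
      | intro L hL' ihL =>
        intro N hN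
        induction hN with
        | intro N hN' ihN =>
          intro hβ hRN hOB
          constructor
          intro Y hY
          rcases step_plug_inv hY with ⟨M', hM', rfl⟩ | ⟨E', hEs', rfl⟩ |
            ⟨f, E', Z, rfl, hroot, rfl⟩
          · cases hM' with
            | beta_imp => exact hβ N hRN E hOB
            | congr_app_l s =>
                cases s with
                | congr_lam sL =>
                    exact ihL _ sL N (Acc.intro N hN')
                      (fun P hP => red_step (hβ P hP) (step_subst sL 0 P)) hRN hOB
            | congr_app_r s => exact ihN _ s hβ (red_step hRN s) hOB
          · rcases hEs' with hs | hp
            · exact ihE E' (Or.inl hs) (by rw [sstep_len hs, hlen]) L (Acc.intro L hL')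
                N (Acc.intro N hN') hβ hRN (orth_sred hOB (Or.inl hs))
            · refine ihn E'.length (by rw [← hlen]; exact pstep_len hp) E' rfl
                (hE' E' (Or.inr hp)) L (Acc.intro L hL') N (Acc.intro N hN') hβ hRN
                (orth_sred hOB (Or.inr hp))
          · cases hroot

theorem red_lam {A B φ : Formula} {L : Tm}
    (hβ : ∀ P, Red A P → Red B (subst 0 P L)) : Red (.imp A B) (.lam φ L) := by
  have hSNL : SN L := by
    have h0 : SN (subst 0 (.var 0) L) := red_sn (hβ (.var 0) (var_red A 0))
    exact sn_of_sim (subst 0 (.var 0)) (fun x y s => step_subst s 0 _) h0 rfl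
  intro E hE
  cases E with
  | nil => exact sn_lam hSNL
  | cons f E =>
      cases f with
      | app N =>
          obtain ⟨hN, hE⟩ := hE
          have hRN : Red A N := hN
          exact red_lam_aux E.length E rfl (orth_acc B hE) L hSNL N (red_sn hRN) hβ hRN hE
      | fst => simp [Orth] at hE
      | snd => simp [Orth] at hE
      | cas φ' N₁ ψ' N₂ ρ => simp [Orth] at hE

theorem red_fst_aux {A : Formula} : ∀ (n : ℕ) (E : Stack), E.length = n → SNs E →
    ∀ M, SN M → ∀ N, SN N → Red A M → Orth A E →
    SN (plug E (.fst (.pair M N))) := by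
  intro n
  induction n using Nat.strong_induction_on with
  | _ n ihn =>
    intro E hlen hEs
    revert hlen
    induction hEs with
    | intro E hE' ihE =>
      intro hlen M hM
      induction hM with
      | intro M hM' ihM =>
        intro N hN
        induction hN with
        | intro N hN' ihN =>
          intro hRM hOA
          constructor
          intro Y hY
          rcases step_plug_inv hY with ⟨M', hM'', rfl⟩ | ⟨E', hEs', rfl⟩ |
            ⟨f, E', Z, rfl, hroot, rfl⟩
          · cases hM'' with
            | beta_fst => exact hRM E hOA
            | congr_fst s =>
                cases s with
                | congr_pair_l sM =>
                    exact ihM _ sM N (Acc.intro N hN') (red_step hRM sM) hOA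
                | congr_pair_r sN => exact ihN _ sN hRM hOA
          · rcases hEs' with hs | hp
            · exact ihE E' (Or.inl hs) (by rw [sstep_len hs, hlen]) M (Acc.intro M hM')
                N (Acc.intro N hN') hRM (orth_sred hOA (Or.inl hs))
            · exact ihn E'.length (by rw [← hlen]; exact pstep_len hp) E' rfl
                (hE' E' (Or.inr hp)) M (Acc.intro M hM') N (Acc.intro N hN') hRM
                (orth_sred hOA (Or.inr hp))
          · cases hroot

theorem red_snd_aux {B : Formula} : ∀ (n : ℕ) (E : Stack), E.length = n → SNs E →
    ∀ M, SN M → ∀ N, SN N → Red B N → Orth B E →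
    SN (plug E (.snd (.pair M N))) := by
  intro n
  induction n using Nat.strong_induction_on with
  | _ n ihn =>
    intro E hlen hEs
    revert hlen
    induction hEs with
    | intro E hE' ihE =>
      intro hlen M hM
      induction hM with
      | intro M hM' ihM =>
        intro N hN
        induction hN with
        | intro N hN' ihN =>
          intro hRN hOB
          constructor
          intro Y hY
          rcases step_plug_inv hY with ⟨M', hM'', rfl⟩ | ⟨E', hEs', rfl⟩ |
            ⟨f, E', Z, rfl, hroot, rfl⟩
          · cases hM'' with
            | beta_snd => exact hRN E hOB
            | congr_snd s =>
                cases s with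
                | congr_pair_l sM =>
                    exact ihM _ sM N (Acc.intro N hN') hRN hOB
                | congr_pair_r sN => exact ihN _ sN (red_step hRN sN) hOB
          · rcases hEs' with hs | hp
            · exact ihE E' (Or.inl hs) (by rw [sstep_len hs, hlen]) M (Acc.intro M hM')
                N (Acc.intro N hN') hRN (orth_sred hOB (Or.inl hs))
            · exact ihn E'.length (by rw [← hlen]; exact pstep_len hp) E' rfl
                (hE' E' (Or.inr hp)) M (Acc.intro M hM') N (Acc.intro N hN') hRN
                (orth_sred hOB (Or.inr hp))
          · cases hroot

theorem red_pair {A B : Formula} {M N : Tm} (hM : Red A M) (hN : Red B N) :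
    Red (.conj A B) (.pair M N) := by
  intro E hE
  cases E with
  | nil =>
      have : SN (.pair M N) := sn_pair (red_sn hM) (red_sn hN)
      simpa [plug] using this
  | cons f E =>
      cases f with
      | app N' => simp [Orth] at hE
      | fst => exact red_fst_aux E.length E rfl (orth_acc A hE) M (red_sn hM) N (red_sn hN) hM hE
      | snd => exact red_snd_aux E.length E rfl (orth_acc B hE) M (red_sn hM) N (red_sn hN) hN hE
      | cas φ' N₁ ψ' N₂ ρ => simp [Orth] at hE

theorem red_inl_aux {A B : Formula} : ∀ (n : ℕ) (E : Stack), E.length = n → SNs E →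
    ∀ M, SN M → Red A M → Orth (.disj A B) E → SN (plug E (.inl M)) := by
  intro n
  induction n using Nat.strong_induction_on with
  | _ n ihn =>
    intro E hlen hEs
    revert hlen
    induction hEs with
    | intro E hE' ihE =>
      intro hlen M hM
      induction hM with
      | intro M hM' ihM =>
        intro hRM hO
        constructor
        intro Y hY
        rcases step_plug_inv hY with ⟨M', hM'', rfl⟩ | ⟨E', hEs', rfl⟩ |
          ⟨f, E', Z, rfl, hroot, rfl⟩
        · cases hM'' with
          | congr_inl s => exact ihM _ s (red_step hRM s) hO
        · rcases hEs' with hs | hp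
          · exact ihE E' (Or.inl hs) (by rw [sstep_len hs, hlen]) M (Acc.intro M hM')
              hRM (orth_sred hO (Or.inl hs))
          · exact ihn E'.length (by rw [← hlen]; exact pstep_len hp) E' rfl
              (hE' E' (Or.inr hp)) M (Acc.intro M hM') hRM (orth_sred hO (Or.inr hp))
        · cases hroot with
          | beta_inl =>
              obtain ⟨rfl, rfl, h1, h2⟩ := hO
              exact h1 M hRM

theorem red_inr_aux {A B : Formula} : ∀ (n : ℕ) (E : Stack), E.length = n → SNs E →
    ∀ M, SN M → Red B M → Orth (.disj A B) E → SN (plug E (.inr M)) := by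
  intro n
  induction n using Nat.strong_induction_on with
  | _ n ihn =>
    intro E hlen hEs
    revert hlen
    induction hEs with
    | intro E hE' ihE =>
      intro hlen M hM
      induction hM with
      | intro M hM' ihM =>
        intro hRM hO
        constructor
        intro Y hY
        rcases step_plug_inv hY with ⟨M', hM'', rfl⟩ | ⟨E', hEs', rfl⟩ |
          ⟨f, E', Z, rfl, hroot, rfl⟩
        · cases hM'' with
          | congr_inr s => exact ihM _ s (red_step hRM s) hO
        · rcases hEs' with hs | hp
          · exact ihE E' (Or.inl hs) (by rw [sstep_len hs, hlen]) M (Acc.intro M hM')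
              hRM (orth_sred hO (Or.inl hs))
          · exact ihn E'.length (by rw [← hlen]; exact pstep_len hp) E' rfl
              (hE' E' (Or.inr hp)) M (Acc.intro M hM') hRM (orth_sred hO (Or.inr hp))
        · cases hroot with
          | beta_inr =>
              obtain ⟨rfl, rfl, h1, h2⟩ := hO
              exact h2 M hRM

theorem red_inl {A B : Formula} {M : Tm} (hM : Red A M) : Red (.disj A B) (.inl M) :=
  fun E hE => red_inl_aux E.length E rfl (orth_acc _ hE) M (red_sn hM) hM hE

theorem red_inr {A B : Formula} {M : Tm} (hM : Red B M) : Red (.disj A B) (.inr M) :=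
  fun E hE => red_inr_aux E.length E rfl (orth_acc _ hE) M (red_sn hM) hM hE

/-! # Part 1g: the fundamental theorem (for abort-free terms) -/

def NoAbort : Tm → Prop
  | .var _ => True
  | .abort _ _ => False
  | .lam _ M => NoAbort M
  | .app M N => NoAbort M ∧ NoAbort N
  | .pair M N => NoAbort M ∧ NoAbort N
  | .fst M => NoAbort M
  | .snd M => NoAbort M
  | .inl M => NoAbort M
  | .inr M => NoAbort M
  | .case M _ N₁ _ N₂ _ => NoAbort M ∧ NoAbort N₁ ∧ NoAbort N₂

theorem fund : ∀ {Γ M A}, Typing Γ M A → NoAbort M →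
    ∀ σ : ℕ → Tm, (∀ n φ, Γ[n]? = some φ → Red φ (σ n)) → Red A (psubst σ M) := by
  intro Γ M A ht
  induction ht with
  | @var Γ n φ hget =>
      intro _ σ hσ
      have := hσ n φ hget
      simpa [psubst] using this
  | abort ht ih => intro hna; exact absurd hna (by simp [NoAbort])
  | @lam Γ φ ψ M ht ih =>
      intro hna σ hσ
      simp only [psubst]
      refine red_lam (fun P hP => ?_)
      rw [subst0_psubst]
      refine ih hna (scons P σ) (fun m φ' hget => ?_)
      cases m with
      | zero => rw [List.getElem?_cons_zero] at hget; injection hget with h; subst h; exact hP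
      | succ m => rw [List.getElem?_cons_succ] at hget; exact hσ m φ' hget
  | @app Γ M N φ ψ htM htN ihM ihN =>
      intro hna σ hσ E hE
      exact ihM hna.1 σ hσ (Frame.app (psubst σ N) :: E)
        ⟨fun F hF => ihN hna.2 σ hσ F hF, hE⟩
  | @pair Γ M N φ ψ htM htN ihM ihN =>
      intro hna σ hσ
      exact red_pair (ihM hna.1 σ hσ) (ihN hna.2 σ hσ)
  | @fst Γ M φ ψ ht ih =>
      intro hna σ hσ E hE
      exact ih hna σ hσ (Frame.fst :: E) hE
  | @snd Γ M φ ψ ht ih =>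
      intro hna σ hσ E hE
      exact ih hna σ hσ (Frame.snd :: E) hE
  | @inl Γ M φ ψ ht ih =>
      intro hna σ hσ
      exact red_inl (ih hna σ hσ)
  | @inr Γ M φ ψ ht ih =>
      intro hna σ hσ
      exact red_inr (ih hna σ hσ)
  | @case Γ M N₁ N₂ φ ψ ρ htM ht1 ht2 ihM ih1 ih2 =>
      intro hna σ hσ E hE
      refine ihM hna.1 σ hσ (Frame.cas φ (psubst (ups σ) N₁) ψ (psubst (ups σ) N₂) ρ :: E)
        ⟨rfl, rfl, fun P hP => ?_, fun P hP => ?_⟩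
      · rw [subst0_psubst]
        refine ih1 hna.2.1 (scons P σ) (fun m φ' hget => ?_) E hE
        cases m with
        | zero => rw [List.getElem?_cons_zero] at hget; injection hget with h; subst h; exact hP
        | succ m => rw [List.getElem?_cons_succ] at hget; exact hσ m φ' hget
      · rw [subst0_psubst]
        refine ih2 hna.2.2 (scons P σ) (fun m φ' hget => ?_) E hE
        cases m with
        | zero => rw [List.getElem?_cons_zero] at hget; injection hget with h; subst h; exact hP
        | succ m => rw [List.getElem?_cons_succ] at hget; exact hσ m φ' hget

theorem sn_typed_noabort {Γ M A} (ht : Typing Γ M A) (hna : NoAbort M) : SN M := by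
  have h := fund ht hna (fun n => .var n) (fun n φ _ => var_red φ n)
  rw [psubst_id] at h
  exact red_sn h

/-! # Part 2: translating `abort` away -/

def DD : Formula := .imp (.var 0) (.var 0)

def tf : Formula → Formula
  | .var n => .imp (.var n) (.var n)
  | .bot => .disj DD DD
  | .imp a b => .imp (tf a) (tf b)
  | .conj a b => .conj (tf a) (tf b)
  | .disj a b => .disj (tf a) (tf b)

def inh : Formula → Tm
  | .var n => .lam (.var n) (.var 0)
  | .bot => .inl (.lam (.var 0) (.var 0))
  | .imp a b => .lam (tf a) (inh b)
  | .conj a b => .pair (inh a) (inh b)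
  | .disj a b => .inl (inh a)

theorem inh_typing (φ : Formula) : ∀ Γ, Typing Γ (inh φ) (tf φ) := by
  induction φ with
  | var n =>
      intro Γ
      exact Typing.lam (Typing.var (by simp))
  | bot =>
      intro Γ
      exact Typing.inl (Typing.lam (Typing.var (by simp)))
  | imp a b iha ihb =>
      intro Γ
      exact Typing.lam (ihb _)
  | conj a b iha ihb =>
      intro Γ
      exact Typing.pair (iha _) (ihb _)
  | disj a b iha ihb =>
      intro Γ
      exact Typing.inl (iha _)

theorem inh_lift (φ : Formula) : ∀ d, lift d (inh φ) = inh φ := by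
  induction φ with
  | var n => intro d; simp [inh, lift]
  | bot => intro d; simp [inh, lift]
  | imp a b iha ihb => intro d; simp [inh, lift, ihb]
  | conj a b iha ihb => intro d; simp [inh, lift, iha, ihb]
  | disj a b iha ihb => intro d; simp [inh, lift, iha]

theorem inh_subst (φ : Formula) : ∀ k N, subst k N (inh φ) = inh φ := by
  induction φ with
  | var n => intro k N; simp [inh, subst]
  | bot => intro k N; simp [inh, subst]
  | imp a b iha ihb => intro k N; simp [inh, subst, ihb]
  | conj a b iha ihb => intro k N; simp [inh, subst, iha, ihb]
  | disj a b iha ihb => intro k N; simp [inh, subst, iha]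

theorem inh_noabort (φ : Formula) : NoAbort (inh φ) := by
  induction φ with
  | var n => simp [inh, NoAbort]
  | bot => simp [inh, NoAbort]
  | imp a b iha ihb => simpa [inh, NoAbort] using ihb
  | conj a b iha ihb => exact ⟨iha, ihb⟩
  | disj a b iha ihb => simpa [inh, NoAbort] using iha

def tr : Tm → Tm
  | .var n => .var n
  | .abort M θ => .case (tr M) DD (inh θ) DD (inh θ) (tf θ)
  | .lam φ M => .lam (tf φ) (tr M)
  | .app M N => .app (tr M) (tr N)
  | .pair M N => .pair (tr M) (tr N)
  | .fst M => .fst (tr M)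
  | .snd M => .snd (tr M)
  | .inl M => .inl (tr M)
  | .inr M => .inr (tr M)
  | .case M φ N₁ ψ N₂ ρ => .case (tr M) (tf φ) (tr N₁) (tf ψ) (tr N₂) (tf ρ)

theorem tr_typing : ∀ {Γ M A}, Typing Γ M A → Typing (Γ.map tf) (tr M) (tf A) := by
  intro Γ M A ht
  induction ht with
  | @var Γ n φ hget =>
      refine Typing.var ?_
      rw [List.getElem?_map, hget]; rfl
  | @abort Γ M φ ht ih =>
      exact Typing.case ih (inh_typing φ _) (inh_typing φ _)
  | lam ht ih => exact Typing.lam ih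
  | app htM htN ihM ihN => exact Typing.app ihM ihN
  | pair htM htN ihM ihN => exact Typing.pair ihM ihN
  | fst ht ih => exact Typing.fst ih
  | snd ht ih => exact Typing.snd ih
  | inl ht ih => exact Typing.inl ih
  | inr ht ih => exact Typing.inr ih
  | case htM ht1 ht2 ihM ih1 ih2 => exact Typing.case ihM ih1 ih2

theorem tr_noabort (M : Tm) : NoAbort (tr M) := by
  induction M with
  | var n => simp [tr, NoAbort]
  | abort M φ ih => exact ⟨ih, inh_noabort φ, inh_noabort φ⟩
  | lam φ M ih => exact ih
  | app M N ihM ihN => exact ⟨ihM, ihN⟩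
  | pair M N ihM ihN => exact ⟨ihM, ihN⟩
  | fst M ih => exact ih
  | snd M ih => exact ih
  | inl M ih => exact ih
  | inr M ih => exact ih
  | case M φ N₁ ψ N₂ ρ ihM ih1 ih2 => exact ⟨ihM, ih1, ih2⟩

/-! the simulation relation -/

inductive Sim : Tm → Tm → Prop
  | var (n) : Sim (.var n) (.var n)
  | abort {M m b₁ b₂} (θ) : Sim M m → Sim (.abort M θ) (.case m DD b₁ DD b₂ (tf θ))
  | lam {M m} (φ) : Sim M m → Sim (.lam φ M) (.lam (tf φ) m)
  | app {M m N n} : Sim M m → Sim N n → Sim (.app M N) (.app m n)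
  | pair {M m N n} : Sim M m → Sim N n → Sim (.pair M N) (.pair m n)
  | fst {M m} : Sim M m → Sim (.fst M) (.fst m)
  | snd {M m} : Sim M m → Sim (.snd M) (.snd m)
  | inl {M m} : Sim M m → Sim (.inl M) (.inl m)
  | inr {M m} : Sim M m → Sim (.inr M) (.inr m)
  | case {M m N₁ n₁ N₂ n₂} (φ ψ ρ) : Sim M m → Sim N₁ n₁ → Sim N₂ n₂ →
      Sim (.case M φ N₁ ψ N₂ ρ) (.case m (tf φ) n₁ (tf ψ) n₂ (tf ρ))

theorem sim_tr (M : Tm) : Sim M (tr M) := by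
  induction M with
  | var n => exact Sim.var n
  | abort M θ ih => exact Sim.abort θ ih
  | lam φ M ih => exact Sim.lam φ ih
  | app M N ihM ihN => exact Sim.app ihM ihN
  | pair M N ihM ihN => exact Sim.pair ihM ihN
  | fst M ih => exact Sim.fst ih
  | snd M ih => exact Sim.snd ih
  | inl M ih => exact Sim.inl ih
  | inr M ih => exact Sim.inr ih
  | case M φ N₁ ψ N₂ ρ ihM ih1 ih2 => exact Sim.case φ ψ ρ ihM ih1 ih2

theorem sim_rename {M m : Tm} (h : Sim M m) : ∀ ρ, Sim (rename ρ M) (rename ρ m) := by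
  induction h with
  | var n => intro ρ; exact Sim.var _
  | abort θ hM ih => intro ρ; exact Sim.abort θ (ih ρ)
  | lam φ hM ih => intro ρ; exact Sim.lam φ (ih _)
  | app hM hN ihM ihN => intro ρ; exact Sim.app (ihM ρ) (ihN ρ)
  | pair hM hN ihM ihN => intro ρ; exact Sim.pair (ihM ρ) (ihN ρ)
  | fst hM ih => intro ρ; exact Sim.fst (ih ρ)
  | snd hM ih => intro ρ; exact Sim.snd (ih ρ)
  | inl hM ih => intro ρ; exact Sim.inl (ih ρ)
  | inr hM ih => intro ρ; exact Sim.inr (ih ρ)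
  | case φ ψ ρ' hM h1 h2 ihM ih1 ih2 =>
      intro ρ; exact Sim.case φ ψ ρ' (ihM ρ) (ih1 _) (ih2 _)

theorem sim_lift {M m : Tm} (h : Sim M m) (d : ℕ) : Sim (lift d M) (lift d m) := by
  rw [lift_eq, lift_eq]; exact sim_rename h _

theorem sim_subst {M m : Tm} (h : Sim M m) :
    ∀ k {N n}, Sim N n → Sim (subst k N M) (subst k n m) := by
  induction h with
  | var j =>
      intro k N n hN
      simp only [subst]
      rcases Nat.lt_trichotomy j k with h' | h' | h'
      · simp [if_pos h']; exact Sim.var j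
      · subst h'; simp; exact hN
      · simp [if_neg (by omega : ¬ j < k), if_neg (by omega : j ≠ k)]; exact Sim.var _
  | abort θ hM ih =>
      intro k N n hN
      exact Sim.abort θ (ih k hN)
  | lam φ hM ih =>
      intro k N n hN
      exact Sim.lam φ (ih (k+1) (sim_lift hN 0))
  | app hM hN' ihM ihN =>
      intro k N n hN
      exact Sim.app (ihM k hN) (ihN k hN)
  | pair hM hN' ihM ihN =>
      intro k N n hN
      exact Sim.pair (ihM k hN) (ihN k hN)
  | fst hM ih => intro k N n hN; exact Sim.fst (ih k hN)
  | snd hM ih => intro k N n hN; exact Sim.snd (ih k hN)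
  | inl hM ih => intro k N n hN; exact Sim.inl (ih k hN)
  | inr hM ih => intro k N n hN; exact Sim.inr (ih k hN)
  | case φ ψ ρ hM h1 h2 ihM ih1 ih2 =>
      intro k N n hN
      exact Sim.case φ ψ ρ (ihM k hN) (ih1 (k+1) (sim_lift hN 0)) (ih2 (k+1) (sim_lift hN 0))

/-! # Part 2b: the simulation -/

theorem plus_congr {g : Tm → Tm} (hg : ∀ x y, Step x y → Step (g x) (g y)) :
    ∀ {a b}, Relation.TransGen Step a b → Relation.TransGen Step (g a) (g b) := by
  intro a b h
  induction h with
  | single s => exact Relation.TransGen.single (hg _ _ s)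
  | tail _ s ih => exact Relation.TransGen.tail ih (hg _ _ s)

theorem sim_step : ∀ {M M' m : Tm}, Sim M m → Step M M' →
    ∃ m', Relation.TransGen Step m m' ∧ Sim M' m' := by
  intro M M' m hsim hstep
  induction hstep generalizing m with
  | @beta_imp φ M N =>
      cases hsim with
      | app hf ha =>
          cases hf with
          | lam _ hM =>
              exact ⟨_, Relation.TransGen.single Step.beta_imp, sim_subst hM 0 ha⟩
  | beta_fst =>
      cases hsim with
      | fst hp =>
          cases hp with
          | pair hM hN => exact ⟨_, Relation.TransGen.single Step.beta_fst, hM⟩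
  | beta_snd =>
      cases hsim with
      | snd hp =>
          cases hp with
          | pair hM hN => exact ⟨_, Relation.TransGen.single Step.beta_snd, hN⟩
  | beta_inl =>
      cases hsim with
      | case _ _ _ hscrut h1 h2 =>
          cases hscrut with
          | inl hM =>
              exact ⟨_, Relation.TransGen.single Step.beta_inl, sim_subst h1 0 hM⟩
  | beta_inr =>
      cases hsim with
      | case _ _ _ hscrut h1 h2 =>
          cases hscrut with
          | inr hM =>
              exact ⟨_, Relation.TransGen.single Step.beta_inr, sim_subst h2 0 hM⟩
  | @perm_case_app M φ N₁ ψ N₂ α β P =>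
      cases hsim with
      | app hc hp =>
          cases hc with
          | case _ _ _ hM h1 h2 =>
              exact ⟨_, Relation.TransGen.single Step.perm_case_app,
                Sim.case φ ψ β hM (Sim.app h1 (sim_lift hp 0)) (Sim.app h2 (sim_lift hp 0))⟩
  | @perm_case_fst M φ N₁ ψ N₂ α β =>
      cases hsim with
      | fst hc =>
          cases hc with
          | case _ _ _ hM h1 h2 =>
              exact ⟨_, Relation.TransGen.single Step.perm_case_fst,
                Sim.case φ ψ α hM (Sim.fst h1) (Sim.fst h2)⟩
  | @perm_case_snd M φ N₁ ψ N₂ α β =>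
      cases hsim with
      | snd hc =>
          cases hc with
          | case _ _ _ hM h1 h2 =>
              exact ⟨_, Relation.TransGen.single Step.perm_case_snd,
                Sim.case φ ψ β hM (Sim.snd h1) (Sim.snd h2)⟩
  | @perm_case_abort M φ N₁ ψ N₂ θ =>
      cases hsim with
      | abort _ hc =>
          cases hc with
          | case _ _ _ hM h1 h2 =>
              exact ⟨_, Relation.TransGen.single Step.perm_case_case,
                Sim.case φ ψ θ hM (Sim.abort θ h1) (Sim.abort θ h2)⟩
  | @perm_case_case M φ N₁ ψ N₂ α β P Q s =>
      cases hsim with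
      | case _ _ _ hc hp hq =>
          cases hc with
          | case _ _ _ hM h1 h2 =>
              exact ⟨_, Relation.TransGen.single Step.perm_case_case,
                Sim.case φ ψ s hM (Sim.case α β s h1 (sim_lift hp 1) (sim_lift hq 1))
                  (Sim.case α β s h2 (sim_lift hp 1) (sim_lift hq 1))⟩
  | @perm_abort_app M α β N =>
      cases hsim with
      | app hab hn =>
          cases hab with
          | abort _ hM =>
              exact ⟨_, Relation.TransGen.single Step.perm_case_app, Sim.abort β hM⟩
  | @perm_abort_fst M α β =>
      cases hsim with
      | fst hab =>
          cases hab with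
          | abort _ hM =>
              exact ⟨_, Relation.TransGen.single Step.perm_case_fst, Sim.abort α hM⟩
  | @perm_abort_snd M α β =>
      cases hsim with
      | snd hab =>
          cases hab with
          | abort _ hM =>
              exact ⟨_, Relation.TransGen.single Step.perm_case_snd, Sim.abort β hM⟩
  | @perm_abort_abort M θ =>
      cases hsim with
      | abort _ hab =>
          cases hab with
          | abort _ hM =>
              exact ⟨_, Relation.TransGen.single Step.perm_case_case, Sim.abort θ hM⟩
  | @perm_abort_case M α β P Q s =>
      cases hsim with
      | case _ _ _ hab hp hq =>
          cases hab with
          | abort _ hM =>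
              exact ⟨_, Relation.TransGen.single Step.perm_case_case, Sim.abort s hM⟩
  | @congr_abort M M' φ h ih =>
      cases hsim with
      | abort _ hM =>
          obtain ⟨x', hx, hs'⟩ := ih hM
          exact ⟨_, plus_congr (fun _ _ s => Step.congr_case_scrut s) hx, Sim.abort _ hs'⟩
  | congr_lam h ih =>
      cases hsim with
      | lam _ hM =>
          obtain ⟨x', hx, hs'⟩ := ih hM
          exact ⟨_, plus_congr (fun _ _ s => Step.congr_lam s) hx, Sim.lam _ hs'⟩
  | congr_app_l h ih =>
      cases hsim with
      | app hM hN =>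
          obtain ⟨x', hx, hs'⟩ := ih hM
          exact ⟨_, plus_congr (fun _ _ s => Step.congr_app_l s) hx, Sim.app hs' hN⟩
  | congr_app_r h ih =>
      cases hsim with
      | app hM hN =>
          obtain ⟨x', hx, hs'⟩ := ih hN
          exact ⟨_, plus_congr (fun _ _ s => Step.congr_app_r s) hx, Sim.app hM hs'⟩
  | congr_pair_l h ih =>
      cases hsim with
      | pair hM hN =>
          obtain ⟨x', hx, hs'⟩ := ih hM
          exact ⟨_, plus_congr (fun _ _ s => Step.congr_pair_l s) hx, Sim.pair hs' hN⟩
  | congr_pair_r h ih =>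
      cases hsim with
      | pair hM hN =>
          obtain ⟨x', hx, hs'⟩ := ih hN
          exact ⟨_, plus_congr (fun _ _ s => Step.congr_pair_r s) hx, Sim.pair hM hs'⟩
  | congr_fst h ih =>
      cases hsim with
      | fst hM =>
          obtain ⟨x', hx, hs'⟩ := ih hM
          exact ⟨_, plus_congr (fun _ _ s => Step.congr_fst s) hx, Sim.fst hs'⟩
  | congr_snd h ih =>
      cases hsim with
      | snd hM =>
          obtain ⟨x', hx, hs'⟩ := ih hM
          exact ⟨_, plus_congr (fun _ _ s => Step.congr_snd s) hx, Sim.snd hs'⟩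
  | congr_inl h ih =>
      cases hsim with
      | inl hM =>
          obtain ⟨x', hx, hs'⟩ := ih hM
          exact ⟨_, plus_congr (fun _ _ s => Step.congr_inl s) hx, Sim.inl hs'⟩
  | congr_inr h ih =>
      cases hsim with
      | inr hM =>
          obtain ⟨x', hx, hs'⟩ := ih hM
          exact ⟨_, plus_congr (fun _ _ s => Step.congr_inr s) hx, Sim.inr hs'⟩
  | congr_case_scrut h ih =>
      cases hsim with
      | case _ _ _ hM h1 h2 =>
          obtain ⟨x', hx, hs'⟩ := ih hM
          exact ⟨_, plus_congr (fun _ _ s => Step.congr_case_scrut s) hx,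
            Sim.case _ _ _ hs' h1 h2⟩
  | congr_case_l h ih =>
      cases hsim with
      | case _ _ _ hM h1 h2 =>
          obtain ⟨x', hx, hs'⟩ := ih h1
          exact ⟨_, plus_congr (fun _ _ s => Step.congr_case_l s) hx,
            Sim.case _ _ _ hM hs' h2⟩
  | congr_case_r h ih =>
      cases hsim with
      | case _ _ _ hM h1 h2 =>
          obtain ⟨x', hx, hs'⟩ := ih h2
          exact ⟨_, plus_congr (fun _ _ s => Step.congr_case_r s) hx,
            Sim.case _ _ _ hM h1 hs'⟩

theorem acc_transGen {α : Sort*} {r : α → α → Prop} {a : α} (h : Acc r a) :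
    Acc (Relation.TransGen r) a := by
  induction h with
  | intro x _ ih =>
    constructor
    intro y hy
    cases hy with
    | single hr => exact ih y hr
    | tail hyb hbx => exact (ih _ hbx).inv hyb

theorem transGen_swap {a b : Tm} (h : Relation.TransGen Step a b) :
    Relation.TransGen (fun x y => Step y x) b a := by
  induction h with
  | single s => exact Relation.TransGen.single s
  | tail _ s ih => exact Relation.TransGen.head s ih

theorem sn_sim : ∀ {m : Tm}, SN m → ∀ {M : Tm}, Sim M m → SN M := by
  intro m hm
  have h2 : Acc (Relation.TransGen (fun a b => Step b a)) m := acc_transGen hm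
  clear hm
  induction h2 with
  | intro m _ ih =>
    intro M hsim
    constructor
    intro Y hY
    obtain ⟨m', hplus, hsim'⟩ := sim_step hsim hY
    exact ih m' (transGen_swap hplus) hsim'

/-- Strong normalisation: there is no infinite reduction sequence
`M₁ → M₂ → ⋯` starting from a well-typed term of `Λᵖ`. -/
theorem strong_normalisation {Γ : List Formula} {σ : Formula} (f : ℕ → Tm)
    (hty : Typing Γ (f 0) σ) (hstep : ∀ n : ℕ, Step (f n) (f (n + 1))) : False := by
  have hsn : SN (f 0) :=
    sn_sim (sn_typed_noabort (tr_typing hty) (tr_noabort (f 0))) (sim_tr (f 0))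
  exact sn_no_chain hsn f rfl hstep

end IPCStmt2
end

section
/- Let (x : ψ) ∈ Γ and let T ∈ TR(α, ψ) be a trace to α in ψ. If Γ ⊢ ρ for all ρ ∈ T, then Γ ⊢ xE₁…Eₙ : α for some n ≥ 0, where each Eᵢ is a term or a projection π₁, π₂. -/
set_option autoImplicit true

namespace IPCStmt4

inductive Formula : Type
  | var : ℕ → Formula
  | bot : Formula
  | imp : Formula → Formula → Formula
  | conj : Formula → Formula → Formula
  | disj : Formula → Formula → Formula
  deriving DecidableEq

/-- Proof terms of IPC (Church style, de Bruijn indices).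
`abort M φ` is the ⊥-eliminator `M[φ]`, `case M φ N₁ ψ N₂ ρ` is the
∨-eliminator `M[x:φ.N₁; y:ψ.N₂]` annotated with its result type ρ. -/
inductive Tm : Type
  | var : ℕ → Tm
  | abort : Tm → Formula → Tm
  | lam : Formula → Tm → Tm
  | app : Tm → Tm → Tm
  | pair : Tm → Tm → Tm
  | fst : Tm → Tm
  | snd : Tm → Tm
  | inl : Tm → Tm
  | inr : Tm → Tm
  | case : Tm → Formula → Tm → Formula → Tm → Formula → Tm
  deriving DecidableEq

/-- Natural deduction for IPC as a type assignment system. -/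
inductive Typing : List Formula → Tm → Formula → Prop
  | var {Γ n φ} : Γ[n]? = some φ → Typing Γ (.var n) φ
  | abort {Γ M φ} : Typing Γ M .bot → Typing Γ (.abort M φ) φ
  | lam {Γ φ ψ M} : Typing (φ :: Γ) M ψ → Typing Γ (.lam φ M) (.imp φ ψ)
  | app {Γ M N φ ψ} : Typing Γ M (.imp φ ψ) → Typing Γ N φ → Typing Γ (.app M N) ψ
  | pair {Γ M N φ ψ} : Typing Γ M φ → Typing Γ N ψ → Typing Γ (.pair M N) (.conj φ ψ)
  | fst {Γ M φ ψ} : Typing Γ M (.conj φ ψ) → Typing Γ (.fst M) φ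
  | snd {Γ M φ ψ} : Typing Γ M (.conj φ ψ) → Typing Γ (.snd M) ψ
  | inl {Γ M φ ψ} : Typing Γ M φ → Typing Γ (.inl M) (.disj φ ψ)
  | inr {Γ M φ ψ} : Typing Γ M ψ → Typing Γ (.inr M) (.disj φ ψ)
  | case {Γ M N₁ N₂ φ ψ ρ} : Typing Γ M (.disj φ ψ) → Typing (φ :: Γ) N₁ ρ →
      Typing (ψ :: Γ) N₂ ρ → Typing Γ (.case M φ N₁ ψ N₂ ρ) ρ


/-- The set `TG(φ)` of targets of `φ`. -/
def TG : Formula → Set Formula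
  | .var p => {.var p}
  | .bot => {.bot}
  | .imp _ σ => TG σ
  | .disj τ σ => {.disj τ σ}
  | .conj τ σ => TG τ ∪ TG σ

/-- The family `TR(α, φ)` of traces to `α` in `φ`; each trace is a set of formulas. -/
def TR (α : Formula) : Formula → Set (Set Formula)
  | .var p => if α = .var p then {∅} else ∅
  | .bot => if α = .bot then {∅} else ∅
  | .disj τ σ => if α = .disj τ σ then {∅} else ∅
  | .imp τ σ => {S | ∃ T ∈ TR α σ, S = insert τ T}
  | .conj τ σ => TR α τ ∪ TR α σ

/-- `SpineOf i M`: `M` has the shape `x E₁ … Eₙ` (`n ≥ 0`) where `x` is the variable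
with de Bruijn index `i` and every `Eᵢ` is a term or a projection `π₁`, `π₂`. -/
inductive SpineOf (i : ℕ) : Tm → Prop
  | head : SpineOf i (.var i)
  | app {M N} : SpineOf i M → SpineOf i (.app M N)
  | fst {M} : SpineOf i M → SpineOf i (.fst M)
  | snd {M} : SpineOf i M → SpineOf i (.snd M)

lemma aux_trace : ∀ (ψ : Formula) {Γ : List Formula} {i : ℕ} {M : Tm} {α : Formula}
    {T : Set Formula}, SpineOf i M → Typing Γ M ψ → T ∈ TR α ψ →
    (∀ ρ ∈ T, ∃ P : Tm, Typing Γ P ρ) → ∃ M' : Tm, SpineOf i M' ∧ Typing Γ M' α := by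
  intro ψ
  induction ψ with
  | var p =>
    intro Γ i M α T hs ht hT _
    simp only [TR] at hT
    split at hT
    · rename_i h; subst h; exact ⟨M, hs, ht⟩
    · exact absurd hT (Set.notMem_empty _)
  | bot =>
    intro Γ i M α T hs ht hT _
    simp only [TR] at hT
    split at hT
    · rename_i h; subst h; exact ⟨M, hs, ht⟩
    · exact absurd hT (Set.notMem_empty _)
  | disj τ σ _ _ =>
    intro Γ i M α T hs ht hT _
    simp only [TR] at hT
    split at hT
    · rename_i h; subst h; exact ⟨M, hs, ht⟩
    · exact absurd hT (Set.notMem_empty _)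
  | imp τ σ _ ihσ =>
    intro Γ i M α T hs ht hT hall
    obtain ⟨T', hT', rfl⟩ := hT
    obtain ⟨P, hP⟩ := hall τ (Set.mem_insert _ _)
    exact ihσ (hs.app) (ht.app hP) hT'
      (fun ρ hρ => hall ρ (Set.mem_insert_of_mem _ hρ))
  | conj τ σ ihτ ihσ =>
    intro Γ i M α T hs ht hT hall
    rcases hT with hT | hT
    · exact ihτ (hs.fst) (ht.fst) hT hall
    · exact ihσ (hs.snd) (ht.snd) hT hall

/-- if `(x : ψ) ∈ Γ`, `T ∈ TR(α, ψ)`, and `Γ ⊢ ρ` for all `ρ ∈ T`,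
then `Γ ⊢ x E₁ … Eₙ : α` for some eliminators `E₁, …, Eₙ` (terms or projections). -/
theorem trace_application {Γ : List Formula} {i : ℕ} {ψ α : Formula} {T : Set Formula}
    (hx : Γ[i]? = some ψ) (hT : T ∈ TR α ψ)
    (hall : ∀ ρ ∈ T, ∃ P : Tm, Typing Γ P ρ) :
    ∃ M : Tm, SpineOf i M ∧ Typing Γ M α := by
  exact aux_trace ψ (.head) (.var hx) hT hall

end IPCStmt4
end

section
/- Assume (x : ψ) ∈ Γ and Γ ⊢ xE₁…Eₘ : φ where each Eᵢ is a term or a projection and φ is an atom or a disjunction. Let J = {j | Eⱼ is a term}, let Γ ⊢ Eⱼ : σⱼ for all j ∈ J, and set T = {σⱼ | j ∈ J}. Then φ ∈ TG(ψ) and T ∈ TR(φ, ψ). -/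
set_option autoImplicit true

namespace IPCStmt5

inductive Formula : Type
  | var : ℕ → Formula
  | bot : Formula
  | imp : Formula → Formula → Formula
  | conj : Formula → Formula → Formula
  | disj : Formula → Formula → Formula
  deriving DecidableEq

/-- Proof terms of IPC (Church style, de Bruijn indices).
`abort M φ` is the ⊥-eliminator `M[φ]`, `case M φ N₁ ψ N₂ ρ` is the
∨-eliminator `M[x:φ.N₁; y:ψ.N₂]` annotated with its result type ρ. -/
inductive Tm : Type
  | var : ℕ → Tm
  | abort : Tm → Formula → Tm
  | lam : Formula → Tm → Tm
  | app : Tm → Tm → Tm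
  | pair : Tm → Tm → Tm
  | fst : Tm → Tm
  | snd : Tm → Tm
  | inl : Tm → Tm
  | inr : Tm → Tm
  | case : Tm → Formula → Tm → Formula → Tm → Formula → Tm
  deriving DecidableEq

/-- Natural deduction for IPC as a type assignment system. -/
inductive Typing : List Formula → Tm → Formula → Prop
  | var {Γ n φ} : Γ[n]? = some φ → Typing Γ (.var n) φ
  | abort {Γ M φ} : Typing Γ M .bot → Typing Γ (.abort M φ) φ
  | lam {Γ φ ψ M} : Typing (φ :: Γ) M ψ → Typing Γ (.lam φ M) (.imp φ ψ)
  | app {Γ M N φ ψ} : Typing Γ M (.imp φ ψ) → Typing Γ N φ → Typing Γ (.app M N) ψ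
  | pair {Γ M N φ ψ} : Typing Γ M φ → Typing Γ N ψ → Typing Γ (.pair M N) (.conj φ ψ)
  | fst {Γ M φ ψ} : Typing Γ M (.conj φ ψ) → Typing Γ (.fst M) φ
  | snd {Γ M φ ψ} : Typing Γ M (.conj φ ψ) → Typing Γ (.snd M) ψ
  | inl {Γ M φ ψ} : Typing Γ M φ → Typing Γ (.inl M) (.disj φ ψ)
  | inr {Γ M φ ψ} : Typing Γ M ψ → Typing Γ (.inr M) (.disj φ ψ)
  | case {Γ M N₁ N₂ φ ψ ρ} : Typing Γ M (.disj φ ψ) → Typing (φ :: Γ) N₁ ρ →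
      Typing (ψ :: Γ) N₂ ρ → Typing Γ (.case M φ N₁ ψ N₂ ρ) ρ


/-- The set `TG(φ)` of targets of `φ`. -/
def TG : Formula → Set Formula
  | .var p => {.var p}
  | .bot => {.bot}
  | .imp _ σ => TG σ
  | .disj τ σ => {.disj τ σ}
  | .conj τ σ => TG τ ∪ TG σ

/-- The family `TR(α, φ)` of traces to `α` in `φ`; each trace is a set of formulas. -/
def TR (α : Formula) : Formula → Set (Set Formula)
  | .var p => if α = .var p then {∅} else ∅
  | .bot => if α = .bot then {∅} else ∅
  | .disj τ σ => if α = .disj τ σ then {∅} else ∅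
  | .imp τ σ => {S | ∃ T ∈ TR α σ, S = insert τ T}
  | .conj τ σ => TR α τ ∪ TR α σ

def Formula.isAtom : Formula → Prop
  | .var _ => True
  | .bot => True
  | _ => False

def Formula.isDisj : Formula → Prop
  | .disj _ _ => True
  | _ => False

/-- An eliminator: a term argument (recorded together with its type) or a projection. -/
inductive Elim : Type
  | app : Tm → Formula → Elim
  | fst : Elim
  | snd : Elim

/-- `applyElims M es` is the term `M E₁ … Eₘ`. -/
def applyElims : Tm → List Elim → Tm
  | M, [] => M
  | M, (.app N _) :: es => applyElims (.app M N) es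
  | M, .fst :: es => applyElims (.fst M) es
  | M, .snd :: es => applyElims (.snd M) es

/-- `ElimsTyping Γ ψ es φ`: starting from a head of type `ψ`, the sequence of
eliminators `es` is well typed in `Γ` and produces the type `φ`; each term
eliminator `Eⱼ` is recorded with its type `σⱼ` (so `Γ ⊢ Eⱼ : σⱼ`).  In particular,
if `Γ.get? i = some ψ` then `Γ ⊢ x E₁ … Eₘ : φ` for the head variable `x = i`. -/
inductive ElimsTyping (Γ : List Formula) : Formula → List Elim → Formula → Prop
  | nil {φ} : ElimsTyping Γ φ [] φ
  | app {N τ σ es φ} : Typing Γ N τ → ElimsTyping Γ σ es φ →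
      ElimsTyping Γ (.imp τ σ) (.app N τ :: es) φ
  | fst {τ σ es φ} : ElimsTyping Γ τ es φ → ElimsTyping Γ (.conj τ σ) (.fst :: es) φ
  | snd {τ σ es φ} : ElimsTyping Γ σ es φ → ElimsTyping Γ (.conj τ σ) (.snd :: es) φ

/-- if `(x : ψ) ∈ Γ` and `Γ ⊢ x E₁ … Eₘ : φ`, where each `Eᵢ` is a
term or a projection, `φ` is an atom or a disjunction, and `T` is the set of the
types of the term eliminators among `E₁, …, Eₘ`, then `φ ∈ TG(ψ)` and `T ∈ TR(φ, ψ)`. -/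
theorem targets_and_traces_of_spine {Γ : List Formula} {i : ℕ} {ψ φ : Formula}
    {es : List Elim} (hx : Γ[i]? = some ψ) (hty : ElimsTyping Γ ψ es φ)
    (hφ : φ.isAtom ∨ φ.isDisj) :
    φ ∈ TG ψ ∧ {σ : Formula | ∃ N : Tm, Elim.app N σ ∈ es} ∈ TR φ ψ := by
  clear hx
  induction hty with
  | nil =>
    rename_i φ'
    have hT : {σ : Formula | ∃ N : Tm, Elim.app N σ ∈ ([] : List Elim)} = ∅ := by
      ext σ'; simp
    rw [hT]
    rcases φ' with p | _ | ⟨τ, σ⟩ | ⟨τ, σ⟩ | ⟨τ, σ⟩ <;>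
      simp_all [TG, TR, Formula.isAtom, Formula.isDisj]
  | app hN hes ih =>
    obtain ⟨h1, h2⟩ := ih hφ
    refine ⟨h1, ?_⟩
    simp only [TR, Set.mem_setOf_eq]
    refine ⟨_, h2, ?_⟩
    ext σ'
    simp only [Set.mem_setOf_eq, Set.mem_insert_iff, List.mem_cons]
    constructor
    · rintro ⟨N', h | h⟩
      · cases h; exact Or.inl rfl
      · exact Or.inr ⟨N', h⟩
    · rintro (rfl | ⟨N', h⟩)
      · exact ⟨_, Or.inl rfl⟩
      · exact ⟨N', Or.inr h⟩
  | fst hes ih =>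
    obtain ⟨h1, h2⟩ := ih hφ
    refine ⟨Or.inl h1, Or.inl ?_⟩
    convert h2 using 1
    ext σ'; simp
  | snd hes ih =>
    obtain ⟨h1, h2⟩ := ih hφ
    refine ⟨Or.inr h1, Or.inr ?_⟩
    convert h2 using 1
    ext σ'; simp

end IPCStmt5
end

section
/- Subformula property of the Wajsberg algorithm: every formula occurring in any judgement produced during a run of the Wajsberg proof-search procedure started on Γ ⊢ φ is a subformula of a formula occurring in the initial judgement (i.e., of φ or of some formula of Γ). -/
/-!
Every formula of a call issued on `Γ ⊢ φ` is a subformula of `φ` or of a member of `Γ`: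
targets and traces of `ψ` consist of subformulas of `ψ`. As `Subf` is transitive, the subformula
closure is idempotent, so this property propagates along a whole run.
-/

set_option autoImplicit true

namespace IPCStmt7

inductive Formula : Type
  | var : ℕ → Formula
  | bot : Formula
  | imp : Formula → Formula → Formula
  | conj : Formula → Formula → Formula
  | disj : Formula → Formula → Formula
  deriving DecidableEq

def Formula.isAtom : Formula → Prop
  | .var _ => True
  | .bot => True
  | _ => False

def Formula.isDisj : Formula → Prop
  | .disj _ _ => True
  | _ => False

/-- The set `TG(φ)` of targets of `φ`. -/
def TG : Formula → Set Formula
  | .var p => {.var p}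
  | .bot => {.bot}
  | .imp _ σ => TG σ
  | .disj τ σ => {.disj τ σ}
  | .conj τ σ => TG τ ∪ TG σ

/-- The family `TR(α, φ)` of traces to `α` in `φ`; each trace is a set of formulas. -/
def TR (α : Formula) : Formula → Set (Set Formula)
  | .var p => if α = .var p then {∅} else ∅
  | .bot => if α = .bot then {∅} else ∅
  | .disj τ σ => if α = .disj τ σ then {∅} else ∅
  | .imp τ σ => {S | ∃ T ∈ TR α σ, S = insert τ T}
  | .conj τ σ => TR α τ ∪ TR α σ

/-- The subformula relation: `Subf ξ φ` means `ξ` is a subformula of `φ`. -/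
inductive Subf : Formula → Formula → Prop
  | refl {φ} : Subf φ φ
  | impL {ξ τ σ} : Subf ξ τ → Subf ξ (.imp τ σ)
  | impR {ξ τ σ} : Subf ξ σ → Subf ξ (.imp τ σ)
  | conjL {ξ τ σ} : Subf ξ τ → Subf ξ (.conj τ σ)
  | conjR {ξ τ σ} : Subf ξ σ → Subf ξ (.conj τ σ)
  | disjL {ξ τ σ} : Subf ξ τ → Subf ξ (.disj τ σ)
  | disjR {ξ τ σ} : Subf ξ σ → Subf ξ (.disj τ σ)

/-- One recursive call of the Wajsberg algorithm: `WACall (Γ, φ) (Δ, ψ)` means that,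
run on the judgement `Γ ⊢ φ`, the algorithm may issue the call `Δ ⊢ ψ`. -/
inductive WACall : Set Formula × Formula → Set Formula × Formula → Prop
  | conj1 {Γ τ σ} : WACall (Γ, .conj τ σ) (Γ, τ)
  | conj2 {Γ τ σ} : WACall (Γ, .conj τ σ) (Γ, σ)
  | imp {Γ τ σ} : WACall (Γ, .imp τ σ) (insert τ Γ, σ)
  | trace {Γ φ ψ α T ρ} :
      (φ.isAtom ∨ φ.isDisj) → ψ ∈ Γ → α ∈ TG ψ →
      (α.isDisj ∨ α = .bot ∨ ((∃ p, α = .var p) ∧ α = φ)) →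
      T ∈ TR α ψ → ρ ∈ T → WACall (Γ, φ) (Γ, ρ)
  | disj1 {Γ φ ψ β γ T} :
      (φ.isAtom ∨ φ.isDisj) → ψ ∈ Γ → .disj β γ ∈ TG ψ →
      T ∈ TR (.disj β γ) ψ → WACall (Γ, φ) (insert β Γ, φ)
  | disj2 {Γ φ ψ β γ T} :
      (φ.isAtom ∨ φ.isDisj) → ψ ∈ Γ → .disj β γ ∈ TG ψ →
      T ∈ TR (.disj β γ) ψ → WACall (Γ, φ) (insert γ Γ, φ)

theorem Subf.trans {ξ χ φ : Formula} (h₁ : Subf ξ χ) (h₂ : Subf χ φ) : Subf ξ φ := by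
  induction h₂ with
  | refl => exact h₁
  | impL _ ih => exact .impL ih
  | impR _ ih => exact .impR ih
  | conjL _ ih => exact .conjL ih
  | conjR _ ih => exact .conjR ih
  | disjL _ ih => exact .disjL ih
  | disjR _ ih => exact .disjR ih

theorem Subf.of_mem_TG {α ψ : Formula} (h : α ∈ TG ψ) : Subf α ψ := by
  induction ψ with
  | var | bot | disj =>
    simp only [TG, Set.mem_singleton_iff] at h
    exact h ▸ .refl
  | imp _ _ _ ih => exact .impR (ih h)
  | conj _ _ ih₁ ih₂ => exact h.elim (fun h => .conjL (ih₁ h)) (fun h => .conjR (ih₂ h))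

theorem Subf.of_mem_of_mem_TR {α ψ ρ : Formula} {T : Set Formula} (hT : T ∈ TR α ψ)
    (hρ : ρ ∈ T) : Subf ρ ψ := by
  induction ψ generalizing T with
  | var | bot | disj =>
    simp only [TR] at hT
    split at hT <;> simp_all
  | imp τ _ _ ih =>
    obtain ⟨S, hS, rfl⟩ := hT
    rcases hρ with rfl | hρ
    · exact .impL .refl
    · exact .impR (ih hS hρ)
  | conj _ _ ih₁ ih₂ => exact hT.elim (fun h => .conjL (ih₁ h hρ)) (fun h => .conjR (ih₂ h hρ))

def subformulaClosure (S : Set Formula) : Set Formula :=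
  {ξ | ∃ χ ∈ S, Subf ξ χ}

theorem subset_subformulaClosure (S : Set Formula) : S ⊆ subformulaClosure S :=
  fun χ hχ => ⟨χ, hχ, .refl⟩

theorem subformulaClosure_subset_of_subset {S T : Set Formula}
    (h : S ⊆ subformulaClosure T) : subformulaClosure S ⊆ subformulaClosure T := by
  rintro ξ ⟨χ, hχ, hξ⟩
  obtain ⟨θ, hθ, hχ⟩ := h hχ
  exact ⟨θ, hθ, hξ.trans hχ⟩

def formulasOf (J : Set Formula × Formula) : Set Formula :=
  insert J.2 J.1

theorem WACall.formulasOf_subset {J J' : Set Formula × Formula} (h : WACall J J') :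
    formulasOf J' ⊆ subformulaClosure (formulasOf J) := by
  have hΓ : ∀ {Γ : Set Formula} {φ}, Γ ⊆ subformulaClosure (insert φ Γ) :=
    fun hξ => subset_subformulaClosure _ (Set.mem_insert_of_mem _ hξ)
  have hφ : ∀ {Γ : Set Formula} {φ ξ}, Subf ξ φ → ξ ∈ subformulaClosure (insert φ Γ) :=
    fun hξ => ⟨_, Set.mem_insert _ _, hξ⟩
  have hmem : ∀ {Γ : Set Formula} {φ ψ ξ}, ψ ∈ Γ → Subf ξ ψ →
      ξ ∈ subformulaClosure (insert φ Γ) :=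
    fun hψ hξ => ⟨_, Set.mem_insert_of_mem _ hψ, hξ⟩
  cases h with
  | conj1 => exact Set.insert_subset (hφ (.conjL .refl)) hΓ
  | conj2 => exact Set.insert_subset (hφ (.conjR .refl)) hΓ
  | imp =>
    exact Set.insert_subset (hφ (.impR .refl)) (Set.insert_subset (hφ (.impL .refl)) hΓ)
  | trace _ hψ _ _ hT hρ => exact Set.insert_subset (hmem hψ (.of_mem_of_mem_TR hT hρ)) hΓ
  | disj1 _ hψ hα _ =>
    exact Set.insert_subset (hφ .refl)
      (Set.insert_subset (hmem hψ ((Subf.disjL .refl).trans (.of_mem_TG hα))) hΓ)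
  | disj2 _ hψ hα _ =>
    exact Set.insert_subset (hφ .refl)
      (Set.insert_subset (hmem hψ ((Subf.disjR .refl).trans (.of_mem_TG hα))) hΓ)

theorem WACall.subformulaClosure_subset_of_reflTransGen {J J' : Set Formula × Formula}
    (h : Relation.ReflTransGen WACall J J') :
    subformulaClosure (formulasOf J') ⊆ subformulaClosure (formulasOf J) := by
  induction h with
  | refl => exact subset_rfl
  | tail _ hstep ih => exact (subformulaClosure_subset_of_subset hstep.formulasOf_subset).trans ih

/-- subformula property of the Wajsberg algorithm: every formula
occurring in any judgement produced during a run of WA started on `Γ ⊢ φ` is a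
subformula of `φ` or of some formula of `Γ`. -/
theorem wajsberg_subformula_property {Γ Δ : Set Formula} {φ ψ : Formula}
    (h : Relation.ReflTransGen WACall (Γ, φ) (Δ, ψ)) :
    ∀ ξ : Formula, (ξ ∈ Δ ∨ ξ = ψ) → (Subf ξ φ ∨ ∃ γ ∈ Γ, Subf ξ γ) := by
  intro ξ hξ
  have hξ' : ξ ∈ formulasOf (Δ, ψ) := hξ.symm
  obtain ⟨χ, hχ, hsub⟩ := WACall.subformulaClosure_subset_of_reflTransGen h
    (subset_subformulaClosure _ hξ')
  rcases hχ with rfl | hγ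
  · exact .inl hsub
  · exact .inr ⟨χ, hγ, hsub⟩

end IPCStmt7
end

section
/- If a configuration ⟨q, S⟩ of a monotonic automaton with state set Q and register set R is accepting, then it admits an accepting computation tree along every branch of which all configurations are pairwise distinct; consequently every branch of this tree has length at most |Q|·(|R|+1). -/
set_option autoImplicit true

namespace IPCStmt9


/-- Instructions of a monotonic automaton:
`test q S₁ S₂ p` is `q : S₁? S₂↑ jmp p` and `branch q p₁ p₂` is `q : jmp p₁ or p₂`. -/
inductive Instr (Q R : Type) : Type
  | test : Q → Finset R → Finset R → Q → Instr Q R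
  | branch : Q → Q → Q → Instr Q R

/-- A monotonic automaton `⟨Q, R, f, I⟩` (the state and register sets are the
types `Q` and `R`, `final` is the final state, `instrs` the finite set of
instructions). -/
structure MonAut (Q R : Type) : Type where
  final : Q
  instrs : List (Instr Q R)

/-- Acceptance of configurations `⟨q, S⟩`: the least predicate closed under the
final state, type-(1) transitions, and universal type-(2) branching. -/
inductive Accepting {Q R : Type} [DecidableEq R] (A : MonAut Q R) : Q → Finset R → Prop
  | final {S} : Accepting A A.final S
  | test {q S S₁ S₂ p} : Instr.test q S₁ S₂ p ∈ A.instrs → S₁ ⊆ S →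
      Accepting A p (S ∪ S₂) → Accepting A q S
  | branch {q S p₁ p₂} : Instr.branch q p₁ p₂ ∈ A.instrs →
      Accepting A p₁ S → Accepting A p₂ S → Accepting A q S

/-- `AccDN A V n q S`: there is an accepting computation tree for the configuration
`⟨q, S⟩` in which, along every branch, all configurations are pairwise distinct and
avoid the set `V` of configurations already visited, and every branch contains at
most `n` configurations. -/
inductive AccDN {Q R : Type} [DecidableEq R] (A : MonAut Q R) :
    Set (Q × Finset R) → ℕ → Q → Finset R → Prop
  | final {V n S} : (A.final, S) ∉ V → AccDN A V (n + 1) A.final S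
  | test {V n q S S₁ S₂ p} : Instr.test q S₁ S₂ p ∈ A.instrs → S₁ ⊆ S → (q, S) ∉ V →
      AccDN A (insert (q, S) V) n p (S ∪ S₂) → AccDN A V (n + 1) q S
  | branch {V n q S p₁ p₂} : Instr.branch q p₁ p₂ ∈ A.instrs → (q, S) ∉ V →
      AccDN A (insert (q, S) V) n p₁ S → AccDN A (insert (q, S) V) n p₂ S →
      AccDN A V (n + 1) q S

/-- Depth-bounded acceptance. -/
inductive AccN {Q R : Type} [DecidableEq R] (A : MonAut Q R) : ℕ → Q → Finset R → Prop
  | final {n S} : AccN A (n + 1) A.final S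
  | test {n q S S₁ S₂ p} : Instr.test q S₁ S₂ p ∈ A.instrs → S₁ ⊆ S →
      AccN A n p (S ∪ S₂) → AccN A (n + 1) q S
  | branch {n q S p₁ p₂} : Instr.branch q p₁ p₂ ∈ A.instrs →
      AccN A n p₁ S → AccN A n p₂ S → AccN A (n + 1) q S

theorem accN_mono {Q R : Type} [DecidableEq R] {A : MonAut Q R} {n m : ℕ} {q : Q}
    {S : Finset R} (h : AccN A n q S) (hnm : n ≤ m) : AccN A m q S := by
  induction h generalizing m with
  | @final n S =>
    obtain ⟨k, rfl⟩ := Nat.exists_eq_add_of_le hnm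
    have he : n + 1 + k = (n + k) + 1 := by omega
    rw [he]
    exact AccN.final
  | @test n q S S₁ S₂ p hins hsub _ ih =>
    obtain ⟨k, rfl⟩ := Nat.exists_eq_add_of_le hnm
    have he : n + 1 + k = (n + k) + 1 := by omega
    rw [he]
    exact AccN.test hins hsub (ih (Nat.le_add_right n k))
  | @branch n q S p₁ p₂ hins _ _ ih₁ ih₂ =>
    obtain ⟨k, rfl⟩ := Nat.exists_eq_add_of_le hnm
    have he : n + 1 + k = (n + k) + 1 := by omega
    rw [he]
    exact AccN.branch hins (ih₁ (Nat.le_add_right n k)) (ih₂ (Nat.le_add_right n k))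

theorem accepting_accN {Q R : Type} [DecidableEq R] {A : MonAut Q R} {q : Q} {S : Finset R}
    (h : Accepting A q S) : ∃ n, AccN A n q S := by
  induction h with
  | final => exact ⟨1, AccN.final⟩
  | test hins hsub _ ih =>
    obtain ⟨n, hn⟩ := ih
    exact ⟨n + 1, AccN.test hins hsub hn⟩
  | branch hins _ _ ih₁ ih₂ =>
    obtain ⟨n₁, h₁⟩ := ih₁
    obtain ⟨n₂, h₂⟩ := ih₂
    exact ⟨max n₁ n₂ + 1, AccN.branch hins (accN_mono h₁ (le_max_left _ _))
      (accN_mono h₂ (le_max_right _ _))⟩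

/-- Counting: a finset of configurations whose register sets form a chain has
cardinality at most `|Q| * (|R| + 1)`. -/
theorem chain_card_bound {Q R : Type} [Fintype Q] [Fintype R] [DecidableEq R]
    [DecidableEq Q] (W : Finset (Q × Finset R))
    (hchain : ∀ x ∈ W, ∀ y ∈ W, x.2 ⊆ y.2 ∨ y.2 ⊆ x.2) :
    W.card ≤ Fintype.card Q * (Fintype.card R + 1) := by
  classical
  have h1 : W ⊆ (Finset.univ : Finset Q) ×ˢ (W.image Prod.snd) := by
    intro x hx
    simp only [Finset.mem_product, Finset.mem_univ, true_and, Finset.mem_image]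
    exact ⟨x, hx, rfl⟩
  have h2 : (W.image Prod.snd).card ≤ Fintype.card R + 1 := by
    have := Finset.card_le_card_of_injOn (f := Finset.card)
      (s := W.image Prod.snd) (t := Finset.range (Fintype.card R + 1))
      (fun T hT => by
        simp only [Finset.mem_coe, Finset.mem_range]
        exact Nat.lt_succ_of_le (T.card_le_univ.trans_eq (by simp)))
      (fun T hT T' hT' hcard => by
        simp only [Finset.coe_image, Set.mem_image, Finset.mem_coe] at hT hT'
        obtain ⟨x, hx, rfl⟩ := hT
        obtain ⟨y, hy, rfl⟩ := hT'
        rcases hchain x hx y hy with h | h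
        · exact Finset.eq_of_subset_of_card_le h (le_of_eq hcard.symm)
        · exact (Finset.eq_of_subset_of_card_le h (le_of_eq hcard)).symm)
    simpa using this
  calc W.card ≤ ((Finset.univ : Finset Q) ×ˢ (W.image Prod.snd)).card :=
        Finset.card_le_card h1
    _ = Fintype.card Q * (W.image Prod.snd).card := by
        simp [Finset.card_product, Finset.card_univ]
    _ ≤ Fintype.card Q * (Fintype.card R + 1) := Nat.mul_le_mul_left _ h2

theorem key {Q R : Type} [Fintype Q] [Fintype R] [DecidableEq R] [DecidableEq Q]
    (A : MonAut Q R) :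
    ∀ n (q : Q) (S : Finset R) (V : Finset (Q × Finset R)),
      AccN A n q S →
      (∀ p T, (p, T) ∈ V → ¬ AccN A n p T) →
      (∀ p T, (p, T) ∈ V → T ⊆ S) →
      (∀ p T p' T', (p, T) ∈ V → (p', T') ∈ V → T ⊆ T' ∨ T' ⊆ T) →
      AccDN A ↑V (Fintype.card Q * (Fintype.card R + 1) - V.card) q S := by
  intro n
  induction n using Nat.strong_induction_on with
  | _ n IH =>
  intro q S V hn hV hsub hchain
  by_cases hEx : ∃ m < n, AccN A m q S
  · obtain ⟨m, hmn, hm⟩ := hEx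
    exact IH m hmn q S V hm
      (fun p T hpT hacc => hV p T hpT (accN_mono hacc (le_of_lt hmn))) hsub hchain
  push_neg at hEx
  have hqS : (q, S) ∉ V := fun hin => hV q S hin hn
  have hbudget : V.card + 1 ≤ Fintype.card Q * (Fintype.card R + 1) := by
    have hb : (insert (q, S) V).card ≤ Fintype.card Q * (Fintype.card R + 1) := by
      apply chain_card_bound
      intro x hx y hy
      simp only [Finset.mem_insert] at hx hy
      rcases hx with rfl | hx <;> rcases hy with rfl | hy
      · left; rfl
      · right; exact hsub y.1 y.2 hy
      · left; exact hsub x.1 x.2 hx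
      · exact hchain x.1 x.2 y.1 y.2 hx hy
    rwa [Finset.card_insert_of_notMem hqS] at hb
  obtain ⟨c, hc⟩ : ∃ c, Fintype.card Q * (Fintype.card R + 1) - V.card = c + 1 :=
    ⟨Fintype.card Q * (Fintype.card R + 1) - V.card - 1, by omega⟩
  rw [hc]
  have hcard' : ∀ (x : Q × Finset R), x ∉ V →
      Fintype.card Q * (Fintype.card R + 1) - (insert x V).card = c := by
    intro x hx
    rw [Finset.card_insert_of_notMem hx]
    omega
  have hmem : ∀ {a : Q} {T : Finset R}, (a, T) ∈ insert (q, S) V →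
      (a = q ∧ T = S) ∨ (a, T) ∈ V := by
    intro a T h
    rcases Finset.mem_insert.mp h with h | h
    · exact Or.inl (Prod.ext_iff.mp h)
    · exact Or.inr h
  have hV' : ∀ k, k < n → ∀ p T, (p, T) ∈ insert (q, S) V → ¬ AccN A k p T := by
    intro k hk p T h hacc
    rcases hmem h with ⟨hpq, hTS⟩ | h
    · rw [hpq, hTS] at hacc
      exact hEx k hk hacc
    · exact hV p T h (accN_mono hacc (le_of_lt hk))
  have hsub' : ∀ p T, (p, T) ∈ insert (q, S) V → T ⊆ S := by
    intro p T h
    rcases hmem h with ⟨_, hTS⟩ | h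
    · rw [hTS]
    · exact hsub p T h
  have hchain' : ∀ pa T pb T', (pa, T) ∈ insert (q, S) V → (pb, T') ∈ insert (q, S) V →
      T ⊆ T' ∨ T' ⊆ T := by
    intro pa T pb T' h h'
    rcases hmem h with ⟨_, hTS⟩ | h <;> rcases hmem h' with ⟨_, hT'S⟩ | h'
    · left; rw [hTS, hT'S]
    · right; rw [hTS]; exact hsub pb T' h'
    · left; rw [hT'S]; exact hsub pa T h
    · exact hchain pa T pb T' h h'
  cases hn with
  | @final m S₀ =>
    exact AccDN.final (by simpa using hqS)
  | @test m q₀ S₀ S₁ S₂ p hins hS₁ hrec =>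
    have hm : m < m + 1 := Nat.lt_succ_self m
    refine AccDN.test hins hS₁ (by simpa using hqS) ?_
    rw [← Finset.coe_insert, ← hcard' (q, S) hqS]
    exact IH m hm p (S ∪ S₂) (insert (q, S) V) hrec (hV' m hm)
      (fun p' T h => (hsub' p' T h).trans Finset.subset_union_left) hchain'
  | @branch m q₀ S₀ p₁ p₂ hins hrec₁ hrec₂ =>
    have hm : m < m + 1 := Nat.lt_succ_self m
    have side : ∀ p', AccN A m p' S → AccDN A (insert (q, S) ↑V) c p' S := by
      intro p' hrec
      rw [← Finset.coe_insert, ← hcard' (q, S) hqS]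
      exact IH m hm p' S (insert (q, S) V) hrec (hV' m hm) hsub' hchain'
    exact AccDN.branch hins (by simpa using hqS) (side p₁ hrec₁) (side p₂ hrec₂)

/-- an accepting configuration of a monotonic automaton admits an
accepting computation tree along every branch of which all configurations are
pairwise distinct; consequently every branch has length at most `|Q| · (|R| + 1)`. -/
theorem accepting_short_tree {Q R : Type} [Fintype Q] [Fintype R] [DecidableEq R]
    (A : MonAut Q R) (q : Q) (S : Finset R) (h : Accepting A q S) :
    AccDN A ∅ (Fintype.card Q * (Fintype.card R + 1)) q S := by
  classical
  obtain ⟨n, hn⟩ := accepting_accN h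
  have := key A n q S ∅ hn (by simp) (by simp) (by simp)
  simpa using this

end IPCStmt9
end

section
/- Let M = ⟨Q, R, f, I⟩ be a monotonic automaton with Q ∩ R = ∅ and let ⟨q₀, S₀⟩ be a configuration. Using the states and registers as propositional atoms, let Γ consist of: the atoms S₀ ∪ {f}; for each type-(1) instruction q: S₁? S₂↑ jmp p with S₁ = {s¹₁,…,s^k₁} and S₂ = {s¹₂,…,s^ℓ₂}, the axiom s¹₁→⋯→s^k₁→(s¹₂→⋯→s^ℓ₂→p)→q; and for each type-(2) instruction q: jmp p₁ or p₂, the axiom p₁→p₂→q. Then for every S ⊆ R and q ∈ Q, Γ ∪ S ⊢ q is derivable in the implicational fragment of intuitionistic propositional logic if and only if ⟨q, S ∪ S₀⟩ is an accepting configuration of M. In particular ⟨q₀,S₀⟩ is accepting iff Γ ⊢ q₀, and every axiom in Γ has order at most two, so the formula Γ → q₀ has order at most three. -/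
set_option autoImplicit true

namespace IPCStmt10

/-- Implicational formulas (simple types). -/
inductive ITy : Type
  | var : ℕ → ITy
  | imp : ITy → ITy → ITy
  deriving DecidableEq

/-- `impList [σ₁, …, σₙ] τ = σ₁ → ⋯ → σₙ → τ`. -/
def impList : List ITy → ITy → ITy
  | [], τ => τ
  | σ :: σs, τ => .imp σ (impList σs τ)

/-- The order of an implicational formula: `r(atom) = 0` and
`r(σ → τ) = max (r σ + 1) (r τ)`, i.e. `r(σ₁→⋯→σₖ→p) = 1 + maxᵢ r(σᵢ)`. -/
def order : ITy → ℕ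
  | .var _ => 0
  | .imp σ τ => max (order σ + 1) (order τ)

/-- Intuitionistic natural deduction for the implicational fragment (IIPC):
the rules (var), (→I), (→E). -/
inductive IDeriv : List ITy → ITy → Prop
  | ax {Γ φ} : φ ∈ Γ → IDeriv Γ φ
  | impI {Γ φ ψ} : IDeriv (φ :: Γ) ψ → IDeriv Γ (.imp φ ψ)
  | impE {Γ φ ψ} : IDeriv Γ (.imp φ ψ) → IDeriv Γ φ → IDeriv Γ ψ

/-- Instructions of a monotonic automaton:
`test q S₁ S₂ p` is `q : S₁? S₂↑ jmp p` and `branch q p₁ p₂` is `q : jmp p₁ or p₂`. -/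
inductive Instr (Q R : Type) : Type
  | test : Q → Finset R → Finset R → Q → Instr Q R
  | branch : Q → Q → Q → Instr Q R

/-- A monotonic automaton `⟨Q, R, f, I⟩` (the state and register sets are the
types `Q` and `R`, `final` is the final state, `instrs` the finite set of
instructions). -/
structure MonAut (Q R : Type) : Type where
  final : Q
  instrs : List (Instr Q R)

/-- Acceptance of configurations `⟨q, S⟩`: the least predicate closed under the
final state, type-(1) transitions, and universal type-(2) branching. -/
inductive Accepting {Q R : Type} [DecidableEq R] (A : MonAut Q R) : Q → Finset R → Prop
  | final {S} : Accepting A A.final S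
  | test {q S S₁ S₂ p} : Instr.test q S₁ S₂ p ∈ A.instrs → S₁ ⊆ S →
      Accepting A p (S ∪ S₂) → Accepting A q S
  | branch {q S p₁ p₂} : Instr.branch q p₁ p₂ ∈ A.instrs →
      Accepting A p₁ S → Accepting A p₂ S → Accepting A q S

/-- The axiom corresponding to an instruction, reading states and registers as
propositional atoms (via `qA` and `rA`): a type-(1) instruction `q : S₁? S₂↑ jmp p`
becomes `s¹₁→⋯→sᵏ₁→(s¹₂→⋯→sˡ₂→p)→q`, and a type-(2) instruction `q : jmp p₁ or p₂`
becomes `p₁→p₂→q`. -/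
noncomputable def axiomOf {Q R : Type} (qA : Q → ℕ) (rA : R → ℕ) : Instr Q R → ITy
  | .test q S₁ S₂ p =>
      impList (S₁.toList.map fun r => ITy.var (rA r))
        (.imp (impList (S₂.toList.map fun r => ITy.var (rA r)) (.var (qA p)))
          (.var (qA q)))
  | .branch q p₁ p₂ => .imp (.var (qA p₁)) (.imp (.var (qA p₂)) (.var (qA q)))

/-- The context `Γ`: the atoms `S₀ ∪ {f}` together with the axioms for the
instructions of the automaton. -/
noncomputable def GammaOf {Q R : Type} (A : MonAut Q R) (qA : Q → ℕ) (rA : R → ℕ) (S₀ : Finset R) :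
    List ITy :=
  (S₀.toList.map fun r => ITy.var (rA r)) ++ [ITy.var (qA A.final)] ++
    A.instrs.map (axiomOf qA rA)

/-! ### Auxiliary lemmas -/

theorem iweaken {Γ : List ITy} {φ : ITy} (h : IDeriv Γ φ) :
    ∀ Δ, (∀ ψ ∈ Γ, ψ ∈ Δ) → IDeriv Δ φ := by
  induction h with
  | ax h => exact fun Δ hs => .ax (hs _ h)
  | @impI Γ φ ψ _ ih =>
      refine fun Δ hs => .impI (ih (φ :: Δ) ?_)
      intro χ hχ
      rcases List.mem_cons.1 hχ with rfl | hχ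
      · exact List.mem_cons_self
      · exact List.mem_cons_of_mem _ (hs _ hχ)
  | impE _ _ ih1 ih2 => exact fun Δ hs => .impE (ih1 Δ hs) (ih2 Δ hs)

theorem impList_intro : ∀ (l : List ITy) {Γ : List ITy} {τ : ITy},
    IDeriv (l ++ Γ) τ → IDeriv Γ (impList l τ)
  | [], _, _, h => h
  | σ :: σs, Γ, τ, h => by
      refine .impI (impList_intro σs (iweaken h _ ?_))
      intro ψ hψ
      simp only [List.mem_append, List.mem_cons] at hψ ⊢
      tauto

theorem impList_elim : ∀ (l : List ITy) {Γ : List ITy} {τ : ITy},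
    IDeriv Γ (impList l τ) → (∀ σ ∈ l, IDeriv Γ σ) → IDeriv Γ τ
  | [], _, _, h, _ => h
  | σ :: σs, Γ, τ, h, hall =>
      impList_elim σs (.impE h (hall σ (List.mem_cons_self)))
        (fun χ hχ => hall χ (List.mem_cons_of_mem _ hχ))

theorem Accepting.mono {Q R : Type} [DecidableEq R] {A : MonAut Q R} {q : Q} {T : Finset R}
    (h : Accepting A q T) : ∀ {T' : Finset R}, T ⊆ T' → Accepting A q T' := by
  induction h with
  | final => exact fun _ => .final
  | test hin hsub _ ih =>
      exact fun hT => .test hin (hsub.trans hT)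
        (ih (Finset.union_subset_union hT (Finset.Subset.refl _)))
  | branch hin _ _ ih1 ih2 => exact fun hT => .branch hin (ih1 hT) (ih2 hT)

/-- Kripke forcing over worlds `S : Finset R` ordered by inclusion. -/
def Force {Q R : Type} [DecidableEq R] (A : MonAut Q R) (qA : Q → ℕ) (rA : R → ℕ)
    (S₀ : Finset R) : Finset R → ITy → Prop
  | S, .var n => (∃ q, n = qA q ∧ Accepting A q (S ∪ S₀)) ∨ (∃ r, n = rA r ∧ r ∈ S ∪ S₀)
  | S, .imp σ τ => ∀ S', S ⊆ S' → Force A qA rA S₀ S' σ → Force A qA rA S₀ S' τ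

section Kripke

variable {Q R : Type} [DecidableEq R] {A : MonAut Q R} {qA : Q → ℕ} {rA : R → ℕ}
  {S₀ : Finset R}

theorem Force.mono {φ : ITy} : ∀ {S S' : Finset R}, S ⊆ S' →
    Force A qA rA S₀ S φ → Force A qA rA S₀ S' φ := by
  induction φ with
  | var n =>
      intro S S' h hf
      rcases hf with ⟨q, rfl, hacc⟩ | ⟨r, rfl, hr⟩
      · exact Or.inl ⟨q, rfl, hacc.mono (Finset.union_subset_union h (Finset.Subset.refl _))⟩
      · exact Or.inr ⟨r, rfl, Finset.union_subset_union h (Finset.Subset.refl _) hr⟩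
  | imp σ τ ihσ ihτ =>
      intro S S' h hf U hU hσ
      exact hf U (h.trans hU) hσ

theorem force_sound {Γ : List ITy} {φ : ITy} (h : IDeriv Γ φ) :
    ∀ S : Finset R, (∀ ψ ∈ Γ, Force A qA rA S₀ S ψ) → Force A qA rA S₀ S φ := by
  induction h with
  | ax h => exact fun S hs => hs _ h
  | @impI Γ φ ψ _ ih =>
      intro S hs S' hSS' hφ
      refine ih S' ?_
      intro χ hχ
      rcases List.mem_cons.1 hχ with rfl | hχ
      · exact hφ
      · exact Force.mono hSS' (hs _ hχ)
  | impE _ _ ih1 ih2 =>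
      intro S hs
      exact ih1 S hs S (Finset.Subset.refl _) (ih2 S hs)

theorem force_impList_intro : ∀ (l : List ITy) {S : Finset R} {τ : ITy},
    (∀ S', S ⊆ S' → (∀ σ ∈ l, Force A qA rA S₀ S' σ) → Force A qA rA S₀ S' τ) →
    Force A qA rA S₀ S (impList l τ)
  | [], S, τ, h => h S (Finset.Subset.refl _) (by simp)
  | σ :: σs, S, τ, h => by
      intro S' hSS' hσ
      refine force_impList_intro σs ?_
      intro S'' hS'' hall
      refine h S'' (hSS'.trans hS'') ?_
      intro χ hχ
      rcases List.mem_cons.1 hχ with rfl | hχ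
      · exact Force.mono hS'' hσ
      · exact hall _ hχ

theorem force_impList_elim : ∀ (l : List ITy) {S : Finset R} {τ : ITy},
    Force A qA rA S₀ S (impList l τ) → (∀ σ ∈ l, Force A qA rA S₀ S σ) →
    Force A qA rA S₀ S τ
  | [], _, _, h, _ => h
  | σ :: σs, S, τ, h, hall =>
      force_impList_elim σs (h S (Finset.Subset.refl _) (hall σ (List.mem_cons_self)))
        (fun χ hχ => hall χ (List.mem_cons_of_mem _ hχ))

end Kripke

/-- Order bound for prefixing implications. -/
theorem order_impList_le : ∀ (l : List ITy) (τ : ITy) (n : ℕ),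
    (∀ φ ∈ l, order φ ≤ n) → order (impList l τ) ≤ max (n + 1) (order τ)
  | [], τ, n, _ => le_max_right _ _
  | σ :: σs, τ, n, h => by
      have h1 : order σ ≤ n := h σ (List.mem_cons_self)
      have h2 := order_impList_le σs τ n (fun φ hφ => h φ (List.mem_cons_of_mem _ hφ))
      simp only [impList, order]
      omega

section Main

variable {Q R : Type} [DecidableEq R] {A : MonAut Q R} {qA : Q → ℕ} {rA : R → ℕ}
  {S₀ : Finset R}

theorem force_var_q (hqA : Function.Injective qA) (hdisj : ∀ (q : Q) (r : R), qA q ≠ rA r)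
    {S : Finset R} {q : Q} :
    Force A qA rA S₀ S (.var (qA q)) ↔ Accepting A q (S ∪ S₀) := by
  constructor
  · intro h
    rcases h with ⟨q', heq, hacc⟩ | ⟨r, heq, _⟩
    · exact (hqA heq) ▸ hacc
    · exact absurd heq (hdisj q r)
  · exact fun h => Or.inl ⟨q, rfl, h⟩

theorem force_var_r (hrA : Function.Injective rA) (hdisj : ∀ (q : Q) (r : R), qA q ≠ rA r)
    {S : Finset R} {r : R} :
    Force A qA rA S₀ S (.var (rA r)) ↔ r ∈ S ∪ S₀ := by
  constructor
  · intro h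
    rcases h with ⟨q', heq, _⟩ | ⟨r', heq, hr⟩
    · exact absurd heq.symm (hdisj q' r)
    · exact (hrA heq) ▸ hr
  · exact fun h => Or.inr ⟨r, rfl, h⟩

theorem axiom_forced (hqA : Function.Injective qA) (hrA : Function.Injective rA)
    (hdisj : ∀ (q : Q) (r : R), qA q ≠ rA r)
    {ins : Instr Q R} (hin : ins ∈ A.instrs) (T : Finset R) :
    Force A qA rA S₀ T (axiomOf qA rA ins) := by
  cases ins with
  | test q S₁ S₂ p =>
      show Force A qA rA S₀ T (impList _ _)
      refine force_impList_intro _ ?_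
      intro T' _ hS₁
      intro U hU hinner
      refine (force_var_q hqA hdisj).2 ?_
      -- Accepting A q (U ∪ S₀) via the test instruction
      have hS₁sub : S₁ ⊆ U ∪ S₀ := by
        intro r hr
        have : Force A qA rA S₀ T' (.var (rA r)) :=
          hS₁ _ (List.mem_map_of_mem ((Finset.mem_toList).2 hr))
        have hmem := (force_var_r hrA hdisj).1 this
        exact Finset.union_subset_union hU (Finset.Subset.refl _) hmem
      have hinner' : Force A qA rA S₀ (U ∪ S₂) (impList (S₂.toList.map fun r => ITy.var (rA r)) (.var (qA p))) :=
        Force.mono Finset.subset_union_left hinner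
      have hp : Force A qA rA S₀ (U ∪ S₂) (.var (qA p)) := by
        refine force_impList_elim _ hinner' ?_
        intro σ hσ
        rcases List.mem_map.1 hσ with ⟨r, hr, rfl⟩
        refine (force_var_r hrA hdisj).2 ?_
        exact Finset.mem_union.2 (Or.inl (Finset.mem_union.2 (Or.inr ((Finset.mem_toList).1 hr))))
      have hacc : Accepting A p ((U ∪ S₂) ∪ S₀) := (force_var_q hqA hdisj).1 hp
      refine Accepting.test hin hS₁sub ?_
      rwa [Finset.union_right_comm] at hacc
  | branch q p₁ p₂ =>
      intro T₁ _ hp₁ T₂ h₂ hp₂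
      refine (force_var_q hqA hdisj).2 ?_
      have h₁ : Accepting A p₁ (T₂ ∪ S₀) :=
        ((force_var_q hqA hdisj).1 hp₁).mono
          (Finset.union_subset_union h₂ (Finset.Subset.refl _))
      have h₂' : Accepting A p₂ (T₂ ∪ S₀) := (force_var_q hqA hdisj).1 hp₂
      exact Accepting.branch hin h₁ h₂'

theorem gamma_forced (hqA : Function.Injective qA) (hrA : Function.Injective rA)
    (hdisj : ∀ (q : Q) (r : R), qA q ≠ rA r)
    {ψ : ITy} (hψ : ψ ∈ GammaOf A qA rA S₀) (T : Finset R) :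
    Force A qA rA S₀ T ψ := by
  simp only [GammaOf, List.mem_append, List.mem_map, List.mem_singleton,
    Finset.mem_toList] at hψ
  rcases hψ with (⟨r, hr, rfl⟩ | rfl) | ⟨ins, hin, rfl⟩
  · exact (force_var_r hrA hdisj).2 (Finset.mem_union.2 (Or.inr hr))
  · exact (force_var_q hqA hdisj).2 Accepting.final
  · exact axiom_forced hqA hrA hdisj hin T

theorem var_mem_ctx {S : Finset R} {r : R} (hr : r ∈ S ∪ S₀) :
    ITy.var (rA r) ∈ GammaOf A qA rA S₀ ++ S.toList.map fun r => ITy.var (rA r) := by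
  simp only [GammaOf, List.mem_append, List.mem_map, List.mem_singleton, Finset.mem_toList]
  rcases Finset.mem_union.1 hr with h | h
  · exact Or.inr ⟨r, h, rfl⟩
  · exact Or.inl (Or.inl (Or.inl ⟨r, h, rfl⟩))

theorem complete_deriv {q : Q} {T : Finset R} (h : Accepting A q T) :
    ∀ S : Finset R, T ⊆ S ∪ S₀ →
      IDeriv (GammaOf A qA rA S₀ ++ S.toList.map fun r => ITy.var (rA r)) (.var (qA q)) := by
  induction h with
  | final =>
      intro S _
      refine .ax ?_
      simp [GammaOf]
  | @test q T S₁ S₂ p hin hsub hacc ih =>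
      intro S hTS
      have hax : IDeriv (GammaOf A qA rA S₀ ++ S.toList.map fun r => ITy.var (rA r))
          (axiomOf qA rA (.test q S₁ S₂ p)) := by
        refine .ax ?_
        simp only [GammaOf, List.mem_append, List.mem_map]
        exact Or.inl (Or.inr ⟨_, hin, rfl⟩)
      have h1 : IDeriv (GammaOf A qA rA S₀ ++ S.toList.map fun r => ITy.var (rA r))
          (.imp (impList (S₂.toList.map fun r => ITy.var (rA r)) (.var (qA p))) (.var (qA q))) := by
        refine impList_elim _ hax ?_
        intro σ hσ
        rcases List.mem_map.1 hσ with ⟨r, hr, rfl⟩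
        exact .ax (var_mem_ctx (hTS (hsub ((Finset.mem_toList).1 hr))))
      have hsub2 : T ∪ S₂ ⊆ (S ∪ S₂) ∪ S₀ := by
        intro r hr
        simp only [Finset.mem_union] at hr ⊢
        rcases hr with hr | hr
        · rcases Finset.mem_union.1 (hTS hr) with h | h
          · exact Or.inl (Or.inl h)
          · exact Or.inr h
        · exact Or.inl (Or.inr hr)
      have h2 : IDeriv (GammaOf A qA rA S₀ ++ S.toList.map fun r => ITy.var (rA r))
          (impList (S₂.toList.map fun r => ITy.var (rA r)) (.var (qA p))) := by
        refine impList_intro _ (iweaken (ih (S ∪ S₂) hsub2) _ ?_)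
        intro ψ hψ
        simp only [GammaOf, List.mem_append, List.mem_map, List.mem_singleton,
          Finset.mem_toList, Finset.mem_union] at hψ ⊢
        rcases hψ with h | ⟨r, hr | hr, rfl⟩
        · exact Or.inr (Or.inl h)
        · exact Or.inr (Or.inr ⟨r, hr, rfl⟩)
        · exact Or.inl ⟨r, hr, rfl⟩
      exact .impE h1 h2
  | @branch q T p₁ p₂ hin _ _ ih1 ih2 =>
      intro S hTS
      have hax : IDeriv (GammaOf A qA rA S₀ ++ S.toList.map fun r => ITy.var (rA r))
          (axiomOf qA rA (.branch q p₁ p₂)) := by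
        refine .ax ?_
        simp only [GammaOf, List.mem_append, List.mem_map]
        exact Or.inl (Or.inr ⟨_, hin, rfl⟩)
      exact .impE (.impE hax (ih1 S hTS)) (ih2 S hTS)

end Main

/-- for a monotonic automaton `M = ⟨Q,R,f,I⟩` with `Q ∩ R = ∅`,
using states and registers as propositional atoms, for every `S ⊆ R` and `q ∈ Q`
we have `Γ ∪ S ⊢ q` in IIPC iff `⟨q, S ∪ S₀⟩` is accepting; in particular
`⟨q₀, S₀⟩` is accepting iff `Γ ⊢ q₀`.  Moreover every axiom of `Γ` has order at
most two, and the formula `Γ → q₀` has order at most three. -/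
theorem automaton_to_formulas {Q R : Type} [Fintype Q] [Fintype R] [DecidableEq R]
    (A : MonAut Q R) (qA : Q → ℕ) (rA : R → ℕ)
    (hqA : Function.Injective qA) (hrA : Function.Injective rA)
    (hdisj : ∀ (q : Q) (r : R), qA q ≠ rA r)
    (q₀ : Q) (S₀ : Finset R) :
    (∀ (S : Finset R) (q : Q),
        IDeriv (GammaOf A qA rA S₀ ++ S.toList.map fun r => ITy.var (rA r))
            (.var (qA q)) ↔
          Accepting A q (S ∪ S₀)) ∧
    (IDeriv (GammaOf A qA rA S₀) (.var (qA q₀)) ↔ Accepting A q₀ S₀) ∧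
    (∀ φ ∈ GammaOf A qA rA S₀, order φ ≤ 2) ∧
    order (impList (GammaOf A qA rA S₀) (.var (qA q₀))) ≤ 3 := by
  have key : ∀ (S : Finset R) (q : Q),
      IDeriv (GammaOf A qA rA S₀ ++ S.toList.map fun r => ITy.var (rA r))
          (.var (qA q)) ↔ Accepting A q (S ∪ S₀) := by
    intro S q
    constructor
    · intro h
      refine (force_var_q hqA hdisj).1 ?_
      refine force_sound h S ?_
      intro ψ hψ
      rcases List.mem_append.1 hψ with h' | h'
      · exact gamma_forced hqA hrA hdisj h' S
      · rcases List.mem_map.1 h' with ⟨r, hr, rfl⟩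
        exact (force_var_r hrA hdisj).2 (Finset.mem_union.2 (Or.inl ((Finset.mem_toList).1 hr)))
    · intro hacc
      exact complete_deriv hacc S (Finset.Subset.refl _)
  have horder : ∀ φ ∈ GammaOf A qA rA S₀, order φ ≤ 2 := by
    intro φ hφ
    simp only [GammaOf, List.mem_append, List.mem_map, List.mem_singleton,
      Finset.mem_toList] at hφ
    rcases hφ with (⟨r, _, rfl⟩ | rfl) | ⟨ins, _, rfl⟩
    · simp [order]
    · simp [order]
    · cases ins with
      | test q S₁ S₂ p =>
          have h2 := order_impList_le (S₂.toList.map fun r => ITy.var (rA r)) (.var (qA p)) 0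
            (by rintro ψ hψ; rcases List.mem_map.1 hψ with ⟨r, _, rfl⟩; simp [order])
          have h1 := order_impList_le (S₁.toList.map fun r => ITy.var (rA r))
            (.imp (impList (S₂.toList.map fun r => ITy.var (rA r)) (.var (qA p))) (.var (qA q))) 0
            (by rintro ψ hψ; rcases List.mem_map.1 hψ with ⟨r, _, rfl⟩; simp [order])
          simp only [axiomOf, order] at h1 h2 ⊢
          omega
      | branch q p₁ p₂ => simp [axiomOf, order]
  refine ⟨key, ?_, horder, ?_⟩
  · simpa using key ∅ q₀
  · have := order_impList_le (GammaOf A qA rA S₀) (.var (qA q₀)) 2 horder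
    simp only [order] at this ⊢
    omega


end IPCStmt10
end

section
/- Let φ¹ = p₁ and φ^{k+1} = φ^k → p_{k+1}. Let Γ be a context such that the target of every formula in Γ is not among p₁,…,p_k, and suppose Γ, X:φ^k ⊢ M : φ^k where M is a normal simply typed lambda-term. Then M is βη-convertible to the variable X. -/
set_option autoImplicit true

namespace IPCStmt12

/-- Implicational formulas (simple types). -/
inductive ITy : Type
  | var : ℕ → ITy
  | imp : ITy → ITy → ITy
  deriving DecidableEq

/-- `impList [σ₁, …, σₙ] τ = σ₁ → ⋯ → σₙ → τ`. -/
def impList : List ITy → ITy → ITy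
  | [], τ => τ
  | σ :: σs, τ => .imp σ (impList σs τ)

/-- The order of an implicational formula: `r(atom) = 0` and
`r(σ → τ) = max (r σ + 1) (r τ)`, i.e. `r(σ₁→⋯→σₖ→p) = 1 + maxᵢ r(σᵢ)`. -/
def order : ITy → ℕ
  | .var _ => 0
  | .imp σ τ => max (order σ + 1) (order τ)

/-- Intuitionistic natural deduction for the implicational fragment (IIPC):
the rules (var), (→I), (→E). -/
inductive IDeriv : List ITy → ITy → Prop
  | ax {Γ φ} : φ ∈ Γ → IDeriv Γ φ
  | impI {Γ φ ψ} : IDeriv (φ :: Γ) ψ → IDeriv Γ (.imp φ ψ)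
  | impE {Γ φ ψ} : IDeriv Γ (.imp φ ψ) → IDeriv Γ φ → IDeriv Γ ψ

/-- Terms of the simply typed lambda-calculus (de Bruijn indices). -/
inductive LTm : Type
  | var : ℕ → LTm
  | lam : ITy → LTm → LTm
  | app : LTm → LTm → LTm
  deriving DecidableEq

/-- Shift de Bruijn indices `≥ d` up by one. -/
def lift (d : ℕ) : LTm → LTm
  | .var n => if n < d then .var n else .var (n + 1)
  | .lam σ M => .lam σ (lift (d + 1) M)
  | .app M N => .app (lift d M) (lift d N)

/-- Capture-free substitution `M[k := N]`. -/
def subst (k : ℕ) (N : LTm) : LTm → LTm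
  | .var n => if n < k then .var n else if n = k then N else .var (n - 1)
  | .lam σ M => .lam σ (subst (k + 1) (lift 0 N) M)
  | .app M P => .app (subst k N M) (subst k N P)

/-- Typing in the simply typed lambda-calculus: rules (var), (→I), (→E). -/
inductive ITyping : List ITy → LTm → ITy → Prop
  | var {Γ n σ} : Γ[n]? = some σ → ITyping Γ (.var n) σ
  | lam {Γ σ τ M} : ITyping (σ :: Γ) M τ → ITyping Γ (.lam σ M) (.imp σ τ)
  | app {Γ M N σ τ} : ITyping Γ M (.imp σ τ) → ITyping Γ N σ → ITyping Γ (.app M N) τ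

/-- One-step β-reduction (contextual closure). -/
inductive BStep : LTm → LTm → Prop
  | beta {σ M N} : BStep (.app (.lam σ M) N) (subst 0 N M)
  | lamc {σ M M'} : BStep M M' → BStep (.lam σ M) (.lam σ M')
  | appl {M M' N} : BStep M M' → BStep (.app M N) (.app M' N)
  | appr {M N N'} : BStep N N' → BStep (.app M N) (.app M N')

/-- A term is normal when it contains no β-redex. -/
def NormalB (M : LTm) : Prop := ∀ N : LTm, ¬ BStep M N

/-- One-step β- or η-reduction (contextual closure). -/
inductive BEStep : LTm → LTm → Prop
  | beta {σ M N} : BEStep (.app (.lam σ M) N) (subst 0 N M)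
  | eta {σ M} : BEStep (.lam σ (.app (lift 0 M) (.var 0))) M
  | lamc {σ M M'} : BEStep M M' → BEStep (.lam σ M) (.lam σ M')
  | appl {M M' N} : BEStep M M' → BEStep (.app M N) (.app M' N)
  | appr {M N N'} : BEStep N N' → BEStep (.app M N) (.app M N')

/-- βη-convertibility: the congruence generated by β- and η-reduction. -/
inductive Conv : LTm → LTm → Prop
  | step {M N} : BEStep M N → Conv M N
  | refl (M) : Conv M M
  | symm {M N} : Conv M N → Conv N M
  | trans {M N P} : Conv M N → Conv N P → Conv M P

/-- The target of an implicational formula. -/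
def target : ITy → ℕ
  | .var p => p
  | .imp _ τ => target τ

/-- `phi k` is the formula `φᵏ`: `φ¹ = p₁` and `φᵏ⁺¹ = φᵏ → p_{k+1}`
(the propositional variable `pᵢ` is `ITy.var i`). -/
def phi : ℕ → ITy
  | 0 => .var 0
  | 1 => .var 1
  | (k + 2) => .imp (phi (k + 1)) (.var (k + 2))

lemma target_phi : ∀ i, target (phi i) = i
  | 0 => rfl
  | 1 => rfl
  | (_+2) => rfl

lemma phi_inj {i j : ℕ} (h : phi i = phi j) : i = j := by
  have := congrArg target h
  rwa [target_phi, target_phi] at this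

lemma normal_appl {P N : LTm} (h : NormalB (.app P N)) : NormalB P :=
  fun _ s => h _ (BStep.appl s)

lemma normal_appr {P N : LTm} (h : NormalB (.app P N)) : NormalB N :=
  fun _ s => h _ (BStep.appr s)

lemma normal_lam {σ : ITy} {B : LTm} (h : NormalB (.lam σ B)) : NormalB B :=
  fun _ s => h _ (BStep.lamc s)

lemma conv_app_right {P N N' : LTm} (h : Conv N N') : Conv (.app P N) (.app P N') := by
  induction h with
  | step h => exact .step (.appr h)
  | refl M => exact .refl _
  | symm _ ih => exact .symm ih
  | trans _ _ ih1 ih2 => exact .trans ih1 ih2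

lemma conv_lam {σ : ITy} {B B' : LTm} (h : Conv B B') : Conv (.lam σ B) (.lam σ B') := by
  induction h with
  | step h => exact .step (.lamc h)
  | refl M => exact .refl _
  | symm _ ih => exact .symm ih
  | trans _ _ ih1 ih2 => exact .trans ih1 ih2

/-- Spine analysis for neutral normal terms whose type has target `p_j`. -/
lemma neut {k j : ℕ} {Δ : List ITy} (hj1 : 1 ≤ j) (hjk : j ≤ k)
    (hΔ : ∀ (n : ℕ) σ, Δ[n]? = some σ →
      (∀ i, 1 ≤ i → i ≤ k → target σ ≠ i) ∨ ∃ i, 1 ≤ i ∧ i ≤ k ∧ σ = phi i) :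
    ∀ (M : LTm) (ρ : ITy), NormalB M → (∀ τ B, M ≠ LTm.lam τ B) →
      ITyping Δ M ρ → target ρ = j →
      ∃ n, Δ[n]? = some (phi j) ∧
        ((ρ = phi j ∧ M = .var n) ∨
         (2 ≤ j ∧ ρ = .var j ∧
           ∃ N, M = .app (.var n) N ∧ ITyping Δ N (phi (j-1)) ∧ NormalB N)) := by
  intro M
  induction M with
  | var n =>
    intro ρ _ _ hty hρ
    cases hty with
    | var hget =>
      rcases hΔ _ _ hget with hbad | ⟨i, hi1, hik, rfl⟩
      · exact absurd hρ (hbad j hj1 hjk)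
      · rw [target_phi] at hρ
        subst hρ
        exact ⟨n, hget, Or.inl ⟨rfl, rfl⟩⟩
  | lam σ B ih =>
    intro ρ _ hnl _ _
    exact absurd rfl (hnl σ B)
  | app P N ihP ihN =>
    intro ρ hnf _ hty hρ
    cases hty with
    | app hP hN =>
      rename_i σ
      have hPnl : ∀ τ B, P ≠ LTm.lam τ B := by
        rintro τ B rfl
        exact hnf _ BStep.beta
      have hPnf : NormalB P := normal_appl hnf
      obtain ⟨n, hget, hc⟩ := ihP (.imp σ ρ) hPnf hPnl hP hρ
      rcases hc with ⟨hph, rfl⟩ | ⟨_, hph, _⟩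
      · -- imp σ ρ = phi j, so j ≥ 2 and σ = phi (j-1), ρ = var j
        match j, hj1, hjk, hph with
        | 1, _, _, hph => exact absurd hph (by simp [phi])
        | (m+2), _, hjk, hph =>
          rw [show phi (m+2) = .imp (phi (m+1)) (.var (m+2)) from rfl] at hph
          injection hph with h1 h2
          subst h1; subst h2
          exact ⟨n, hget, Or.inr ⟨by omega, rfl, N, rfl,
            by simpa using hN, normal_appr hnf⟩⟩
      · exact absurd hph (by simp)

/-- Main lemma: a normal inhabitant of `φʲ` in a suitable context is
βη-convertible to the unique variable of type `φʲ`. -/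
lemma main {k : ℕ} :
    ∀ (s : ℕ) (M : LTm) (Δ : List ITy) (j v : ℕ), sizeOf M ≤ s →
      NormalB M → ITyping Δ M (phi j) → 1 ≤ j → j ≤ k →
      (∀ (n : ℕ) σ, Δ[n]? = some σ →
        (∀ i, 1 ≤ i → i ≤ k → target σ ≠ i) ∨ ∃ i, j ≤ i ∧ i ≤ k ∧ σ = phi i) →
      (∀ n : ℕ, Δ[n]? = some (phi j) → n = v) →
      Conv M (.var v) := by
  intro s
  induction s with
  | zero =>
    intro M Δ j v hsz
    exact absurd hsz (by cases M <;> simp)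
  | succ s ih =>
    intro M Δ j v hsz hnf hty hj1 hjk hΔ huniq
    have hΔ' : ∀ n σ, Δ[n]? = some σ →
        (∀ i, 1 ≤ i → i ≤ k → target σ ≠ i) ∨ ∃ i, 1 ≤ i ∧ i ≤ k ∧ σ = phi i :=
      fun n σ h => (hΔ n σ h).imp id (fun ⟨i, hi, hik, e⟩ => ⟨i, by omega, hik, e⟩)
    have key : (∀ τ B, M ≠ LTm.lam τ B) → Conv M (.var v) := by
      intro hnl
      obtain ⟨n, hget, hc⟩ := neut hj1 hjk hΔ' M (phi j) hnf hnl hty (target_phi j)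
      rcases hc with ⟨-, rfl⟩ | ⟨hj2, hph, -⟩
      · rw [huniq n hget]; exact Conv.refl _
      · obtain ⟨m, rfl⟩ : ∃ m, j = m + 2 := ⟨j - 2, by omega⟩
        exact absurd hph (by simp [phi])
    cases M with
    | var n => exact key (by simp)
    | app P N => exact key (by simp)
    | lam σ B =>
      match j, hj1, hjk with
      | 1, _, _ =>
        rw [show phi 1 = .var 1 from rfl] at hty
        cases hty
      | (m+2), _, hjk =>
        rw [show phi (m+2) = .imp (phi (m+1)) (.var (m+2)) from rfl] at hty
        cases hty with
        | lam hB =>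
          have hnfB : NormalB B := normal_lam hnf
          have hBnl : ∀ τ C, B ≠ LTm.lam τ C := by
            rintro τ C rfl; cases hB
          have hΔ'' : ∀ (n : ℕ) σ, (phi (m+1) :: Δ)[n]? = some σ →
              (∀ i, 1 ≤ i → i ≤ k → target σ ≠ i) ∨
                ∃ i, 1 ≤ i ∧ i ≤ k ∧ σ = phi i := by
            intro n σ h
            cases n with
            | zero =>
              refine Or.inr ⟨m+1, by omega, by omega, ?_⟩
              simpa using h.symm
            | succ n =>
              exact (hΔ n σ (by simpa using h)).imp id
                (fun ⟨i, hi, hik, e⟩ => ⟨i, by omega, hik, e⟩)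
          obtain ⟨n, hget, hc⟩ := neut (j := m+2) (by omega) hjk hΔ'' B
            (.var (m+2)) hnfB hBnl hB rfl
          rcases hc with ⟨hph, -⟩ | ⟨-, -, N, rfl, hNty, hNnf⟩
          · exact absurd hph (by simp [phi])
          · -- identify the head variable
            obtain ⟨n', rfl⟩ : ∃ n', n = n' + 1 := by
              cases n with
              | zero =>
                exfalso
                have : phi (m+1) = phi (m+2) := by simpa using hget
                have := phi_inj this
                omega
              | succ n' => exact ⟨n', rfl⟩
            have hn' : n' = v := huniq n' (by simpa using hget)
            subst hn'
            have hNty' : ITyping (phi (m+1) :: Δ) N (phi (m+1)) := by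
              simpa using hNty
            -- context invariants at level m+1
            have hInv' : ∀ (n : ℕ) σ, (phi (m+1) :: Δ)[n]? = some σ →
                (∀ i, 1 ≤ i → i ≤ k → target σ ≠ i) ∨
                  ∃ i, m+1 ≤ i ∧ i ≤ k ∧ σ = phi i := by
              intro n σ h
              cases n with
              | zero =>
                exact Or.inr ⟨m+1, le_rfl, by omega, by simpa using h.symm⟩
              | succ n =>
                exact (hΔ n σ (by simpa using h)).imp id
                  (fun ⟨i, hi, hik, e⟩ => ⟨i, by omega, hik, e⟩)
            have hUniq' : ∀ n : ℕ, (phi (m+1) :: Δ)[n]? = some (phi (m+1)) → n = 0 := by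
              intro n h
              cases n with
              | zero => rfl
              | succ n =>
                exfalso
                have h' : Δ[n]? = some (phi (m+1)) := by simpa using h
                rcases hΔ n _ h' with hbad | ⟨i, hi, hik, e⟩
                · exact hbad (m+1) (by omega) (by omega) (target_phi (m+1))
                · have := phi_inj e
                  omega
            have hszN : sizeOf N ≤ s := by
              simp only [LTm.lam.sizeOf_spec, LTm.app.sizeOf_spec,
                LTm.var.sizeOf_spec] at hsz
              omega
            have hconvN : Conv N (.var 0) :=
              ih N (phi (m+1) :: Δ) (m+1) 0 hszN hNnf hNty' (by omega)
                (by omega) hInv' hUniq'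
            have step1 : Conv (LTm.lam (phi (m+1)) (.app (.var (n'+1)) N))
                (LTm.lam (phi (m+1)) (.app (.var (n'+1)) (.var 0))) :=
              conv_lam (conv_app_right hconvN)
            have hlift : lift 0 (LTm.var n') = LTm.var (n'+1) := by simp [lift]
            have step2 : BEStep (LTm.lam (phi (m+1)) (.app (.var (n'+1)) (.var 0)))
                (LTm.var n') := by
              rw [← hlift]
              exact BEStep.eta
            exact Conv.trans step1 (Conv.step step2)

/-- if the target of every formula in `Γ` is not among
`p₁, …, p_k`, and `Γ, X:φᵏ ⊢ M : φᵏ` with `M` normal (here `X` is the de Bruijn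
variable `0`), then `M` is βη-convertible to `X`. -/
theorem normal_inhabitant_of_phi_is_var {k : ℕ} (hk : 1 ≤ k) {Γ : List ITy}
    (hΓ : ∀ γ ∈ Γ, ∀ i : ℕ, 1 ≤ i → i ≤ k → target γ ≠ i)
    {M : LTm} (hM : ITyping (phi k :: Γ) M (phi k)) (hnf : NormalB M) :
    Conv M (.var 0) := by
  refine main (sizeOf M) M (phi k :: Γ) k 0 le_rfl hnf hM hk le_rfl ?_ ?_
  · intro n σ h
    cases n with
    | zero => exact Or.inr ⟨k, le_rfl, le_rfl, by simpa using h.symm⟩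
    | succ n =>
      have hmem : σ ∈ Γ := List.mem_of_getElem? (by simpa using h)
      exact Or.inl (hΓ σ hmem)
  · intro n h
    cases n with
    | zero => rfl
    | succ n =>
      exfalso
      have hmem : phi k ∈ Γ := List.mem_of_getElem? (by simpa using h)
      exact hΓ _ hmem k hk le_rfl (target_phi k)

end IPCStmt12
end

section
/- Every implicational propositional formula is classically equivalent to an implicational formula of order at most three. -/
/-!
If `p` is the final atom of `σ`, then `σ` is true whenever `p` is, so `σ ≡ p ∨ σ`. Once `p` is
false, `φ → p` acts as classical negation, so `p ∨ σ` is expressed by `¬M₁ → ⋯ → ¬Mₖ → p`, where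
the `Mᵢ` are the minterms (over the variables of `σ`) of the satisfying assignments of `σ`.
Each `¬M = x₁ → ⋯ → (y₁ → p) → ⋯ → p` has order 2, hence the whole formula has order 3.
-/

set_option autoImplicit true

namespace IPCStmt15

/-- Implicational formulas (simple types). -/
inductive ITy : Type
  | var : ℕ → ITy
  | imp : ITy → ITy → ITy
  deriving DecidableEq

/-- `impList [σ₁, …, σₙ] τ = σ₁ → ⋯ → σₙ → τ`. -/
def impList : List ITy → ITy → ITy
  | [], τ => τ
  | σ :: σs, τ => .imp σ (impList σs τ)

/-- The order of an implicational formula: `r(atom) = 0` and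
`r(σ → τ) = max (r σ + 1) (r τ)`, i.e. `r(σ₁→⋯→σₖ→p) = 1 + maxᵢ r(σᵢ)`. -/
def order : ITy → ℕ
  | .var _ => 0
  | .imp σ τ => max (order σ + 1) (order τ)

/-- Intuitionistic natural deduction for the implicational fragment (IIPC):
the rules (var), (→I), (→E). -/
inductive IDeriv : List ITy → ITy → Prop
  | ax {Γ φ} : φ ∈ Γ → IDeriv Γ φ
  | impI {Γ φ ψ} : IDeriv (φ :: Γ) ψ → IDeriv Γ (.imp φ ψ)
  | impE {Γ φ ψ} : IDeriv Γ (.imp φ ψ) → IDeriv Γ φ → IDeriv Γ ψ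

/-- Classical (Boolean) evaluation of an implicational formula under a valuation. -/
def evalI (v : ℕ → Bool) : ITy → Bool
  | .var p => v p
  | .imp σ τ => !evalI v σ || evalI v τ

def vars : ITy → Finset ℕ
  | .var n => {n}
  | .imp σ τ => vars σ ∪ vars τ

def target : ITy → ℕ
  | .var n => n
  | .imp _ τ => target τ

theorem evalI_congr {v w : ℕ → Bool} (σ : ITy) (h : ∀ n ∈ vars σ, v n = w n) :
    evalI v σ = evalI w σ := by
  induction σ with
  | var n => exact h n (Finset.mem_singleton_self n)
  | imp σ τ ihσ ihτ =>
    simp only [vars, Finset.mem_union] at h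
    rw [evalI, evalI, ihσ fun n hn => h n (.inl hn), ihτ fun n hn => h n (.inr hn)]

theorem evalI_eq_target_or_evalI (v : ℕ → Bool) (σ : ITy) :
    evalI v σ = (v (target σ) || evalI v σ) := by
  induction σ with
  | var n => simp [evalI, target]
  | imp σ τ _ ih =>
    rw [evalI, target, ih]
    cases v (target τ) <;> simp

theorem evalI_impList_eq_false {v : ℕ → Bool} {L : List ITy} {q : ITy} :
    evalI v (impList L q) = false ↔ (∀ G ∈ L, evalI v G = true) ∧ evalI v q = false := by
  induction L with
  | nil => simp [impList]
  | cons G L ih => simp [impList, evalI, ih, and_assoc]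

theorem order_impList_le {L : List ITy} {q : ITy} {n : ℕ} (hL : ∀ G ∈ L, order G ≤ n)
    (hq : order q ≤ n + 1) : order (impList L q) ≤ n + 1 := by
  induction L with
  | nil => exact hq
  | cons G L ih =>
    simp only [List.forall_mem_cons] at hL
    exact max_le (Nat.succ_le_succ hL.1) (ih hL.2)

def notMinterm (p : ℕ) (xs ys : List ℕ) : ITy :=
  impList (xs.map .var ++ ys.map fun y => .imp (.var y) (.var p)) (.var p)

theorem order_notMinterm_le (p : ℕ) (xs ys : List ℕ) : order (notMinterm p xs ys) ≤ 2 := by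
  refine order_impList_le (fun G hG => ?_) (Nat.zero_le _)
  simp only [List.mem_append, List.mem_map] at hG
  rcases hG with ⟨x, -, rfl⟩ | ⟨y, -, rfl⟩ <;> simp [order]

theorem evalI_notMinterm_eq_false {v : ℕ → Bool} {p : ℕ} (hp : v p = false) (xs ys : List ℕ) :
    evalI v (notMinterm p xs ys) = false ↔ (∀ x ∈ xs, v x = true) ∧ ∀ y ∈ ys, v y = false := by
  simp only [notMinterm, evalI_impList_eq_false, List.forall_mem_append, List.forall_mem_map]
  simp [evalI, hp]

theorem evalI_notMinterm_finset_eq_false {v : ℕ → Bool} {p : ℕ} (hp : v p = false)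
    {V T : Finset ℕ} (hT : T ⊆ V) :
    evalI v (notMinterm p T.toList (V \ T).toList) = false ↔ V.filter (v · = true) = T := by
  rw [evalI_notMinterm_eq_false hp]
  simp only [Finset.mem_toList, Finset.mem_sdiff, Finset.ext_iff, Finset.mem_filter]
  constructor
  · rintro ⟨hxs, hys⟩ n
    by_cases hn : n ∈ T <;> grind
  · intro h
    exact ⟨fun x hx => ((h x).2 hx).2, fun y hy => by simpa [hy.2, hy.1] using h y⟩

theorem evalI_impList_notMinterm_eq_false {v : ℕ → Bool} {p : ℕ} (hp : v p = false)
    {V : Finset ℕ} {S : Finset (Finset ℕ)} (hS : ∀ T ∈ S, T ⊆ V) :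
    evalI v (impList (S.toList.map fun T => notMinterm p T.toList (V \ T).toList) (.var p)) = false ↔
      V.filter (v · = true) ∉ S := by
  simp only [evalI_impList_eq_false, List.forall_mem_map, Finset.mem_toList, evalI, hp, and_true]
  refine ⟨fun h hmem => ?_, fun h T hT => Bool.eq_true_of_not_eq_false fun hT' => ?_⟩
  · exact Bool.false_ne_true <|
      ((evalI_notMinterm_finset_eq_false hp (hS _ hmem)).2 rfl).symm.trans (h _ hmem)
  · exact h ((evalI_notMinterm_finset_eq_false hp (hS T hT)).1 hT' ▸ hT)

theorem exists_order_le_three_evalI_eq_or (p : ℕ) (V : Finset ℕ) (f : (ℕ → Bool) → Bool)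
    (hf : ∀ v w, (∀ n ∈ V, v n = w n) → f v = f w) :
    ∃ τ, order τ ≤ 3 ∧ ∀ v, evalI v τ = (v p || f v) := by
  classical
  let S := V.powerset.filter fun T => f (· ∈ T)
  have hSV : ∀ T ∈ S, T ⊆ V := fun T hT => Finset.mem_powerset.1 (Finset.mem_filter.1 hT).1
  refine ⟨impList (S.toList.map fun T => notMinterm p T.toList (V \ T).toList) (.var p), ?_, ?_⟩
  · refine order_impList_le (fun G hG => ?_) (Nat.zero_le _)
    obtain ⟨T, -, rfl⟩ := List.mem_map.1 hG
    exact order_notMinterm_le p _ _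
  · intro v
    cases hp : v p
    · have hmem : V.filter (v · = true) ∈ S ↔ f v = true := by
        simp [S, hf v (· ∈ V.filter (v · = true)) fun n hn => by simp [hn]]
      rw [Bool.false_or, Bool.eq_iff_iff, ← not_iff_not, ← hmem, Bool.not_eq_true,
        evalI_impList_notMinterm_eq_false hp hSV]
    · exact Bool.eq_true_of_not_eq_false fun h => by
        simpa [evalI, hp] using (evalI_impList_eq_false.1 h).2

/-- every implicational propositional formula is classically
equivalent to an implicational formula of order at most three. -/
theorem classical_order_three_normal_form (σ : ITy) :
    ∃ τ : ITy, order τ ≤ 3 ∧ ∀ v : ℕ → Bool, evalI v σ = evalI v τ := by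
  obtain ⟨τ, hτ, hστ⟩ := exists_order_le_three_evalI_eq_or (target σ) (vars σ) (evalI · σ)
    fun v w h => evalI_congr σ h
  exact ⟨τ, hτ, fun v => (evalI_eq_target_or_evalI v σ).trans (hστ v).symm⟩

end IPCStmt15
end

section
/- Let Ψ = (r₁₁∨r₁₂∨r₁₃) ∧ ⋯ ∧ (r_k1∨r_k2∨r_k3) be a 3-CNF formula over propositional variables p₁,…,p_n (the r_ij are literals). Introduce fresh data variables p′₁,…,p′_n and control variables q₁,…,q_n, c₁,…,c_k; set ρ_ij = p_ℓ when r_ij = p_ℓ and ρ_ij = p′_ℓ when r_ij = ¬p_ℓ. Let Γ consist of the axioms: (pᵢ→q_{i+1})→qᵢ and (p′ᵢ→q_{i+1})→qᵢ for i = 1,…,n−1; (p_n→c₁)→q_n and (p′_n→c₁)→q_n; ρ_{i1}→c_{i+1}→cᵢ, ρ_{i2}→c_{i+1}→cᵢ, ρ_{i3}→c_{i+1}→cᵢ for i = 1,…,k−1; and ρ_{k1}→c_k, ρ_{k2}→c_k, ρ_{k3}→c_k. Then Ψ is classically satisfiable if and only if Γ ⊢ q₁ is derivable in the implicational fragment of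 intuitionistic propositional logic; moreover the formula Γ → q₁ belongs to the class T₃₋. -/
set_option autoImplicit true

namespace IPCStmt17

/-- Implicational formulas (simple types). -/
inductive ITy : Type
  | var : ℕ → ITy
  | imp : ITy → ITy → ITy
  deriving DecidableEq

/-- `impList [σ₁, …, σₙ] τ = σ₁ → ⋯ → σₙ → τ`. -/
def impList : List ITy → ITy → ITy
  | [], τ => τ
  | σ :: σs, τ => .imp σ (impList σs τ)

/-- The order of an implicational formula: `r(atom) = 0` and
`r(σ → τ) = max (r σ + 1) (r τ)`, i.e. `r(σ₁→⋯→σₖ→p) = 1 + maxᵢ r(σᵢ)`. -/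
def order : ITy → ℕ
  | .var _ => 0
  | .imp σ τ => max (order σ + 1) (order τ)

/-- Intuitionistic natural deduction for the implicational fragment (IIPC):
the rules (var), (→I), (→E). -/
inductive IDeriv : List ITy → ITy → Prop
  | ax {Γ φ} : φ ∈ Γ → IDeriv Γ φ
  | impI {Γ φ ψ} : IDeriv (φ :: Γ) ψ → IDeriv Γ (.imp φ ψ)
  | impE {Γ φ ψ} : IDeriv Γ (.imp φ ψ) → IDeriv Γ φ → IDeriv Γ ψ

/-- `T1 ctrl σ`: `σ` is a `T₁₋` formula (`ctrl p = true` means `p` is a control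
variable of `X₁`, `ctrl p = false` that `p` is a data variable of `X₀`). -/
inductive T1 (ctrl : ℕ → Bool) : ITy → Prop
  | var {q} : ctrl q = true → T1 ctrl (.var q)
  | imp {p τ} : ctrl p = false → T1 ctrl τ → T1 ctrl (.imp (.var p) τ)

/-- `T₂₋ ::= X₁ | X₀ → T₂₋ | T₁₋ → T₁₋`. -/
inductive T2 (ctrl : ℕ → Bool) : ITy → Prop
  | var {q} : ctrl q = true → T2 ctrl (.var q)
  | data {p τ} : ctrl p = false → T2 ctrl τ → T2 ctrl (.imp (.var p) τ)
  | arg {σ τ} : T1 ctrl σ → T1 ctrl τ → T2 ctrl (.imp σ τ)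

/-- `T₃₋ ::= X₁ | T₂₋ → T₃₋ | X₀ → T₃₋`. -/
inductive T3 (ctrl : ℕ → Bool) : ITy → Prop
  | var {q} : ctrl q = true → T3 ctrl (.var q)
  | data {p τ} : ctrl p = false → T3 ctrl τ → T3 ctrl (.imp (.var p) τ)
  | arg {σ τ} : T2 ctrl σ → T3 ctrl τ → T3 ctrl (.imp σ τ)

/- Atoms: `pᵢ = 4i`, `p′ᵢ = 4i+1` are data variables; `qᵢ = 4i+2`, `cⱼ = 4j+3`
are control variables. -/
def pA (i : ℕ) : ITy := .var (4 * i)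
def pA' (i : ℕ) : ITy := .var (4 * i + 1)
def qA (i : ℕ) : ITy := .var (4 * i + 2)
def cA (j : ℕ) : ITy := .var (4 * j + 3)

/-- The data/control split: `a` is a control variable iff `a % 4 ∈ {2, 3}`. -/
def ctrl : ℕ → Bool := fun a => decide (2 ≤ a % 4)

/-- `ρ_{jm}`: the atom `p_ℓ` for the positive literal `p_ℓ`, and `p′_ℓ` for the
negative literal `¬p_ℓ` (a literal is a pair (variable index, positivity)). -/
def rho (l : ℕ × Bool) : ITy := if l.2 then pA l.1 else pA' l.1

/-- The value of a literal under a Boolean valuation. -/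
def litVal (v : ℕ → Bool) (l : ℕ × Bool) : Bool := if l.2 then v l.1 else !(v l.1)

/-- `q_{i+1}` for `i < n`, and `c₁` for `i = n`. -/
def nxt (n i : ℕ) : ITy := if i < n then qA (i + 1) else cA 1

/-- The clause axioms: `ρ_{jm} → c_{j+1} → c_j` for `j < k` and `ρ_{km} → c_k`. -/
def clauseAx (lit : ℕ → ℕ → ℕ × Bool) (k j m : ℕ) : ITy :=
  if j < k then .imp (rho (lit j m)) (.imp (cA (j + 1)) (cA j))
  else .imp (rho (lit j m)) (cA j)

/-- The context `Γ` of the reduction: axioms `(pᵢ → q_{i+1}) → qᵢ`,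
`(p′ᵢ → q_{i+1}) → qᵢ` (for `i = 1, …, n-1`), `(pₙ → c₁) → qₙ`, `(p′ₙ → c₁) → qₙ`,
and the clause axioms. -/
def GammaSAT (n k : ℕ) (lit : ℕ → ℕ → ℕ × Bool) : List ITy :=
  ((List.range n).map fun i => ITy.imp (.imp (pA (i + 1)) (nxt n (i + 1))) (qA (i + 1))) ++
  ((List.range n).map fun i => ITy.imp (.imp (pA' (i + 1)) (nxt n (i + 1))) (qA (i + 1))) ++
  ((List.range k).flatMap fun j => (List.range 3).map fun m => clauseAx lit k (j + 1) (m + 1))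

/-! ### Auxiliary lemmas -/

lemma weaken {Γ Γ' : List ITy} {φ : ITy} (h : IDeriv Γ φ)
    (hs : ∀ a ∈ Γ, a ∈ Γ') : IDeriv Γ' φ := by
  induction h generalizing Γ' with
  | ax hm => exact .ax (hs _ hm)
  | @impI Γ0 φ0 ψ0 h ih =>
    exact .impI (ih (by
      intro a ha
      rcases List.mem_cons.mp ha with rfl | ha
      · exact List.mem_cons_self
      · exact List.mem_cons_of_mem _ (hs _ ha)))
  | impE h1 h2 ih1 ih2 => exact .impE (ih1 hs) (ih2 hs)

/-! ### Kripke semantics -/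

section Kripke

variable (k : ℕ) (lit : ℕ → ℕ → ℕ × Bool)

def CVal (w : Set (ℕ × Bool)) (j : ℕ) : Prop :=
  ∀ j', j ≤ j' → j' ≤ k → ∃ m, 1 ≤ m ∧ m ≤ 3 ∧ lit j' m ∈ w

def QVal (w : Set (ℕ × Bool)) (i : ℕ) : Prop :=
  ∃ f : ℕ → Bool, ∀ j', 1 ≤ j' → j' ≤ k →
    ∃ m, 1 ≤ m ∧ m ≤ 3 ∧
      (lit j' m ∈ w ∨ (i ≤ (lit j' m).1 ∧ f (lit j' m).1 = (lit j' m).2))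

def aval (w : Set (ℕ × Bool)) (a : ℕ) : Prop :=
  if a % 4 = 0 then (a / 4, true) ∈ w
  else if a % 4 = 1 then (a / 4, false) ∈ w
  else if a % 4 = 2 then QVal k lit w (a / 4)
  else CVal k lit w (a / 4)

def force : Set (ℕ × Bool) → ITy → Prop
  | w, .var a => aval k lit w a
  | w, .imp σ τ => ∀ w', w ⊆ w' → force w' σ → force w' τ

variable {k lit}

lemma force_var {w a} : force k lit w (.var a) ↔ aval k lit w a := Iff.rfl

lemma force_imp {w σ τ} : force k lit w (.imp σ τ) ↔
    ∀ w', w ⊆ w' → force k lit w' σ → force k lit w' τ := Iff.rfl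

lemma aval_q {w i} : aval k lit w (4 * i + 2) ↔ QVal k lit w i := by
  have h1 : (4 * i + 2) % 4 = 2 := by omega
  have h2 : (4 * i + 2) / 4 = i := by omega
  simp [aval, h1, h2]

lemma aval_c {w j} : aval k lit w (4 * j + 3) ↔ CVal k lit w j := by
  have h1 : (4 * j + 3) % 4 = 3 := by omega
  have h2 : (4 * j + 3) / 4 = j := by omega
  simp [aval, h1, h2]

lemma force_qA {w i} : force k lit w (qA i) ↔ QVal k lit w i := aval_q
lemma force_cA {w j} : force k lit w (cA j) ↔ CVal k lit w j := aval_c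

lemma force_rho {w} {l : ℕ × Bool} : force k lit w (rho l) ↔ l ∈ w := by
  rcases l with ⟨ℓ, b⟩
  have h0 : (4 * ℓ) % 4 = 0 := by omega
  have h0' : (4 * ℓ) / 4 = ℓ := by omega
  have h1 : (4 * ℓ + 1) % 4 = 1 := by omega
  have h1' : (4 * ℓ + 1) / 4 = ℓ := by omega
  cases b <;> simp [rho, pA, pA', force_var, aval, h0, h0', h1, h1']

lemma aval_mono {w w' : Set (ℕ × Bool)} (h : w ⊆ w') {a} :
    aval k lit w a → aval k lit w' a := by
  unfold aval
  split_ifs <;> intro hh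
  · exact h hh
  · exact h hh
  · obtain ⟨f, hf⟩ := hh
    refine ⟨f, fun j' h1 h2 => ?_⟩
    obtain ⟨m, hm1, hm2, hm3⟩ := hf j' h1 h2
    exact ⟨m, hm1, hm2, hm3.imp (fun hx => h hx) id⟩
  · intro j' h1 h2
    obtain ⟨m, hm1, hm2, hm3⟩ := hh j' h1 h2
    exact ⟨m, hm1, hm2, h hm3⟩

lemma force_mono {w w' : Set (ℕ × Bool)} (h : w ⊆ w') :
    ∀ {φ}, force k lit w φ → force k lit w' φ
  | .var _, hf => aval_mono h hf
  | .imp _ _, hf => fun w'' h2 hσ => hf w'' (h.trans h2) hσ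

lemma sound {Γ φ} (h : IDeriv Γ φ) :
    ∀ w, (∀ ψ ∈ Γ, force k lit w ψ) → force k lit w φ := by
  induction h with
  | ax hm => exact fun w hw => hw _ hm
  | impI h ih =>
    intro w hw w' hsub hφ
    exact ih w' (by
      intro ψ hψ
      rcases List.mem_cons.mp hψ with rfl | hψ
      · exact hφ
      · exact force_mono hsub (hw _ hψ))
  | impE h1 h2 ih1 ih2 =>
    intro w hw
    exact ih1 w hw w (fun _ hx => hx) (ih2 w hw)

lemma force_qax (n i : ℕ) (b : Bool) (w : Set (ℕ × Bool)) :
    force k lit w (.imp (.imp (rho (i, b)) (nxt n i)) (qA i)) := by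
  intro w' _ hA
  have hmem : force k lit (insert (i, b) w') (rho (i, b)) :=
    force_rho.mpr (Set.mem_insert _ _)
  have h2 := hA (insert (i, b) w') (Set.subset_insert _ _) hmem
  rw [force_qA]
  by_cases hin : i < n
  · rw [nxt, if_pos hin, force_qA] at h2
    obtain ⟨f, hf⟩ := h2
    refine ⟨fun ℓ => if ℓ = i then b else f ℓ, fun j' h1 h2' => ?_⟩
    obtain ⟨m, hm1, hm2, hm3⟩ := hf j' h1 h2'
    refine ⟨m, hm1, hm2, ?_⟩
    rcases hm3 with h | ⟨hle, hval⟩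
    · rcases Set.mem_insert_iff.mp h with h | h
      · right; rw [h]; simp
      · left; exact h
    · right
      refine ⟨by omega, ?_⟩
      simp only [if_neg (show ¬ (lit j' m).1 = i by omega)]
      exact hval
  · rw [nxt, if_neg hin, force_cA] at h2
    refine ⟨fun ℓ => if ℓ = i then b else true, fun j' h1 h2' => ?_⟩
    obtain ⟨m, hm1, hm2, hm3⟩ := h2 j' (by omega) h2'
    refine ⟨m, hm1, hm2, ?_⟩
    rcases Set.mem_insert_iff.mp hm3 with h | h
    · right; rw [h]; simp
    · left; exact h

lemma force_cax (j m : ℕ) (hj : 1 ≤ j) (hjk : j ≤ k) (hm1 : 1 ≤ m) (hm2 : m ≤ 3)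
    (w : Set (ℕ × Bool)) : force k lit w (clauseAx lit k j m) := by
  by_cases h : j < k
  · rw [clauseAx, if_pos h]
    intro w1 _ hρ w2 hsub hc
    rw [force_cA] at hc ⊢
    intro j' hj1 hj2
    rcases eq_or_lt_of_le hj1 with rfl | hlt
    · exact ⟨m, hm1, hm2, hsub (force_rho.mp hρ)⟩
    · exact hc j' hlt hj2
  · rw [clauseAx, if_neg h]
    intro w1 _ hρ
    rw [force_cA]
    intro j' hj1 hj2
    have : j' = j := by omega
    subst this
    exact ⟨m, hm1, hm2, force_rho.mp hρ⟩

end Kripke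

/-! ### Membership in `GammaSAT` -/

lemma mem_qax {n k : ℕ} {lit : ℕ → ℕ → ℕ × Bool} {i : ℕ} (b : Bool)
    (h1 : 1 ≤ i) (h2 : i ≤ n) :
    ITy.imp (.imp (rho (i, b)) (nxt n i)) (qA i) ∈ GammaSAT n k lit := by
  obtain ⟨t, rfl⟩ : ∃ t, i = t + 1 := ⟨i - 1, by omega⟩
  unfold GammaSAT
  rw [List.mem_append, List.mem_append]
  cases b
  · left; right
    exact List.mem_map.mpr ⟨t, List.mem_range.mpr (by omega), by simp [rho]⟩
  · left; left
    exact List.mem_map.mpr ⟨t, List.mem_range.mpr (by omega), by simp [rho]⟩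

lemma mem_cax {n k : ℕ} {lit : ℕ → ℕ → ℕ × Bool} {j m : ℕ}
    (hj1 : 1 ≤ j) (hj2 : j ≤ k) (hm1 : 1 ≤ m) (hm2 : m ≤ 3) :
    clauseAx lit k j m ∈ GammaSAT n k lit := by
  unfold GammaSAT
  rw [List.mem_append]
  right
  refine List.mem_flatMap.mpr ⟨j - 1, List.mem_range.mpr (by omega), ?_⟩
  refine List.mem_map.mpr ⟨m - 1, List.mem_range.mpr (by omega), ?_⟩
  congr 1 <;> omega

/-! ### Forward direction: a satisfying valuation yields a derivation -/

section Forward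

variable {n k : ℕ} {lit : ℕ → ℕ → ℕ × Bool} {v : ℕ → Bool}

def atomsList (v : ℕ → Bool) (i : ℕ) : List ITy :=
  (List.range i).map fun t => rho (t + 1, v (t + 1))

lemma atomsList_succ (v : ℕ → Bool) (i : ℕ) :
    atomsList v (i + 1) = atomsList v i ++ [rho (i + 1, v (i + 1))] := by
  unfold atomsList
  rw [List.range_succ, List.map_append]
  rfl

lemma rho_litVal {l : ℕ × Bool} (h : litVal v l = true) :
    rho l = rho (l.1, v l.1) := by
  rcases l with ⟨ℓ, b⟩
  cases b <;> simp [litVal] at h <;> simp [rho, h]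

lemma mem_atomsList {ℓ : ℕ} (h1 : 1 ≤ ℓ) (h2 : ℓ ≤ n) :
    rho (ℓ, v ℓ) ∈ atomsList v n := by
  obtain ⟨t, rfl⟩ : ∃ t, ℓ = t + 1 := ⟨ℓ - 1, by omega⟩
  exact List.mem_map.mpr ⟨t, List.mem_range.mpr (by omega), rfl⟩

lemma derive_c
    (hlit : ∀ j m : ℕ, 1 ≤ j → j ≤ k → 1 ≤ m → m ≤ 3 →
      1 ≤ (lit j m).1 ∧ (lit j m).1 ≤ n)
    (hv : ∀ j : ℕ, 1 ≤ j → j ≤ k →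
      ∃ m : ℕ, 1 ≤ m ∧ m ≤ 3 ∧ litVal v (lit j m) = true) :
    ∀ d j, 1 ≤ j → j + d = k →
      IDeriv (atomsList v n ++ GammaSAT n k lit) (cA j) := by
  intro d
  induction d with
  | zero =>
    intro j hj1 hj2
    obtain ⟨m, hm1, hm2, hm3⟩ := hv j hj1 (by omega)
    have hax : clauseAx lit k j m ∈ GammaSAT n k lit := mem_cax hj1 (by omega) hm1 hm2
    rw [clauseAx, if_neg (by omega)] at hax
    refine IDeriv.impE (.ax (List.mem_append_right _ hax)) (.ax ?_)
    apply List.mem_append_left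
    rw [rho_litVal hm3]
    exact mem_atomsList (hlit j m hj1 (by omega) hm1 hm2).1 (hlit j m hj1 (by omega) hm1 hm2).2
  | succ d ih =>
    intro j hj1 hj2
    obtain ⟨m, hm1, hm2, hm3⟩ := hv j hj1 (by omega)
    have hax : clauseAx lit k j m ∈ GammaSAT n k lit := mem_cax hj1 (by omega) hm1 hm2
    rw [clauseAx, if_pos (by omega)] at hax
    refine IDeriv.impE (IDeriv.impE (.ax (List.mem_append_right _ hax)) (.ax ?_))
      (ih (j + 1) (by omega) (by omega))
    apply List.mem_append_left
    rw [rho_litVal hm3]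
    exact mem_atomsList (hlit j m hj1 (by omega) hm1 hm2).1 (hlit j m hj1 (by omega) hm1 hm2).2

lemma derive_q (hk : 1 ≤ k)
    (hlit : ∀ j m : ℕ, 1 ≤ j → j ≤ k → 1 ≤ m → m ≤ 3 →
      1 ≤ (lit j m).1 ∧ (lit j m).1 ≤ n)
    (hv : ∀ j : ℕ, 1 ≤ j → j ≤ k →
      ∃ m : ℕ, 1 ≤ m ∧ m ≤ 3 ∧ litVal v (lit j m) = true) :
    ∀ d i, 1 ≤ i → i + d = n →
      IDeriv (atomsList v (i - 1) ++ GammaSAT n k lit) (qA i) := by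
  intro d
  induction d with
  | zero =>
    intro i hi1 hi2
    have hin : i = n := by omega
    subst hin
    refine IDeriv.impE (.ax (List.mem_append_right _ (mem_qax (v i) hi1 le_rfl))) ?_
    refine IDeriv.impI ?_
    have hc : IDeriv (atomsList v i ++ GammaSAT i k lit) (cA 1) :=
      derive_c hlit hv (k - 1) 1 le_rfl (by omega)
    rw [nxt, if_neg (lt_irrefl i)]
    refine weaken hc ?_
    intro a ha
    rcases List.mem_append.mp ha with ha | ha
    · obtain ⟨t, rfl⟩ : ∃ t, i = t + 1 := ⟨i - 1, by omega⟩
      rw [atomsList_succ] at ha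
      rcases List.mem_append.mp ha with ha | ha
      · exact List.mem_cons_of_mem _ (List.mem_append_left _ (by simpa using ha))
      · simp only [List.mem_singleton] at ha
        subst ha
        exact List.mem_cons_self
    · exact List.mem_cons_of_mem _ (List.mem_append_right _ ha)
  | succ d ih =>
    intro i hi1 hi2
    refine IDeriv.impE (.ax (List.mem_append_right _ (mem_qax (v i) hi1 (by omega)))) ?_
    refine IDeriv.impI ?_
    rw [nxt, if_pos (by omega)]
    have hq : IDeriv (atomsList v ((i + 1) - 1) ++ GammaSAT n k lit) (qA (i + 1)) :=
      ih (i + 1) (by omega) (by omega)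
    simp only [Nat.add_sub_cancel] at hq
    refine weaken hq ?_
    intro a ha
    rcases List.mem_append.mp ha with ha | ha
    · obtain ⟨t, rfl⟩ : ∃ t, i = t + 1 := ⟨i - 1, by omega⟩
      rw [atomsList_succ] at ha
      rcases List.mem_append.mp ha with ha | ha
      · exact List.mem_cons_of_mem _ (List.mem_append_left _ (by simpa using ha))
      · simp only [List.mem_singleton] at ha
        subst ha
        exact List.mem_cons_self
    · exact List.mem_cons_of_mem _ (List.mem_append_right _ ha)

end Forward

/-! ### The `T₃₋` shape -/

lemma ctrl_p (i : ℕ) : ctrl (4 * i) = false := by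
  have h : 4 * i % 4 = 0 := by omega
  simp [ctrl, h]
lemma ctrl_p' (i : ℕ) : ctrl (4 * i + 1) = false := by
  have h : (4 * i + 1) % 4 = 1 := by omega
  simp [ctrl, h]
lemma ctrl_q (i : ℕ) : ctrl (4 * i + 2) = true := by
  have h : (4 * i + 2) % 4 = 2 := by omega
  simp [ctrl, h]
lemma ctrl_c (j : ℕ) : ctrl (4 * j + 3) = true := by
  have h : (4 * j + 3) % 4 = 3 := by omega
  simp [ctrl, h]

lemma T1_nxt (n i : ℕ) : T1 ctrl (nxt n i) := by
  unfold nxt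
  split
  · exact .var (ctrl_q _)
  · exact .var (ctrl_c _)

lemma rho_cases (l : ℕ × Bool) : ∃ a, rho l = .var a ∧ ctrl a = false := by
  rcases l with ⟨ℓ, b⟩
  cases b
  · exact ⟨4 * ℓ + 1, rfl, ctrl_p' ℓ⟩
  · exact ⟨4 * ℓ, rfl, ctrl_p ℓ⟩

lemma T3_impList {Γ : List ITy} {τ : ITy} (hΓ : ∀ σ ∈ Γ, T2 ctrl σ)
    (hτ : T3 ctrl τ) : T3 ctrl (impList Γ τ) := by
  induction Γ with
  | nil => exact hτ
  | cons σ Γ ih =>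
    exact .arg (hΓ σ (List.mem_cons_self))
      (ih fun σ' hσ' => hΓ σ' (List.mem_cons_of_mem _ hσ'))

lemma T2_Gamma {n k : ℕ} {lit : ℕ → ℕ → ℕ × Bool} :
    ∀ σ ∈ GammaSAT n k lit, T2 ctrl σ := by
  intro σ hσ
  unfold GammaSAT at hσ
  rcases List.mem_append.mp hσ with hσ | hσ
  · rcases List.mem_append.mp hσ with hσ | hσ
    · obtain ⟨t, _, rfl⟩ := List.mem_map.mp hσ
      exact .arg (.imp (ctrl_p _) (T1_nxt _ _)) (.var (ctrl_q _))
    · obtain ⟨t, _, rfl⟩ := List.mem_map.mp hσ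
      exact .arg (.imp (ctrl_p' _) (T1_nxt _ _)) (.var (ctrl_q _))
  · obtain ⟨t, _, hσ⟩ := List.mem_flatMap.mp hσ
    obtain ⟨s, _, rfl⟩ := List.mem_map.mp hσ
    obtain ⟨a, ha, hca⟩ := rho_cases (lit (t + 1) (s + 1))
    unfold clauseAx
    rw [ha]
    split
    · exact .data hca (.arg (.var (ctrl_c _)) (.var (ctrl_c _)))
    · exact .data hca (.var (ctrl_c _))

/-- a 3-CNF formula `Ψ` (with clauses `lit j 1 ∨ lit j 2 ∨ lit j 3`
for `j = 1, …, k`, over the variables `p₁, …, pₙ`) is classically satisfiable iff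
`Γ ⊢ q₁` is derivable in IIPC; moreover the formula `Γ → q₁` belongs to `T₃₋`. -/
theorem threecnf_sat_iff_T3_provable (n k : ℕ) (hn : 1 ≤ n) (hk : 1 ≤ k)
    (lit : ℕ → ℕ → ℕ × Bool)
    (hlit : ∀ j m : ℕ, 1 ≤ j → j ≤ k → 1 ≤ m → m ≤ 3 →
      1 ≤ (lit j m).1 ∧ (lit j m).1 ≤ n) :
    ((∃ v : ℕ → Bool, ∀ j : ℕ, 1 ≤ j → j ≤ k →
        ∃ m : ℕ, 1 ≤ m ∧ m ≤ 3 ∧ litVal v (lit j m) = true) ↔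
      IDeriv (GammaSAT n k lit) (qA 1)) ∧
    T3 ctrl (impList (GammaSAT n k lit) (qA 1)) := by
  constructor
  · constructor
    · rintro ⟨v, hv⟩
      have h := derive_q hk hlit hv (n - 1) 1 le_rfl (by omega)
      simpa [atomsList] using h
    · intro h
      have hax : ∀ ψ ∈ GammaSAT n k lit, force k lit ∅ ψ := ?_
      · have hforce := sound h ∅ hax
        rw [force_qA] at hforce
        obtain ⟨f, hf⟩ := hforce
        refine ⟨f, fun j hj1 hj2 => ?_⟩
        obtain ⟨m, hm1, hm2, hm3⟩ := hf j hj1 hj2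
        refine ⟨m, hm1, hm2, ?_⟩
        rcases hm3 with hm3 | ⟨_, hval⟩
        · exact absurd hm3 (Set.notMem_empty _)
        · unfold litVal
          cases hb : (lit j m).2 <;> rw [hb] at hval <;> simp [hval]
      · intro ψ hψ
        unfold GammaSAT at hψ
        rcases List.mem_append.mp hψ with hψ | hψ
        · rcases List.mem_append.mp hψ with hψ | hψ
          · obtain ⟨t, _, rfl⟩ := List.mem_map.mp hψ
            have : pA (t + 1) = rho (t + 1, true) := by simp [rho]
            rw [this]
            exact force_qax n (t + 1) true ∅
          · obtain ⟨t, _, rfl⟩ := List.mem_map.mp hψ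
            have : pA' (t + 1) = rho (t + 1, false) := by simp [rho]
            rw [this]
            exact force_qax n (t + 1) false ∅
        · obtain ⟨t, ht, hψ⟩ := List.mem_flatMap.mp hψ
          obtain ⟨s, hs, rfl⟩ := List.mem_map.mp hψ
          rw [List.mem_range] at ht hs
          exact force_cax (t + 1) (s + 1) (by omega) (by omega) (by omega) (by omega) ∅
  · exact T3_impList T2_Gamma (.var (ctrl_q 1))


end IPCStmt17
end

section
/- Linear size model property for order-two-plus formulas: let φ = ξ₁→⋯→ξ_n→l where l and all the ξᵢ = l¹ᵢ→⋯→l^{nᵢ}ᵢ→lᵢ are built from literals (so φ has order at most two when literals are counted as atoms). If φ is not intuitionistically provable, then there is a finite Kripke model C of depth at most 2 and of cardinality at most n+1 (hence not exceeding the length of φ) with a state c₀ such that c₀ does not force φ. -/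
set_option autoImplicit true

namespace IPCStmt18

/-- Formulas of the `→, ⊥` fragment of IPC (`¬p` abbreviates `p → ⊥`). -/
inductive PForm : Type
  | var : ℕ → PForm
  | bot : PForm
  | imp : PForm → PForm → PForm
  deriving DecidableEq

/-- Intuitionistic natural deduction for this fragment. -/
inductive Deriv : Set PForm → PForm → Prop
  | ax {Γ φ} : φ ∈ Γ → Deriv Γ φ
  | impI {Γ φ ψ} : Deriv (insert φ Γ) ψ → Deriv Γ (.imp φ ψ)
  | impE {Γ φ ψ} : Deriv Γ (.imp φ ψ) → Deriv Γ φ → Deriv Γ ψ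
  | botE {Γ φ} : Deriv Γ .bot → Deriv Γ φ

/-- Kripke forcing over a set of states `W` with accessibility `le` and
valuation `val`. -/
def Forces {W : Type} (le : W → W → Prop) (val : W → ℕ → Prop) : W → PForm → Prop
  | w, .var p => val w p
  | _, .bot => False
  | w, .imp φ ψ => ∀ w' : W, le w w' → Forces le val w' φ → Forces le val w' ψ

/-- A literal is a pair (variable, positivity); `litF` is the corresponding formula. -/
def litF (l : ℕ × Bool) : PForm := if l.2 then .var l.1 else .imp (.var l.1) .bot

def impP : List PForm → PForm → PForm
  | [], τ => τ
  | σ :: σs, τ => .imp σ (impP σs τ)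

/-- `ξᵢ = l¹ᵢ → ⋯ → l^{nᵢ}ᵢ → lᵢ`, an implication between literals. -/
def clauseF (ξ : List (ℕ × Bool) × (ℕ × Bool)) : PForm := impP (ξ.1.map litF) (litF ξ.2)

/-- `φ = ξ₁ → ⋯ → ξₙ → l`, an order-two-plus formula built from literals. -/
def phiOf (ξs : List (List (ℕ × Bool) × (ℕ × Bool))) (l : ℕ × Bool) : PForm :=
  impP (ξs.map clauseF) (litF l)

theorem Deriv.weaken {Γ Γ' : Set PForm} {φ} (h : Deriv Γ φ) (hs : Γ ⊆ Γ') : Deriv Γ' φ := by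
  induction h generalizing Γ' with
  | ax hm => exact .ax (hs hm)
  | impI _ ih => exact .impI (ih (Set.insert_subset_insert hs))
  | impE _ _ ih1 ih2 => exact .impE (ih1 hs) (ih2 hs)
  | botE _ ih => exact .botE (ih hs)

def Con (T : Set PForm) : Prop := ¬ Deriv T .bot

theorem deriv_impP_intro {L : List PForm} {Γ : Set PForm} {τ}
    (h : Deriv ({ψ | ψ ∈ L} ∪ Γ) τ) : Deriv Γ (impP L τ) := by
  induction L generalizing Γ with
  | nil => exact h.weaken (by simp)
  | cons σ L ih =>
      exact .impI (ih (h.weaken (by intro x hx; simp at hx ⊢; tauto)))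

theorem deriv_impP_elim {L : List PForm} {Γ : Set PForm} {τ}
    (h : Deriv Γ (impP L τ)) (hall : ∀ σ ∈ L, Deriv Γ σ) : Deriv Γ τ := by
  induction L with
  | nil => exact h
  | cons σ L ih => exact ih (h.impE (hall σ (by simp))) (fun τ hτ => hall _ (by simp [hτ]))

open Classical in
noncomputable def ext1 (Γ : Set PForm) (q : ℕ) : Set PForm :=
  if Con (insert (.var q) Γ) then insert (.var q) Γ else insert (.imp (.var q) .bot) Γ

noncomputable def extAll (Γ : Set PForm) : List ℕ → Set PForm
  | [] => Γ
  | q :: qs => extAll (ext1 Γ q) qs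

theorem subset_ext1 (Γ : Set PForm) (q : ℕ) : Γ ⊆ ext1 Γ q := by
  unfold ext1; split <;> exact Set.subset_insert _ _

theorem con_ext1 {Γ : Set PForm} (q : ℕ) (h : Con Γ) : Con (ext1 Γ q) := by
  unfold ext1; split
  · assumption
  · rename_i hni
    intro hb
    have h1 : Deriv Γ (.imp (.var q) .bot) := .impI (by_contra fun hc => hni hc)
    have h2 : Deriv Γ (.imp (.imp (.var q) .bot) .bot) := .impI hb
    exact h (h2.impE h1)

theorem mem_ext1 (Γ : Set PForm) (q : ℕ) :
    (PForm.var q) ∈ ext1 Γ q ∨ (PForm.imp (.var q) .bot) ∈ ext1 Γ q := by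
  unfold ext1; split
  · exact Or.inl (Set.mem_insert _ _)
  · exact Or.inr (Set.mem_insert _ _)

theorem subset_extAll (Γ : Set PForm) (L : List ℕ) : Γ ⊆ extAll Γ L := by
  induction L generalizing Γ with
  | nil => exact le_refl _
  | cons q L ih => exact (subset_ext1 Γ q).trans (ih _)

theorem con_extAll {Γ : Set PForm} (L : List ℕ) (h : Con Γ) : Con (extAll Γ L) := by
  induction L generalizing Γ with
  | nil => exact h
  | cons q L ih => exact ih (con_ext1 q h)

theorem complete_extAll {Γ : Set PForm} {L : List ℕ} {q : ℕ} (hq : q ∈ L) :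
    Deriv (extAll Γ L) (.var q) ∨ Deriv (extAll Γ L) (.imp (.var q) .bot) := by
  induction L generalizing Γ with
  | nil => simp at hq
  | cons r L ih =>
      rcases List.mem_cons.mp hq with h | h
      · subst h
        rcases mem_ext1 Γ q with hm | hm
        · exact Or.inl (.ax (subset_extAll (ext1 Γ q) L hm))
        · exact Or.inr (.ax (subset_extAll (ext1 Γ q) L hm))
      · exact ih h

-- Forcing lemmas
theorem Forces.mono {W : Type} {le : W → W → Prop} {val : W → ℕ → Prop}
    (htrans : ∀ a b c, le a b → le b c → le a c)
    (hval : ∀ a b p, le a b → val a p → val b p)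
    {φ w w'} (h : Forces le val w φ) (hw : le w w') : Forces le val w' φ := by
  induction φ generalizing w w' with
  | var p => exact hval _ _ _ hw h
  | bot => exact h
  | imp φ ψ ih1 ih2 =>
      intro w'' h2 hφ
      exact h w'' (htrans _ _ _ hw h2) hφ

theorem forces_impP_intro {W : Type} {le : W → W → Prop} {val : W → ℕ → Prop}
    (hrefl : ∀ w, le w w) (htrans : ∀ a b c, le a b → le b c → le a c)
    (hval : ∀ a b p, le a b → val a p → val b p)
    {L : List PForm} {C : PForm} {w : W}
    (h : ∀ w', le w w' → (∀ σ ∈ L, Forces le val w' σ) → Forces le val w' C) :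
    Forces le val w (impP L C) := by
  induction L generalizing w with
  | nil => exact h w (hrefl w) (by simp)
  | cons σ L ih =>
      intro w' hw hσ
      refine ih (fun w'' hw'' hall => h w'' (htrans _ _ _ hw hw'') ?_)
      intro τ hτ
      rcases List.mem_cons.mp hτ with rfl | hm
      · exact hσ.mono htrans hval hw''
      · exact hall τ hm

theorem forces_impP_elim {W : Type} {le : W → W → Prop} {val : W → ℕ → Prop}
    (hrefl : ∀ w, le w w) {L : List PForm} {C : PForm} {w : W}
    (h : Forces le val w (impP L C)) (hall : ∀ σ ∈ L, Forces le val w σ) :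
    Forces le val w C := by
  induction L with
  | nil => exact h
  | cons σ L ih => exact ih (h w (hrefl w) (hall σ (by simp))) (fun τ hτ => hall τ (by simp [hτ]))

-- literal lemmas at terminal worlds
theorem forces_litF_of_deriv {W : Type} {le : W → W → Prop} {val : W → ℕ → Prop}
    {w : W} {T : Set PForm}
    (hterm : ∀ w', le w w' → w' = w)
    (hvalT : ∀ q, val w q ↔ Deriv T (.var q)) (hcon : Con T)
    {m : ℕ × Bool} (h : Deriv T (litF m)) : Forces le val w (litF m) := by
  rcases m with ⟨q, b⟩
  cases b
  · simp only [litF, if_neg] at h ⊢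
    intro w' hw hq
    cases hterm w' hw
    exact hcon (h.impE ((hvalT q).mp hq))
  · simpa only [litF, if_pos, Forces, hvalT] using h

theorem deriv_of_forces_litF {W : Type} {le : W → W → Prop} {val : W → ℕ → Prop}
    {w : W} {T : Set PForm} (hrefl : le w w)
    (hvalT : ∀ q, val w q ↔ Deriv T (.var q))
    {m : ℕ × Bool}
    (hcomp : Deriv T (.var m.1) ∨ Deriv T (.imp (.var m.1) .bot))
    (h : Forces le val w (litF m)) : Deriv T (litF m) := by
  rcases m with ⟨q, b⟩
  cases b
  · simp only [litF, if_neg]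
    rcases hcomp with hd | hd
    · exact absurd (h w hrefl ((hvalT q).mpr hd)) id
    · exact hd
  · simpa only [litF, if_pos, Forces, hvalT] using h

/-- linear size model property for order-two-plus formulas:
if `φ = ξ₁ → ⋯ → ξₙ → l` is not intuitionistically provable, then there is a finite
Kripke model (a partial order with monotone valuation) of depth at most 2 and of
cardinality at most `n + 1` with a state not forcing `φ`. -/
theorem linear_size_model_property (ξs : List (List (ℕ × Bool) × (ℕ × Bool)))
    (l : ℕ × Bool) (h : ¬ Deriv (∅ : Set PForm) (phiOf ξs l)) :
    ∃ (W : Type) (_ : Fintype W) (le : W → W → Prop) (val : W → ℕ → Prop),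
      (∀ w : W, le w w) ∧
      (∀ a b c : W, le a b → le b c → le a c) ∧
      (∀ a b : W, le a b → le b a → a = b) ∧
      (∀ (a b : W) (p : ℕ), le a b → val a p → val b p) ∧
      Fintype.card W ≤ ξs.length + 1 ∧
      (∀ a b c : W, le a b → le b c → a = b ∨ b = c) ∧
      ∃ c₀ : W, ¬ Forces le val c₀ (phiOf ξs l) := by
  classical
  obtain ⟨p, b⟩ := l
  set Γ : Set PForm := {ψ | ψ ∈ ξs.map clauseF} with hΓdef
  have hGamL : ¬ Deriv Γ (litF (p, b)) := by
    intro hd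
    exact h (deriv_impP_intro (hd.weaken Set.subset_union_left))
  have hmemΓ : ∀ ξ ∈ ξs, clauseF ξ ∈ Γ := fun ξ hξ => List.mem_map_of_mem hξ
  set V : List ℕ := ((ξs.map Prod.fst).flatten).map Prod.fst with hVdef
  have hV : ∀ ξ ∈ ξs, ∀ m ∈ ξ.1, m.1 ∈ V := by
    intro ξ hξ m hm
    have h1 : ξ.1 ∈ ξs.map Prod.fst := List.mem_map_of_mem hξ
    have h2 : m ∈ (ξs.map Prod.fst).flatten := List.mem_flatten.mpr ⟨ξ.1, h1, hm⟩
    exact List.mem_map_of_mem h2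
  cases b with
  | false =>
    have hlitf : litF (p, false) = .imp (.var p) .bot := by simp [litF]
    have hcon0 : Con (insert (.var p) Γ) := by
      intro hb
      exact hGamL (by rw [hlitf]; exact .impI hb)
    have hconT : Con (extAll (insert (.var p) Γ) V) := con_extAll V hcon0
    have hsubT : insert (.var p) Γ ⊆ extAll (insert (.var p) Γ) V := subset_extAll _ _
    refine ⟨PUnit, inferInstance, fun _ _ => True,
      fun _ q => Deriv (extAll (insert (.var p) Γ) V) (.var q),
      fun _ => trivial, fun _ _ _ _ _ => trivial,
      fun a b _ _ => Subsingleton.elim a b,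
      fun _ _ _ _ hv => hv,
      by simpa using Nat.succ_le_succ (Nat.zero_le ξs.length),
      fun a b _ _ _ => Or.inl (Subsingleton.elim a b),
      PUnit.unit, ?_⟩
    intro hf
    have hcls : ∀ σ ∈ ξs.map clauseF,
        Forces (fun (_ _ : PUnit) => True)
          (fun _ q => Deriv (extAll (insert (.var p) Γ) V) (.var q)) PUnit.unit σ := by
      intro σ hσ
      obtain ⟨ξ, hξ, rfl⟩ := List.mem_map.mp hσ
      show Forces _ _ _ (impP (ξ.1.map litF) (litF ξ.2))
      refine forces_impP_intro (fun _ => trivial) (fun _ _ _ _ _ => trivial)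
        (fun _ _ _ _ hv => hv) ?_
      intro w' _ hprem
      have hder : ∀ σ' ∈ ξ.1.map litF, Deriv (extAll (insert (.var p) Γ) V) σ' := by
        intro σ' hσ'
        obtain ⟨m, hm, rfl⟩ := List.mem_map.mp hσ'
        exact deriv_of_forces_litF trivial (fun _ => Iff.rfl)
          (complete_extAll (hV ξ hξ m hm)) (hprem _ (List.mem_map_of_mem hm))
      have hdc : Deriv (extAll (insert (.var p) Γ) V) (litF ξ.2) :=
        deriv_impP_elim (Deriv.ax (hsubT (Set.subset_insert _ _ (hmemΓ ξ hξ)))) hder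
      exact forces_litF_of_deriv (fun w'' _ => Subsingleton.elim _ _) (fun _ => Iff.rfl) hconT hdc
    have hfl := forces_impP_elim (fun _ => trivial) hf hcls
    rw [hlitf] at hfl
    exact hfl PUnit.unit trivial (Deriv.ax (hsubT (Set.mem_insert _ _)))
  | true =>
    have hlitt : litF (p, true) = .var p := by simp [litF]
    have hΓp : ¬ Deriv Γ (.var p) := by
      intro hd; exact hGamL (by rw [hlitt]; exact hd)
    have hconΓ : Con Γ := fun hb => hΓp hb.botE
    have hchoice : ∀ i : Fin ξs.length, ∃ T : Set PForm,
        Γ ⊆ T ∧ Con T ∧ (∀ q ∈ V, Deriv T (.var q) ∨ Deriv T (.imp (.var q) .bot)) ∧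
        ((∃ m ∈ (ξs.get i).1, m.2 = false ∧ Con (insert (.var m.1) Γ)) →
          ∃ m ∈ (ξs.get i).1, m.2 = false ∧ (PForm.var m.1) ∈ T) := by
      intro i
      by_cases hx : ∃ m ∈ (ξs.get i).1, m.2 = false ∧ Con (insert (.var m.1) Γ)
      · obtain ⟨m, hm, hmf, hmc⟩ := hx
        exact ⟨extAll (insert (.var m.1) Γ) V,
          (Set.subset_insert _ _).trans (subset_extAll _ _),
          con_extAll V hmc,
          fun q hq => complete_extAll hq,
          fun _ => ⟨m, hm, hmf, subset_extAll _ _ (Set.mem_insert _ _)⟩⟩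
      · exact ⟨extAll Γ V, subset_extAll _ _, con_extAll V hconΓ,
          fun q hq => complete_extAll hq, fun hc => absurd hc hx⟩
    choose Tt hTsub hTcon hTcomp hTwit using hchoice
    let le' : Option (Fin ξs.length) → Option (Fin ξs.length) → Prop :=
      fun a b => a = b ∨ a = none
    let val' : Option (Fin ξs.length) → ℕ → Prop :=
      fun w q => Deriv (w.elim Γ Tt) (.var q)
    have hrefl' : ∀ w, le' w w := fun w => Or.inl rfl
    have htrans' : ∀ a b c, le' a b → le' b c → le' a c := by
      rintro a b c (rfl | rfl) h2
      · exact h2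
      · exact Or.inr rfl
    have hvmono : ∀ a b q, le' a b → val' a q → val' b q := by
      rintro a b q (rfl | rfl) hv
      · exact hv
      · cases b with
        | none => exact hv
        | some j => exact Deriv.weaken hv (hTsub j)
    refine ⟨Option (Fin ξs.length), inferInstance, le', val', hrefl', htrans', ?_,
      hvmono, by simp, ?_, none, ?_⟩
    · rintro a b (rfl | rfl) h2
      · rfl
      · rcases h2 with rfl | rfl <;> rfl
    · rintro a b c (rfl | rfl) h2
      · exact Or.inl rfl
      · rcases h2 with rfl | rfl
        · exact Or.inr rfl
        · exact Or.inl rfl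
    intro hf
    have hterm : ∀ (j : Fin ξs.length) (w' : Option (Fin ξs.length)),
        le' (some j) w' → w' = some j := by
      rintro j w' (rfl | hh)
      · rfl
      · exact absurd hh (by simp)
    have hcls : ∀ ξ ∈ ξs, Forces le' val' none (clauseF ξ) := by
      intro ξ hξ
      obtain ⟨i, rfl⟩ := List.mem_iff_get.mp hξ
      show Forces le' val' none (impP ((ξs.get i).1.map litF) (litF (ξs.get i).2))
      refine forces_impP_intro hrefl' htrans' hvmono ?_
      rintro (_ | j) hw hprem
      · -- root
        have hder : ∀ m ∈ (ξs.get i).1, Deriv Γ (litF m) := by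
          intro m hm
          have hfm : Forces le' val' none (litF m) := hprem _ (List.mem_map_of_mem hm)
          rcases m with ⟨q, mb⟩
          cases mb
          · have hlq : litF (q, false) = .imp (.var q) .bot := by simp [litF]
            rw [hlq] at hfm ⊢
            by_contra hnd
            have hcq : Con (insert (.var q) Γ) := fun hb => hnd (.impI hb)
            have hex : ∃ m' ∈ (ξs.get i).1, m'.2 = false ∧ Con (insert (.var m'.1) Γ) :=
              ⟨(q, false), hm, rfl, hcq⟩
            obtain ⟨m₀, hm₀, hm₀f, hm₀T⟩ := hTwit i hex
            have hfm₀ : Forces le' val' none (litF m₀) := hprem _ (List.mem_map_of_mem hm₀)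
            have hl₀ : litF m₀ = .imp (.var m₀.1) .bot := by simp [litF, hm₀f]
            rw [hl₀] at hfm₀
            exact hfm₀ (some i) (Or.inr rfl) (Deriv.ax hm₀T)
          · have hlq : litF (q, true) = .var q := by simp [litF]
            rw [hlq] at hfm ⊢
            exact hfm
        have hdc : Deriv Γ (litF (ξs.get i).2) := by
          refine deriv_impP_elim (L := (ξs.get i).1.map litF)
            (Deriv.ax (hmemΓ _ (ξs.get_mem i))) ?_
          intro σ hσ
          obtain ⟨m, hm, rfl⟩ := List.mem_map.mp hσ
          exact hder m hm
        rcases hc : (ξs.get i).2 with ⟨r, rb⟩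
        rw [hc] at hdc
        cases rb
        · have heq : litF (r, false) = .imp (.var r) .bot := by simp [litF]
          rw [heq] at hdc ⊢
          rintro (_ | j) hw' hq
          · exact absurd (hdc.impE hq) hconΓ
          · exact absurd ((hdc.weaken (hTsub j)).impE hq) (hTcon j)
        · have heq : litF (r, true) = .var r := by simp [litF]
          rw [heq] at hdc ⊢
          exact hdc
      · -- top world j
        have hder : ∀ σ ∈ (ξs.get i).1.map litF, Deriv (Tt j) σ := by
          intro σ hσ
          obtain ⟨m, hm, rfl⟩ := List.mem_map.mp hσ
          exact deriv_of_forces_litF (le := le') (val := val') (T := Tt j)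
            (hrefl' (some j)) (fun _ => Iff.rfl)
            (hTcomp j m.1 (hV _ (ξs.get_mem i) m hm))
            (hprem _ (List.mem_map_of_mem hm))
        have hdc : Deriv (Tt j) (litF (ξs.get i).2) :=
          deriv_impP_elim (Deriv.ax (hTsub j (hmemΓ _ (ξs.get_mem i)))) hder
        exact forces_litF_of_deriv (le := le') (val := val') (T := Tt j)
          (hterm j) (fun _ => Iff.rfl) (hTcon j) hdc
    have hfl := forces_impP_elim hrefl' hf (by
      intro σ hσ
      obtain ⟨ξ, hξ, rfl⟩ := List.mem_map.mp hσ
      exact hcls ξ hξ)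
    rw [hlitt] at hfl
    exact hΓp hfl


end IPCStmt18
end
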